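/- arXiv:2406.13630 — 12 statements merged into one kernel-verified Lean document; each statement's English description precedes it below -/
import Mathlib

section
/- Let L be the free Lie algebra over ℚ on two generators x₀, x₁. There exists a unique ℚ-linear map d : L → Der(L) into the Lie-algebra derivations of L such that for every f ∈ L the derivation d_f = d(f) satisfies d_f(x₀) = 0 and d_f(x₁) = [x₁, f]. Moreover, for all f, g ∈ L one has d_{d_f(g) − d_g(f) + [f,g]} = d_f ∘ d_g − d_g ∘ d_f (equality of derivations); equivalently, the bilinear product f ▷ g := d_f(g) makes (L, [−,−], ▷) a post-Lie algebra. -/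
open FreeLieAlgebra

namespace FreeLiePostLieAux
variable {R L : Type*} [CommRing R] [LieRing L] [LieAlgebra R L]

def tB (x y : L × L) : L × L := (⁅x.1, y.1⁆, ⁅x.1, y.2⁆ + ⁅x.2, y.1⁆)

lemma tB_add_lie (x y z : L × L) : tB (x + y) z = tB x z + tB y z := by
  simp only [tB, Prod.fst_add, Prod.snd_add, add_lie, Prod.mk_add_mk, Prod.mk.injEq]
  exact ⟨trivial, by abel⟩

lemma tB_lie_add (x y z : L × L) : tB x (y + z) = tB x y + tB x z := by
  simp only [tB, Prod.fst_add, Prod.snd_add, lie_add, Prod.mk_add_mk, Prod.mk.injEq]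
  exact ⟨trivial, by abel⟩

lemma tB_self (x : L × L) : tB x x = 0 := by
  have h : ⁅x.1, x.2⁆ + ⁅x.2, x.1⁆ = 0 := by rw [← lie_skew x.1 x.2]; abel
  simp [tB, h]

lemma tB_leibniz (x y z : L × L) : tB x (tB y z) = tB (tB x y) z + tB y (tB x z) := by
  simp only [tB, lie_add, add_lie, Prod.mk_add_mk, Prod.mk.injEq]
  rw [leibniz_lie x.1 y.1 z.1, leibniz_lie x.1 y.1 z.2, leibniz_lie x.1 y.2 z.1,
    leibniz_lie x.2 y.1 z.1]
  constructor <;> abel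

lemma tB_smul (t : R) (x y : L × L) : tB x (t • y) = t • tB x y := by
  simp [tB, Prod.smul_def, smul_add]

instance : LieRing (L × L) :=
  { (inferInstance : AddCommGroup (L × L)) with
    bracket := tB
    add_lie := tB_add_lie
    lie_add := tB_lie_add
    lie_self := tB_self
    leibniz_lie := tB_leibniz }

instance : LieAlgebra R (L × L) := ⟨fun t x y => tB_smul t x y⟩

lemma tB_def (x y : L × L) : ⁅x, y⁆ = (⁅x.1, y.1⁆, ⁅x.1, y.2⁆ + ⁅x.2, y.1⁆) := rfl

variable (R) in
/-- First projection as a Lie algebra hom. -/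
def fstHom : (L × L) →ₗ⁅R⁆ L :=
  { LinearMap.fst R L L with map_lie' := by intro x y; rfl }

@[simp] lemma fstHom_apply (x : L × L) : fstHom R x = x.1 := rfl

/-- A Lie derivation as a Lie hom into the dual-number Lie algebra. -/
def derivHom (D : LieDerivation R L L) : L →ₗ⁅R⁆ L × L :=
  { LinearMap.prod LinearMap.id D.toLinearMap with
    map_lie' := by
      intro a b
      refine Prod.ext rfl ?_
      show D ⁅a, b⁆ = ⁅a, D b⁆ + ⁅D a, b⁆
      rw [D.apply_lie_eq_sub, ← lie_skew b (D a)]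
      abel }

@[simp] lemma derivHom_apply (D : LieDerivation R L L) (a : L) :
    derivHom D a = (a, D a) := rfl

end FreeLiePostLieAux

open FreeLiePostLieAux

section Main

abbrev FL := FreeLieAlgebra ℚ (Fin 2)

/-- Derivations of the free Lie algebra agreeing on the generators are equal. -/
lemma deriv_ext (D₁ D₂ : LieDerivation ℚ FL FL)
    (h0 : D₁ (of ℚ (0 : Fin 2)) = D₂ (of ℚ (0 : Fin 2)))
    (h1 : D₁ (of ℚ (1 : Fin 2)) = D₂ (of ℚ (1 : Fin 2))) : D₁ = D₂ := by
  have H : derivHom D₁ = derivHom D₂ := by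
    apply FreeLieAlgebra.hom_ext
    intro i
    fin_cases i
    · exact congrArg (fun z => (of ℚ (0 : Fin 2), z)) h0
    · exact congrArg (fun z => (of ℚ (1 : Fin 2), z)) h1
  ext a
  have := congrArg (fun F : FL →ₗ⁅ℚ⁆ FL × FL => (F a).2) H
  simpa using this

/-- The Lie hom into the dual-number algebra with prescribed generator values. -/
noncomputable def phi (f : FL) : FL →ₗ⁅ℚ⁆ FL × FL :=
  FreeLieAlgebra.lift ℚ ![(of ℚ (0 : Fin 2), 0), (of ℚ (1 : Fin 2), ⁅of ℚ (1 : Fin 2), f⁆)]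

lemma phi_fst (f : FL) (x : FL) : (phi f x).1 = x := by
  have H : (fstHom ℚ).comp (phi f) = LieHom.id := by
    apply FreeLieAlgebra.hom_ext
    intro i
    fin_cases i <;> simp [phi]
  exact congrArg (fun F : FL →ₗ⁅ℚ⁆ FL => F x) H

/-- The derivation `d_f`. -/
noncomputable def Dgen (f : FL) : LieDerivation ℚ FL FL :=
  { (LinearMap.snd ℚ FL FL).comp (phi f).toLinearMap with
    leibniz' := by
      intro a b
      have h := (phi f).map_lie a b
      show (phi f ⁅a, b⁆).2 = ⁅a, (phi f b).2⁆ - ⁅b, (phi f a).2⁆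
      rw [h, tB_def, ← lie_skew b (phi f a).2, phi_fst, phi_fst]
      abel }

lemma Dgen_apply (f x : FL) : Dgen f x = (phi f x).2 := rfl

lemma Dgen_of0 (f : FL) : Dgen f (of ℚ (0 : Fin 2)) = 0 := by
  rw [Dgen_apply]; simp [phi]

lemma Dgen_of1 (f : FL) : Dgen f (of ℚ (1 : Fin 2)) = ⁅of ℚ (1 : Fin 2), f⁆ := by
  rw [Dgen_apply]; simp [phi]

end Main

/-- The linear map `f ↦ d_f`. -/
noncomputable def dmap : FL →ₗ[ℚ] LieDerivation ℚ FL FL where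
  toFun := Dgen
  map_add' f g := by
    apply deriv_ext
    · simp [Dgen_of0]
    · simp [Dgen_of1, lie_add]
  map_smul' t f := by
    apply deriv_ext
    · simp [Dgen_of0]
    · simp [Dgen_of1, lie_smul]


/-- On the free Lie algebra `L` over `ℚ` on two generators `x₀, x₁`, there is a
unique `ℚ`-linear map `d : L → Der(L)` with `d_f(x₀) = 0` and `d_f(x₁) = [x₁, f]` for all `f`,
and any such map satisfies `d_{d_f(g) − d_g(f) + [f,g]} = [d_f, d_g]`; i.e. `f ▷ g := d_f(g)`
makes `L` a post-Lie algebra. -/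
theorem freeLie_special_derivations_exist_unique_and_postLie :
    (∃! d : FreeLieAlgebra ℚ (Fin 2) →ₗ[ℚ]
        LieDerivation ℚ (FreeLieAlgebra ℚ (Fin 2)) (FreeLieAlgebra ℚ (Fin 2)),
      ∀ f : FreeLieAlgebra ℚ (Fin 2),
        (d f) (of ℚ (0 : Fin 2)) = 0 ∧ (d f) (of ℚ (1 : Fin 2)) = ⁅of ℚ (1 : Fin 2), f⁆) ∧
    (∀ d : FreeLieAlgebra ℚ (Fin 2) →ₗ[ℚ]
        LieDerivation ℚ (FreeLieAlgebra ℚ (Fin 2)) (FreeLieAlgebra ℚ (Fin 2)),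
      (∀ f : FreeLieAlgebra ℚ (Fin 2),
        (d f) (of ℚ (0 : Fin 2)) = 0 ∧ (d f) (of ℚ (1 : Fin 2)) = ⁅of ℚ (1 : Fin 2), f⁆) →
      ∀ f g : FreeLieAlgebra ℚ (Fin 2),
        d ((d f) g - (d g) f + ⁅f, g⁆) = ⁅d f, d g⁆) := by
  constructor
  · refine ⟨dmap, fun f => ⟨Dgen_of0 f, Dgen_of1 f⟩, ?_⟩
    intro d' hd'
    apply LinearMap.ext
    intro f
    apply deriv_ext
    · rw [(hd' f).1, show (dmap f) _ = _ from Dgen_of0 f]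
    · rw [(hd' f).2, show (dmap f) _ = _ from Dgen_of1 f]
  · intro d hd f g
    apply deriv_ext
    · rw [(hd _).1, LieDerivation.commutator_apply, (hd f).1, (hd g).1, map_zero, map_zero,
        sub_zero]
    · rw [(hd _).2, LieDerivation.commutator_apply, (hd f).2, (hd g).2,
        LieDerivation.apply_lie_eq_sub, LieDerivation.apply_lie_eq_sub,
        (hd f).2, (hd g).2, lie_add, lie_sub,
        leibniz_lie (of ℚ (1 : Fin 2)) f g, ← lie_skew g ⁅of ℚ (1 : Fin 2), f⁆]
      abel
end

section
/- Let L be the free Lie algebra over ℚ on two generators x₀, x₁, and for f ∈ L let d_f be the unique derivation of L with d_f(x₀) = 0 and d_f(x₁) = [x₁, f]. Then the Ihara bracket {f,g} := d_f(g) − d_g(f) + [f,g] is ℚ-bilinear, antisymmetric, and satisfies the Jacobi identity; hence (L, {−,−}) is a Lie algebra over ℚ. -/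
/-!
The twisted bracket `{f, g} = d_f g - d_g f + [f, g]` is a Lie bracket as soon as `f ↦ d_f` is
linear and intertwines it with the commutator of derivations, `d_{f,g} = [d_f, d_g]`: Jacobi
then follows from the Jacobi identity of `L` and the Leibniz rule. For the Ihara derivations both
properties are equalities of derivations of a free Lie algebra, so it suffices to check them on
the generators; on `x₁` the intertwining relation is the Jacobi identity for `x₁, f, g`.
-/

open FreeLieAlgebra

namespace FreeLieAlgebra

variable {R X : Type*} [CommRing R]

theorem lieSpan_range_of :
    LieSubalgebra.lieSpan R (FreeLieAlgebra R X) (Set.range (of R)) = ⊤ := by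
  set S := LieSubalgebra.lieSpan R (FreeLieAlgebra R X) (Set.range (of R))
  let F : FreeLieAlgebra R X →ₗ⁅R⁆ S :=
    lift R fun x => ⟨of R x, LieSubalgebra.subset_lieSpan (Set.mem_range_self x)⟩
  have hF : S.incl.comp F = LieHom.id := hom_ext fun x => by simp [F]
  rw [eq_top_iff]
  intro a _
  rw [← LieHom.id_apply (R := R) a, ← hF]
  exact (F a).2

theorem lieDerivation_ext {D₁ D₂ : LieDerivation R (FreeLieAlgebra R X) (FreeLieAlgebra R X)}
    (h : ∀ x, D₁ (of R x) = D₂ (of R x)) : D₁ = D₂ :=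
  LieDerivation.ext_of_lieSpan_eq_top _ (lieSpan_range_of (R := R))
    (by rintro _ ⟨x, rfl⟩; exact h x)

end FreeLieAlgebra

section IharaBracket

variable {R L : Type*} [CommRing R] [LieRing L] [LieAlgebra R L] (d : L → LieDerivation R L L)

def iharaBracket (f g : L) : L := d f g - d g f + ⁅f, g⁆

theorem iharaBracket_add_smul_left (hd : ∀ (r : R) (f f' : L), d (r • f + f') = r • d f + d f')
    (r : R) (f f' g : L) :
    iharaBracket d (r • f + f') g = r • iharaBracket d f g + iharaBracket d f' g := by
  simp only [iharaBracket, hd, LieDerivation.add_apply, LieDerivation.smul_apply, map_add,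
    map_smul, add_lie, smul_lie, smul_sub, smul_add]
  abel

theorem iharaBracket_add_smul_right (hd : ∀ (r : R) (f f' : L), d (r • f + f') = r • d f + d f')
    (r : R) (f g g' : L) :
    iharaBracket d f (r • g + g') = r • iharaBracket d f g + iharaBracket d f g' := by
  simp only [iharaBracket, hd, LieDerivation.add_apply, LieDerivation.smul_apply, map_add,
    map_smul, lie_add, lie_smul, smul_sub, smul_add]
  abel

theorem iharaBracket_swap (f g : L) : iharaBracket d f g = -iharaBracket d g f := by
  rw [iharaBracket, iharaBracket, ← lie_skew f g]
  abel

theorem iharaBracket_jacobi (hd : ∀ f g : L, d (iharaBracket d f g) = ⁅d f, d g⁆) (f g h : L) :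
    iharaBracket d f (iharaBracket d g h) + iharaBracket d g (iharaBracket d h f)
      + iharaBracket d h (iharaBracket d f g) = 0 := by
  simp only [iharaBracket] at hd ⊢
  rw [hd g h, hd h f, hd f g]
  simp only [LieDerivation.commutator_apply, map_sub, map_add, LieDerivation.apply_lie_eq_add,
    lie_add, lie_sub]
  rw [← lie_skew ((d f) g) h, ← lie_skew ((d g) h) f, ← lie_skew ((d h) f) g, ← lie_skew h f]
  simp only [lie_neg]
  rw [← lie_skew h ⁅f, g⁆, lie_lie]
  abel

theorem iharaBracket_apply_of_forall_apply_eq_zero {x : L}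
    (hx : ∀ f, d f x = 0) (f g : L) : d (iharaBracket d f g) x = ⁅d f, d g⁆ x := by
  simp [hx]

theorem iharaBracket_apply_of_forall_apply_eq_lie {x : L}
    (hx : ∀ f, d f x = ⁅x, f⁆) (f g : L) : d (iharaBracket d f g) x = ⁅d f, d g⁆ x := by
  simp only [iharaBracket, LieDerivation.commutator_apply, hx, LieDerivation.apply_lie_eq_add,
    lie_add, lie_sub]
  rw [← lie_skew ⁅x, g⁆ f, lie_lie]
  abel

end IharaBracket

section IharaDerivation

variable {R X : Type*} [CommRing R]
  {d : FreeLieAlgebra R X → LieDerivation R (FreeLieAlgebra R X) (FreeLieAlgebra R X)}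

theorem iharaDerivation_add_smul
    (hd : ∀ x, (∀ f, d f (of R x) = 0) ∨ ∀ f, d f (of R x) = ⁅of R x, f⁆)
    (r : R) (f f' : FreeLieAlgebra R X) : d (r • f + f') = r • d f + d f' := by
  refine lieDerivation_ext fun x => ?_
  rcases hd x with hx | hx <;> simp [hx]

theorem iharaDerivation_iharaBracket
    (hd : ∀ x, (∀ f, d f (of R x) = 0) ∨ ∀ f, d f (of R x) = ⁅of R x, f⁆)
    (f g : FreeLieAlgebra R X) : d (iharaBracket d f g) = ⁅d f, d g⁆ := by
  refine lieDerivation_ext fun x => ?_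
  rcases hd x with hx | hx
  exacts [iharaBracket_apply_of_forall_apply_eq_zero d hx f g,
    iharaBracket_apply_of_forall_apply_eq_lie d hx f g]

end IharaDerivation

/-- Let `L` be the free Lie algebra over `ℚ` on `x₀, x₁` and for `f ∈ L` let
`d f` be the (unique) derivation of `L` with `d_f(x₀) = 0`, `d_f(x₁) = [x₁, f]`. Then the
Ihara bracket `{f,g} = d_f(g) − d_g(f) + [f,g]` is `ℚ`-bilinear, antisymmetric and satisfies
the Jacobi identity, so `(L, {−,−})` is a Lie algebra over `ℚ`. -/
theorem ihara_bracket_lieAlgebra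
    (d : FreeLieAlgebra ℚ (Fin 2) →
      LieDerivation ℚ (FreeLieAlgebra ℚ (Fin 2)) (FreeLieAlgebra ℚ (Fin 2)))
    (hd : ∀ f : FreeLieAlgebra ℚ (Fin 2),
      (d f) (of ℚ (0 : Fin 2)) = 0 ∧ (d f) (of ℚ (1 : Fin 2)) = ⁅of ℚ (1 : Fin 2), f⁆) :
    (∀ (r : ℚ) (f f' g : FreeLieAlgebra ℚ (Fin 2)),
        (d (r • f + f')) g - (d g) (r • f + f') + ⁅r • f + f', g⁆
          = r • ((d f) g - (d g) f + ⁅f, g⁆) + ((d f') g - (d g) f' + ⁅f', g⁆)) ∧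
    (∀ (r : ℚ) (f g g' : FreeLieAlgebra ℚ (Fin 2)),
        (d f) (r • g + g') - (d (r • g + g')) f + ⁅f, r • g + g'⁆
          = r • ((d f) g - (d g) f + ⁅f, g⁆) + ((d f) g' - (d g') f + ⁅f, g'⁆)) ∧
    (∀ f g : FreeLieAlgebra ℚ (Fin 2),
        (d f) g - (d g) f + ⁅f, g⁆ = -((d g) f - (d f) g + ⁅g, f⁆)) ∧
    (∀ f g h : FreeLieAlgebra ℚ (Fin 2),
        ((d f) ((d g) h - (d h) g + ⁅g, h⁆)
            - (d ((d g) h - (d h) g + ⁅g, h⁆)) f + ⁅f, (d g) h - (d h) g + ⁅g, h⁆⁆)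
          + ((d g) ((d h) f - (d f) h + ⁅h, f⁆)
            - (d ((d h) f - (d f) h + ⁅h, f⁆)) g + ⁅g, (d h) f - (d f) h + ⁅h, f⁆⁆)
          + ((d h) ((d f) g - (d g) f + ⁅f, g⁆)
            - (d ((d f) g - (d g) f + ⁅f, g⁆)) h + ⁅h, (d f) g - (d g) f + ⁅f, g⁆⁆) = 0) := by
  have hgen : ∀ i : Fin 2, (∀ f, d f (of ℚ i) = 0) ∨ ∀ f, d f (of ℚ i) = ⁅of ℚ i, f⁆ := by
    intro i
    fin_cases i
    exacts [Or.inl fun f => (hd f).1, Or.inr fun f => (hd f).2]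
  exact ⟨iharaBracket_add_smul_left d (iharaDerivation_add_smul hgen),
    iharaBracket_add_smul_right d (iharaDerivation_add_smul hgen),
    iharaBracket_swap d, iharaBracket_jacobi d (iharaDerivation_iharaBracket hgen)⟩
end

section
/- Let w = ε₁⋯εₙ be a word in the letters x₀, x₁ belonging to B, i.e. w is a concatenation of the blocks x₀x₁ and x₀x₀x₁. Let 1 ≤ i₁ < i₂ < ⋯ < i_k ≤ n be indices (k ≥ 0), and adopt the conventions i₀ = 0, i_{k+1} = n+1, ε₀ = x₁, ε_{n+1} = x₀. Assume that for every p ∈ {0, 1, …, k} with i_{p+1} > i_p + 1 (i.e. the intermediate quotient word ε_{i_p+1}⋯ε_{i_{p+1}−1} is nonempty) one has ε_{i_p} ≠ ε_{i_{p+1}}. Then the subword ε_{i_1}⋯ε_{i_k} again belongs to B. (This is the combinatorial core of the statement that the Goncharov coproduct maps B into ℚ⟨x₀,x₁⟩ ⊗ B: every subword contributing nontrivially to the Goncharov coproduct of a word in B lies in B.) -/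
/-- `B`: words over `X = {x₀, x₁}` (here `x₀ = false`, `x₁ = true`) that are concatenations
of the blocks `x₀x₁` and `x₀x₀x₁`. -/
def IsB (w : List Bool) : Prop :=
  ∃ bs : List Bool,
    w = bs.flatMap (fun b => if b then [false, false, true] else [false, true])

/-- The extended letter sequence of a word `w = ε₁⋯εₙ`: `ε₀ = x₁`, `ε_j = w_j` for
`1 ≤ j ≤ n`, and `ε_{n+1} = x₀`. -/
def epsExt (w : List Bool) (j : ℕ) : Bool :=
  if j = 0 then true else w.getD (j - 1) false

def CondB (w : List Bool) : Prop :=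
  (∀ j, j ≤ w.length → ¬(epsExt w j = true ∧ epsExt w (j+1) = true)) ∧
  (∀ j, j + 2 ≤ w.length + 1 →
    ¬(epsExt w j = false ∧ epsExt w (j+1) = false ∧ epsExt w (j+2) = false)) ∧
  (w = [] ∨ epsExt w w.length = true)

lemma epsExt_zero (w : List Bool) : epsExt w 0 = true := by simp [epsExt]

lemma epsExt_succ (w : List Bool) (j : ℕ) : epsExt w (j+1) = w.getD j false := by
  simp [epsExt]

lemma shift2 (rest : List Bool) (j : ℕ) :
    epsExt (false :: true :: rest) (j+2) = epsExt rest j := by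
  cases j with
  | zero => simp [epsExt]
  | succ j => simp [epsExt]

lemma shift3 (rest : List Bool) (j : ℕ) :
    epsExt (false :: false :: true :: rest) (j+3) = epsExt rest j := by
  cases j with
  | zero => simp [epsExt]
  | succ j => simp [epsExt]

lemma isB_cons2 (rest : List Bool) (h : IsB rest) : IsB (false :: true :: rest) := by
  obtain ⟨bs, rfl⟩ := h
  exact ⟨false :: bs, by simp⟩

lemma isB_cons3 (rest : List Bool) (h : IsB rest) : IsB (false :: false :: true :: rest) := by
  obtain ⟨bs, rfl⟩ := h
  exact ⟨true :: bs, by simp⟩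

lemma bwd : ∀ (v : List Bool), CondB v → IsB v
  | [], _ => ⟨[], rfl⟩
  | true :: v₂, h => by
      exact absurd ⟨epsExt_zero _, by simp [epsExt]⟩ (h.1 0 (by simp))
  | [false], h => by
      rcases h.2.2 with h' | h' <;> simp [epsExt] at h'
  | [false, false], h => by
      rcases h.2.2 with h' | h' <;> simp [epsExt] at h'
  | false :: false :: false :: v₂, h => by
      refine absurd ⟨?_, ?_, ?_⟩ (h.2.1 1 (by simp only [List.length_cons]; omega)) <;> simp [epsExt]
  | false :: true :: rest, h => by
      apply isB_cons2
      apply bwd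
      refine ⟨?_, ?_, ?_⟩
      · intro j hj hc
        exact h.1 (j+2) (by simp only [List.length_cons]; omega) (by rwa [shift2, shift2])
      · intro j hj hc
        exact h.2.1 (j+2) (by simp only [List.length_cons]; omega) (by rwa [shift2, shift2, shift2])
      · rcases eq_or_ne rest [] with rfl | hne
        · exact Or.inl rfl
        · refine Or.inr ?_
          have := h.2.2.resolve_left (by simp)
          rw [show (false :: true :: rest).length = rest.length + 2 by simp] at this
          rwa [shift2] at this
  | false :: false :: true :: rest, h => by
      apply isB_cons3
      apply bwd
      refine ⟨?_, ?_, ?_⟩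
      · intro j hj hc
        exact h.1 (j+3) (by simp only [List.length_cons]; omega) (by rwa [shift3, shift3])
      · intro j hj hc
        exact h.2.1 (j+3) (by simp only [List.length_cons]; omega) (by rwa [shift3, shift3, shift3])
      · rcases eq_or_ne rest [] with rfl | hne
        · exact Or.inl rfl
        · refine Or.inr ?_
          have := h.2.2.resolve_left (by simp)
          rw [show (false :: false :: true :: rest).length = rest.length + 3 by simp] at this
          rwa [shift3] at this
termination_by v => v.length

lemma fwd_aux : ∀ (bs : List Bool),
    CondB (bs.flatMap (fun b => if b then [false, false, true] else [false, true]))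
  | [] => by
      refine ⟨?_, ?_, Or.inl rfl⟩
      · intro j hj
        simp only [List.flatMap_nil, List.length_nil, Nat.le_zero] at hj
        subst hj
        simp [epsExt]
      · intro j hj
        simp only [List.flatMap_nil, List.length_nil] at hj
        omega
  | false :: bs => by
      have ih := fwd_aux bs
      set rest := bs.flatMap (fun b => if b then [false, false, true] else [false, true]) with hrest
      show CondB (false :: true :: rest)
      refine ⟨?_, ?_, ?_⟩
      · intro j hj hc
        obtain _ | _ | j := j
        · simp [epsExt] at hc
        · simp [epsExt] at hc
        · rw [shift2, shift2] at hc
          exact ih.1 j (by simp only [List.length_cons] at hj; omega) hc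
      · intro j hj hc
        obtain _ | _ | j := j
        · simp [epsExt] at hc
        · rw [show (1:ℕ)+1 = 0+2 by rfl, shift2] at hc
          simp [epsExt] at hc
        · rw [shift2, shift2, shift2] at hc
          exact ih.2.1 j (by simp only [List.length_cons] at hj; omega) hc
      · rcases eq_or_ne rest [] with he | hne
        · rw [he]
          refine Or.inr ?_
          simp [epsExt]
        · refine Or.inr ?_
          rw [show (false :: true :: rest).length = rest.length + 2 by simp, shift2]
          exact ih.2.2.resolve_left hne
  | true :: bs => by
      have ih := fwd_aux bs
      set rest := bs.flatMap (fun b => if b then [false, false, true] else [false, true]) with hrest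
      show CondB (false :: false :: true :: rest)
      refine ⟨?_, ?_, ?_⟩
      · intro j hj hc
        obtain _ | _ | _ | j := j
        · simp [epsExt] at hc
        · simp [epsExt] at hc
        · rw [show (2:ℕ)+1 = 0+3 by rfl, shift3] at hc
          simp [epsExt] at hc
        · rw [shift3, shift3] at hc
          exact ih.1 j (by simp only [List.length_cons] at hj; omega) hc
      · intro j hj hc
        obtain _ | _ | _ | j := j
        · simp [epsExt] at hc
        · simp [epsExt] at hc
        · rw [show (2:ℕ)+1 = 0+3 by rfl, shift3] at hc
          simp [epsExt] at hc
        · rw [shift3, shift3, shift3] at hc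
          exact ih.2.1 j (by simp only [List.length_cons] at hj; omega) hc
      · rcases eq_or_ne rest [] with he | hne
        · rw [he]
          refine Or.inr ?_
          simp [epsExt]
        · refine Or.inr ?_
          rw [show (false :: false :: true :: rest).length = rest.length + 3 by simp, shift3]
          exact ih.2.2.resolve_left hne

lemma fwd (w : List Bool) (h : IsB w) : CondB w := by
  obtain ⟨bs, rfl⟩ := h
  exact fwd_aux bs

lemma epsExt_out (w : List Bool) (j : ℕ) (h : w.length ≤ j) : epsExt w (j+1) = false := by
  rw [epsExt_succ]
  simp [List.getD_eq_getElem?_getD, List.getElem?_eq_none h]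

/-- Let `w = ε₁⋯εₙ ∈ B` and let `1 ≤ i₁ < ⋯ < i_k ≤ n`, with the conventions
`i₀ = 0`, `i_{k+1} = n+1`, `ε₀ = x₁`, `ε_{n+1} = x₀`. If for every `p ∈ {0,…,k}` with
`i_{p+1} > i_p + 1` one has `ε_{i_p} ≠ ε_{i_{p+1}}`, then the subword `ε_{i_1}⋯ε_{i_k}`
again belongs to `B`. -/
theorem subword_of_B_mem_B (w : List Bool) (hw : IsB w) (idx : List ℕ)
    (hrange : ∀ j ∈ idx, 1 ≤ j ∧ j ≤ w.length)
    (hmono : List.Chain' (· < ·) (0 :: idx ++ [w.length + 1]))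
    (hgap : List.Chain' (fun a b => a + 1 < b → epsExt w a ≠ epsExt w b)
      (0 :: idx ++ [w.length + 1])) :
    IsB (idx.map (epsExt w)) := by
  have hC := fwd w hw
  obtain ⟨v, hv⟩ : ∃ v, v = idx.map (epsExt w) := ⟨_, rfl⟩
  obtain ⟨L, hL⟩ : ∃ L, L = 0 :: idx ++ [w.length + 1] := ⟨_, rfl⟩
  rw [← hL] at hmono hgap
  rw [← hv]
  apply bwd
  have hLlen : L.length = idx.length + 2 := by simp [hL]
  have hvlen : v.length = idx.length := by simp [hv]
  have hgd : ∀ p (h : p < L.length), L.getD p 0 = L.get ⟨p, h⟩ := fun p h => by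
    simp [List.getD_eq_getElem?_getD, List.getElem?_eq_getElem h]
  have hlt : ∀ p, p + 1 < L.length → L.getD p 0 < L.getD (p+1) 0 := by
    intro p h
    rw [hgd p (by omega), hgd (p+1) h]
    exact List.isChain_iff_getElem.mp hmono p (by omega)
  have hgap' : ∀ p, p + 1 < L.length → L.getD p 0 + 1 < L.getD (p+1) 0 →
      epsExt w (L.getD p 0) ≠ epsExt w (L.getD (p+1) 0) := by
    intro p h
    rw [hgd p (by omega), hgd (p+1) h]
    exact List.isChain_iff_getElem.mp hgap p (by omega)
  have hle : ∀ p, p < L.length → L.getD p 0 ≤ w.length + 1 := by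
    intro p h
    have hmem : L.getD p 0 ∈ 0 :: idx ++ [w.length + 1] := by
      rw [← hL, hgd p h]; exact L.get_mem ⟨p, h⟩
    simp only [List.cons_append, List.mem_cons, List.mem_append, List.mem_singleton] at hmem
    rcases hmem with h1 | h1 | h1
    · omega
    · exact le_trans (hrange _ h1).2 (by omega)
    · have : L.getD p 0 = w.length + 1 := by simpa using h1
      omega
  have hkey : ∀ p, p ≤ idx.length + 1 → epsExt v p = epsExt w (L.getD p 0) := by
    intro p hp
    match p with
    | 0 => rw [hL]; simp [epsExt]
    | p + 1 =>
      have hL' : L.getD (p+1) 0 = (idx ++ [w.length + 1]).getD p 0 := by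
        rw [hL]; rfl
      rcases lt_or_ge p idx.length with hpm | hpm
      · have h1 : (idx ++ [w.length + 1]).getD p 0 = idx[p]'hpm := by
          rw [List.getD_eq_getElem?_getD, List.getElem?_append_left hpm,
            List.getElem?_eq_getElem hpm]
          rfl
        have h3 : epsExt v (p+1) = v[p]'(by omega) := by
          rw [epsExt_succ, List.getD_eq_getElem?_getD,
            List.getElem?_eq_getElem (show p < v.length by omega)]
          rfl
        rw [hL', h1, h3]
        simp only [hv, List.getElem_map]
      · have hpm' : p = idx.length := by omega
        subst hpm'
        have h1 : (idx ++ [w.length + 1]).getD idx.length 0 = w.length + 1 := by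
          rw [List.getD_eq_getElem?_getD,
            List.getElem?_append_right (le_refl idx.length), Nat.sub_self]
          rfl
        rw [hL', h1, epsExt_out w w.length (le_refl _), ← hvlen,
          epsExt_out v v.length (le_refl _)]
  refine ⟨?_, ?_, ?_⟩
  · intro j hj hc
    rw [hvlen] at hj
    obtain ⟨h1, h2⟩ := hc
    rw [hkey j (by omega)] at h1
    rw [hkey (j+1) (by omega)] at h2
    have hab := hlt j (by omega)
    by_cases hg : L.getD j 0 + 1 < L.getD (j+1) 0
    · exact hgap' j (by omega) hg (h1.trans h2.symm)
    · have hb : L.getD (j+1) 0 = L.getD j 0 + 1 := by omega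
      have hbound : L.getD j 0 ≤ w.length := by
        have := hle (j+1) (by omega); omega
      exact hC.1 _ hbound ⟨h1, by rw [← hb]; exact h2⟩
  · intro j hj hc
    rw [hvlen] at hj
    obtain ⟨h1, h2, h3⟩ := hc
    rw [hkey j (by omega)] at h1
    rw [hkey (j+1) (by omega)] at h2
    rw [hkey (j+2) (by omega)] at h3
    have hab := hlt j (by omega)
    have hbc : L.getD (j+1) 0 < L.getD (j+2) 0 := hlt (j+1) (by omega)
    by_cases hg1 : L.getD j 0 + 1 < L.getD (j+1) 0
    · exact hgap' j (by omega) hg1 (h1.trans h2.symm)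
    by_cases hg2 : L.getD (j+1) 0 + 1 < L.getD (j+2) 0
    · exact hgap' (j+1) (by omega) (by exact hg2) (h2.trans h3.symm)
    have hb : L.getD (j+1) 0 = L.getD j 0 + 1 := by omega
    have hcq : L.getD (j+2) 0 = L.getD j 0 + 2 := by omega
    have hbound : L.getD j 0 + 2 ≤ w.length + 1 := by
      have := hle (j+2) (by omega); omega
    exact hC.2.1 _ hbound ⟨h1, by rw [← hb]; exact h2,
      by rw [show L.getD j 0 + 1 + 1 = L.getD j 0 + 2 from rfl, ← hcq]; exact h3⟩
  · rcases eq_or_ne idx [] with rfl | hne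
    · exact Or.inl (by simp [hv])
    · refine Or.inr ?_
      have hm1 : 1 ≤ idx.length := List.length_pos_iff.mpr hne
      rw [hvlen, hkey idx.length (by omega)]
      have hlast : L.getD (idx.length + 1) 0 = w.length + 1 := by
        rw [show L.getD (idx.length + 1) 0 = (idx ++ [w.length + 1]).getD idx.length 0 from
            by rw [hL]; rfl,
          List.getD_eq_getElem?_getD, List.getElem?_append_right (le_refl idx.length),
          Nat.sub_self]
        rfl
      have hab : L.getD idx.length 0 < L.getD (idx.length + 1) 0 := hlt idx.length (by omega)
      rw [hlast] at hab
      by_cases hg : L.getD idx.length 0 + 1 < w.length + 1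
      · have := hgap' idx.length (by omega) (by rw [hlast]; exact hg)
        rw [hlast, epsExt_out w w.length (le_refl _)] at this
        cases h : epsExt w (L.getD idx.length 0)
        · exact absurd h this
        · rfl
      · have ha : L.getD idx.length 0 = w.length := by omega
        have hpos : 1 ≤ L.getD idx.length 0 := by
          have h0 : L.getD (idx.length - 1) 0 < L.getD (idx.length - 1 + 1) 0 :=
            hlt (idx.length - 1) (by omega)
          rw [Nat.sub_add_cancel hm1] at h0
          omega
        have hwne : w ≠ [] := by
          intro h; subst h; simp only [List.length_nil] at ha; omega
        rw [ha]
        exact hC.2.2.resolve_left hwne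
end

section
/- Let p be a prime number, n ≥ 1, and let A = (a_{ij}) be an n × n matrix with rational entries such that: (i) for all i > j, either a_{ij} = 0 or ν_p(a_{ij}) ≥ 1; and (ii) for every column index j, a_{jj} ≠ 0, ν_p(a_{jj}) ≤ 0, and ν_p(a_{jj}) ≤ ν_p(a_{ij}) for every i with a_{ij} ≠ 0 (i.e. ν_p(a_{jj}) realizes the minimum of the p-adic valuations of the nonzero entries of the j-th column). Then A is invertible, i.e. det(A) ≠ 0. -/
open Finset

private lemma padic_prod_val {p : ℕ} [Fact p.Prime] {ι : Type*} (s : Finset ι) (f : ι → ℚ)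
    (h : ∀ i ∈ s, f i ≠ 0) :
    padicValRat p (∏ i ∈ s, f i) = ∑ i ∈ s, padicValRat p (f i) := by
  induction s using Finset.cons_induction with
  | empty => simp
  | cons a s ha ih =>
    rw [Finset.prod_cons, Finset.sum_cons,
      padicValRat.mul (h a (Finset.mem_cons_self a s))
        (Finset.prod_ne_zero_iff.2 fun i hi => h i (Finset.mem_cons_of_mem hi)),
      ih fun i hi => h i (Finset.mem_cons_of_mem hi)]

private lemma padic_sum_val {p : ℕ} [Fact p.Prime] {ι : Type*} (s : Finset ι) (f : ι → ℚ)
    (h : ∀ i ∈ s, f i = 0 ∨ 1 ≤ padicValRat p (f i)) :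
    (∑ i ∈ s, f i) = 0 ∨ 1 ≤ padicValRat p (∑ i ∈ s, f i) := by
  induction s using Finset.cons_induction with
  | empty => simp
  | cons a s ha ih =>
    rw [Finset.sum_cons]
    rcases h a (Finset.mem_cons_self a s) with h0 | h1
    · rw [h0, zero_add]; exact ih fun i hi => h i (Finset.mem_cons_of_mem hi)
    rcases ih (fun i hi => h i (Finset.mem_cons_of_mem hi)) with h0 | h1'
    · rw [h0, add_zero]; exact Or.inr h1
    by_cases hz : f a + ∑ i ∈ s, f i = 0
    · exact Or.inl hz
    · exact Or.inr (le_trans (le_min h1 h1') (padicValRat.min_le_padicValRat_add hz))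

/-- Let `p` be a prime and `A` an `n × n` rational matrix (`n ≥ 1`) such that
(i) every entry strictly below the diagonal is zero or has `p`-adic valuation `≥ 1`, and
(ii) every diagonal entry is nonzero, has `p`-adic valuation `≤ 0`, and realizes the minimum
of the `p`-adic valuations of the nonzero entries of its column. Then `det A ≠ 0`. -/
theorem matrix_det_ne_zero_of_padic_valuations (p : ℕ) (hp : p.Prime) (n : ℕ) (hn : 1 ≤ n)
    (A : Matrix (Fin n) (Fin n) ℚ)
    (h1 : ∀ i j : Fin n, (j : ℕ) < (i : ℕ) → A i j = 0 ∨ 1 ≤ padicValRat p (A i j))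
    (h2 : ∀ j : Fin n, A j j ≠ 0 ∧ padicValRat p (A j j) ≤ 0 ∧
      ∀ i : Fin n, A i j ≠ 0 → padicValRat p (A j j) ≤ padicValRat p (A i j)) :
    A.det ≠ 0 := by
  haveI : Fact p.Prime := ⟨hp⟩
  set B : Matrix (Fin n) (Fin n) ℚ := fun i j => A i j / A j j with hB
  -- B properties
  have hBdiag : ∀ j, B j j = 1 := fun j => div_self (h2 j).1
  have hBval0 : ∀ i j, B i j = 0 ∨ 0 ≤ padicValRat p (B i j) := by
    intro i j
    by_cases hz : A i j = 0
    · left; simp [hB, hz]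
    · right
      rw [hB]
      have := padicValRat.div (p := p) hz (h2 j).1
      rw [this]
      have := (h2 j).2.2 i hz
      omega
  have hBval1 : ∀ i j : Fin n, (j : ℕ) < (i : ℕ) → B i j = 0 ∨ 1 ≤ padicValRat p (B i j) := by
    intro i j hij
    rcases h1 i j hij with hz | hv
    · left; simp [hB, hz]
    · right
      have hz : A i j ≠ 0 := by
        intro h0; rw [h0] at hv; simp [padicValRat] at hv
      rw [hB, padicValRat.div (p := p) hz (h2 j).1]
      have := (h2 j).2.1
      omega
  -- det A = det B * ∏ A j j
  have hdet : B.det = A.det * ∏ j, (A j j)⁻¹ := by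
    have : B = A * Matrix.diagonal (fun j => (A j j)⁻¹) := by
      ext i j
      simp [hB, Matrix.mul_apply, Matrix.diagonal, div_eq_mul_inv, Finset.sum_ite_eq]
    rw [this, Matrix.det_mul, Matrix.det_diagonal]
  intro hA0
  have hdetB : B.det = 0 := by rw [hdet, hA0, zero_mul]
  -- det B = 1 + sum of terms with valuation ≥ 1
  rw [Matrix.det_apply] at hdetB
  set t : Equiv.Perm (Fin n) → ℚ := fun σ => Equiv.Perm.sign σ • ∏ i, B (σ i) i with ht
  have h1mem : (1 : Equiv.Perm (Fin n)) ∈ (Finset.univ : Finset (Equiv.Perm (Fin n))) :=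
    Finset.mem_univ _
  have hsplit : (∑ σ : Equiv.Perm (Fin n), t σ) = t 1 + ∑ σ ∈ Finset.univ.erase 1, t σ :=
    (Finset.add_sum_erase _ t h1mem).symm
  have ht1 : t 1 = 1 := by
    rw [ht]
    simp only [Equiv.Perm.sign_one, one_smul, Equiv.Perm.one_apply]
    exact Finset.prod_eq_one fun j _ => hBdiag j
  have hrest : (∑ σ ∈ Finset.univ.erase 1, t σ) = 0 ∨
      1 ≤ padicValRat p (∑ σ ∈ Finset.univ.erase 1, t σ) := by
    apply padic_sum_val
    intro σ hσ
    have hσ1 : σ ≠ 1 := (Finset.mem_erase.1 hσ).1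
    -- find j with j < σ j
    obtain ⟨j0, hj0⟩ : ∃ j : Fin n, (j : ℕ) < (σ j : ℕ) := by
      by_contra hc
      push_neg at hc
      apply hσ1
      have hsum : ∑ j : Fin n, ((σ j : ℕ)) = ∑ j : Fin n, (j : ℕ) :=
        Equiv.sum_comp σ (fun j : Fin n => (j : ℕ))
      have : ∀ j : Fin n, (σ j : ℕ) = (j : ℕ) := by
        intro j
        by_contra hne
        have hlt : (σ j : ℕ) < (j : ℕ) := lt_of_le_of_ne (hc j) hne
        have hlt2 := Finset.sum_lt_sum (f := fun j : Fin n => ((σ j : ℕ)))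
          (g := fun j : Fin n => (j : ℕ)) (fun i _ => hc i) ⟨j, Finset.mem_univ j, hlt⟩
        exact absurd hsum (ne_of_lt hlt2)
      ext j
      exact this j
    by_cases hz : ∀ i, B (σ i) i ≠ 0
    · right
      have hprodne : (∏ i, B (σ i) i) ≠ 0 := Finset.prod_ne_zero_iff.2 fun i _ => hz i
      have hval : 1 ≤ padicValRat p (∏ i, B (σ i) i) := by
        rw [padic_prod_val _ _ fun i _ => hz i]
        have hge : ∀ i ∈ (Finset.univ : Finset (Fin n)), 0 ≤ padicValRat p (B (σ i) i) :=
          fun i _ => ((hBval0 (σ i) i).resolve_left (hz i))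
        have hj0v : 1 ≤ padicValRat p (B (σ j0) j0) :=
          (hBval1 (σ j0) j0 hj0).resolve_left (hz j0)
        calc (1 : ℤ) ≤ padicValRat p (B (σ j0) j0) := hj0v
          _ ≤ ∑ i, padicValRat p (B (σ i) i) :=
            Finset.single_le_sum hge (Finset.mem_univ j0)
      have hts : t σ = Equiv.Perm.sign σ • ∏ i, B (σ i) i := rfl
      rcases Int.units_eq_one_or (Equiv.Perm.sign σ) with hs | hs
      · rw [hts, hs]; simpa using hval
      · have hneg : t σ = -(∏ i, B (σ i) i) := by rw [hts, hs]; simp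
        rw [hneg, padicValRat.neg]
        exact hval
    · left
      push_neg at hz
      obtain ⟨i, hi⟩ := hz
      show Equiv.Perm.sign σ • ∏ i, B (σ i) i = 0
      rw [Finset.prod_eq_zero (f := fun x => B (σ x) x) (Finset.mem_univ i) hi, smul_zero]
  rw [hsplit, ht1] at hdetB
  rcases hrest with h0 | h1v
  · rw [h0, add_zero] at hdetB; exact one_ne_zero hdetB
  · have : (∑ σ ∈ Finset.univ.erase 1, t σ) = -1 := by linarith
    rw [this] at h1v
    rw [show (-1 : ℚ) = -(1:ℚ) from rfl, padicValRat.neg, padicValRat.one] at h1v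
    omega
end

section
/- For all integers a, b ≥ 0, the difference c_{a,b} − c_{b,a} is an even integer, i.e. c_{a,b} − c_{b,a} ∈ 2ℤ. -/
/-- The rational numbers `c_{a,b}^r = 2·(−1)^r·( C(2r, 2b+2) − (1 − 2^{−2r})·C(2r, 2a+1) )`
appearing in Zagier's formula. -/
def cZ (a b r : ℕ) : ℚ :=
  2 * (-1) ^ r * (((2 * r).choose (2 * b + 2) : ℚ)
    - (1 - (2 : ℚ) ^ (-(2 * (r : ℤ)))) * ((2 * r).choose (2 * a + 1) : ℚ))

/-- The terms carrying the non-integral factor `1 - 2^{-2r}` cancel, since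
`C(2r, 2a+1) = C(2r, 2b+1)`. -/
theorem cZ_sub_swap_of_add_eq {a b r : ℕ} (h : a + b + 1 = r) :
    cZ a b r - cZ b a r =
      2 * (-1) ^ r * (((2 * r).choose (2 * b + 2) : ℚ) - (2 * r).choose (2 * a + 2)) := by
  have hsymm : (2 * r).choose (2 * a + 1) = (2 * r).choose (2 * b + 1) :=
    Nat.choose_symm_of_eq_add (by omega)
  simp only [cZ, hsymm]
  ring

/-- For all `a, b ≥ 0`, the difference `c_{a,b} − c_{b,a}` is an even integer. -/
theorem cZ_sub_swap_even (a b : ℕ) :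
    ∃ m : ℤ, cZ a b (a + b + 1) - cZ b a (b + a + 1) = 2 * (m : ℚ) := by
  refine ⟨(-1) ^ (a + b + 1) * (((2 * (a + b + 1)).choose (2 * b + 2) : ℤ)
    - (2 * (a + b + 1)).choose (2 * a + 2)), ?_⟩
  rw [add_comm b a, cZ_sub_swap_of_add_eq rfl]
  push_cast
  ring
end

section
/- For all integers a, b ≥ 0, the rational numbers c_{a,b}, c_{a+b,0} and c_{0,a+b} are nonzero and their 2-adic valuations satisfy ν₂(c_{a+b,0}) = ν₂(c_{0,a+b}) ≤ ν₂(c_{a,b}) ≤ 0. -/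
/-- The valuation of the binomial coefficient `C(2(a+b+1), 2a+1)` is less than `2(a+b+1)`. -/
lemma aux_val_lt (a b : ℕ) :
    padicValNat 2 ((2 * (a + b + 1)).choose (2 * a + 1)) < 2 * (a + b + 1) := by
  have h1 : padicValNat 2 ((2 * (a + b + 1)).choose (2 * a + 1))
      = ((2 * (a + b + 1)).choose (2 * a + 1)).factorization 2 :=
    (Nat.factorization_def _ Nat.prime_two).symm
  have h2 := Nat.factorization_choose_le_log (p := 2) (n := 2 * (a + b + 1)) (k := 2 * a + 1)
  have h3 : Nat.log 2 (2 * (a + b + 1)) < 2 * (a + b + 1) :=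
    Nat.log_lt_self 2 (by omega)
  omega

/-- Key computation: `cZ a b (a+b+1)` is nonzero with 2-adic valuation
`1 - 2(a+b+1) + ν₂(C(2(a+b+1), 2a+1))`. -/
lemma cZ_key (a b : ℕ) :
    cZ a b (a + b + 1) ≠ 0 ∧
    padicValRat 2 (cZ a b (a + b + 1)) =
      1 - 2 * (a + b + 1) + padicValNat 2 ((2 * (a + b + 1)).choose (2 * a + 1)) := by
  set n : ℕ := 2 * (a + b + 1) with hn
  set C : ℕ := n.choose (2 * a + 1) with hCdef
  have hClt : 2 * a + 1 ≤ n := by omega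
  have hCpos : 0 < C := Nat.choose_pos hClt
  set v : ℕ := padicValNat 2 C with hv
  have hvlt : v < n := aux_val_lt a b
  -- factor C = 2^v * u with u odd
  set u : ℕ := C / 2 ^ v with hu
  have hCfac : 2 ^ v * u = C := by
    rw [hu, hv]
    exact Nat.ordProj_mul_ordCompl_eq_self C 2
  have huodd : ¬ (2 ∣ u) := by
    rw [hu, hv]
    exact Nat.not_dvd_ordCompl Nat.prime_two hCpos.ne'
  have hupos : 0 < u := by
    rcases Nat.eq_zero_or_pos u with h | h
    · exfalso; exact huodd (h ▸ dvd_zero 2)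
    · exact h
  -- the integer pieces
  set D : ℤ := (n.choose (2 * b + 2) : ℤ) - (C : ℤ) with hD
  set w : ℤ := 2 ^ (n - v) * D + (u : ℤ) with hw
  have hwodd : ¬ ((2 : ℤ) ∣ w) := by
    rw [hw]
    intro h
    have h1 : (2 : ℤ) ∣ 2 ^ (n - v) * D := by
      have : (2 : ℤ) ∣ 2 ^ (n - v) := dvd_pow_self 2 (by omega)
      exact this.mul_right D
    have h2 : (2 : ℤ) ∣ (u : ℤ) := (dvd_add_right h1).mp h
    exact huodd (by exact_mod_cast h2)
  have hwne : w ≠ 0 := fun h => hwodd (h ▸ dvd_zero 2)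
  -- the main algebraic identity
  have hfac : cZ a b (a + b + 1) =
      (-1 : ℚ) ^ (a + b + 1) * (2 * ((2 : ℚ) ^ n)⁻¹ * ((2 ^ v * w : ℤ) : ℚ)) := by
    have hpow : (2 : ℚ) ^ (-(2 * ((a + b + 1 : ℕ) : ℤ))) = ((2 : ℚ) ^ n)⁻¹ := by
      rw [← zpow_natCast (2 : ℚ) n, ← zpow_neg]
      congr 1
      all_goals (rw [hn]; push_cast; ring)
    have h2an : 2 * (a + b + 1) = n := hn.symm
    rw [cZ, h2an, hpow]
    have hvsplit : (2 : ℚ) ^ v * 2 ^ (n - v) = 2 ^ n := by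
      rw [← pow_add]; congr 1; omega
    have hCq : (C : ℚ) = 2 ^ v * u := by exact_mod_cast hCfac.symm
    push_cast [hw, hD]
    rw [mul_add ((2 : ℚ) ^ v), ← mul_assoc ((2 : ℚ) ^ v), hvsplit, ← hCq]
    have h2n : (2 : ℚ) ^ n ≠ 0 := by positivity
    have hCdef' : ((n.choose (2 * a + 1) : ℕ) : ℚ) = (C : ℚ) := by rw [hCdef]
    rw [hCdef']
    field_simp
    ring
  -- nonvanishing
  have hM : ((2 ^ v * w : ℤ) : ℚ) ≠ 0 := by
    exact_mod_cast mul_ne_zero (pow_ne_zero v two_ne_zero) hwne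
  have h2n : ((2 : ℚ) ^ n)⁻¹ ≠ 0 := by positivity
  have hne : cZ a b (a + b + 1) ≠ 0 := by
    rw [hfac]
    exact mul_ne_zero (pow_ne_zero _ (by norm_num))
      (mul_ne_zero (mul_ne_zero two_ne_zero h2n) hM)
  refine ⟨hne, ?_⟩
  -- valuation computation
  haveI : Fact (Nat.Prime 2) := ⟨Nat.prime_two⟩
  have hsgn : padicValRat 2 ((-1 : ℚ) ^ (a + b + 1)) = 0 := by
    rcases Nat.even_or_odd (a + b + 1) with h | h
    · rw [h.neg_one_pow]
      simp
    · rw [h.neg_one_pow, padicValRat.neg]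
      simp
  have hMval : padicValRat 2 (((2 ^ v * w : ℤ) : ℚ)) = v := by
    rw [padicValRat.of_int, padicValInt.mul (by positivity) hwne]
    have h1 : padicValInt 2 (2 ^ v) = v := by
      unfold padicValInt
      simp [Int.natAbs_pow]
      all_goals exact padicValNat.prime_pow v
    have h2 : padicValInt 2 w = 0 := padicValInt.eq_zero_of_not_dvd (by exact_mod_cast hwodd)
    rw [h1, h2, add_zero]
  have hterm : padicValRat 2 (2 * ((2 : ℚ) ^ n)⁻¹ * ((2 ^ v * w : ℤ) : ℚ))
      = 1 - n + v := by
    rw [padicValRat.mul (mul_ne_zero two_ne_zero h2n) hM,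
      padicValRat.mul two_ne_zero h2n, hMval]
    have hs : padicValRat 2 (2 : ℚ) = 1 := by
      simpa using padicValRat.self (p := 2) (by norm_num)
    have hi : padicValRat 2 ((2 : ℚ) ^ n)⁻¹ = -n := padicValRat.self_pow_inv n
    rw [hs, hi]; ring
  rw [hfac, padicValRat.mul (by
      exact pow_ne_zero _ (by norm_num)) (mul_ne_zero (mul_ne_zero two_ne_zero h2n) hM),
    hsgn, hterm, hn]
  push_cast
  ring

/-- `ν₂(n) ≤ ν₂(C(n, 2a+1))` for `n = 2(a+b+1)`. -/
lemma aux_val_le (a b : ℕ) :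
    padicValNat 2 (2 * (a + b + 1)) ≤
      padicValNat 2 ((2 * (a + b + 1)).choose (2 * a + 1)) := by
  haveI : Fact (Nat.Prime 2) := ⟨Nat.prime_two⟩
  set m : ℕ := 2 * (a + b) + 1 with hm
  have hn : 2 * (a + b + 1) = m + 1 := by omega
  have key := Nat.add_one_mul_choose_eq m (2 * a)
  -- (m+1) * m.choose (2a) = (m+1).choose (2a+1) * (2a+1)
  have hmc : 0 < m.choose (2 * a) := Nat.choose_pos (by omega)
  have hcc : 0 < (m + 1).choose (2 * a + 1) := Nat.choose_pos (by omega)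
  have hval := congrArg (padicValNat 2) key
  rw [padicValNat.mul (by omega) hmc.ne', padicValNat.mul hcc.ne' (by omega)] at hval
  have hodd : padicValNat 2 (2 * a + 1) = 0 :=
    padicValNat.eq_zero_of_not_dvd (by omega)
  rw [hn]
  omega

/-- For all `a, b ≥ 0`, the numbers `c_{a,b}`, `c_{a+b,0}`, `c_{0,a+b}` are
nonzero and `ν₂(c_{a+b,0}) = ν₂(c_{0,a+b}) ≤ ν₂(c_{a,b}) ≤ 0`. -/
theorem cZ_two_adic_valuations (a b : ℕ) :
    cZ a b (a + b + 1) ≠ 0 ∧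
    cZ (a + b) 0 (a + b + 1) ≠ 0 ∧
    cZ 0 (a + b) (a + b + 1) ≠ 0 ∧
    padicValRat 2 (cZ (a + b) 0 (a + b + 1)) = padicValRat 2 (cZ 0 (a + b) (a + b + 1)) ∧
    padicValRat 2 (cZ (a + b) 0 (a + b + 1)) ≤ padicValRat 2 (cZ a b (a + b + 1)) ∧
    padicValRat 2 (cZ a b (a + b + 1)) ≤ 0 := by
  obtain ⟨h1ne, h1v⟩ := cZ_key a b
  obtain ⟨h2ne, h2v⟩ := cZ_key (a + b) 0
  obtain ⟨h3ne, h3v⟩ := cZ_key 0 (a + b)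
  rw [Nat.add_zero] at h2ne h2v
  rw [Nat.zero_add] at h3ne h3v
  set n : ℕ := 2 * (a + b + 1) with hn
  -- choose symmetry: C(n, 2(a+b)+1) = C(n, 1)
  have hsymm : n.choose (2 * (a + b) + 1) = n.choose (2 * 0 + 1) := by
    have : 2 * (a + b) + 1 = n - 1 := by omega
    rw [this, Nat.choose_symm (by omega : 1 ≤ n)]
    all_goals norm_num
  have hchoose1 : n.choose (2 * 0 + 1) = n := by simp
  -- equality of the two extreme valuations
  have heq : padicValRat 2 (cZ (a + b) 0 (a + b + 1)) =
      padicValRat 2 (cZ 0 (a + b) (a + b + 1)) := by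
    rw [h2v, h3v, hsymm]
    try push_cast
    try ring
  -- ν₂(c_{a+b,0}) ≤ ν₂(c_{a,b})
  have hle1 : padicValRat 2 (cZ (a + b) 0 (a + b + 1)) ≤
      padicValRat 2 (cZ a b (a + b + 1)) := by
    rw [h2v, h1v, hsymm, hchoose1]
    have := aux_val_le a b
    rw [← hn] at this
    omega
  -- ν₂(c_{a,b}) ≤ 0
  have hle2 : padicValRat 2 (cZ a b (a + b + 1)) ≤ 0 := by
    rw [h1v]
    have := aux_val_lt a b
    rw [← hn] at this
    omega
  exact ⟨h1ne, h2ne, h3ne, heq, hle1, hle2⟩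
end

section
/- For all integers a, b ≥ 0, setting n = a + b + 1, the rational number c_{a,b} is nonzero and its 2-adic valuation is given exactly by ν₂(c_{a,b}) = 2 − 2n + ν₂(n) + ν₂( C(2n−1, 2a) ). -/
namespace padicValRat

variable {p : ℕ} [Fact p.Prime]

theorem intCast_add_of_neg (z : ℤ) {q : ℚ} (hq : padicValRat p q < 0) :
    z + q ≠ 0 ∧ padicValRat p (z + q) = padicValRat p q := by
  have hq0 : q ≠ 0 := by rintro rfl; simp at hq
  have hsum : (z : ℚ) + q ≠ 0 := by
    intro h
    rw [eq_neg_of_add_eq_zero_right h, padicValRat.neg, padicValRat.of_int] at hq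
    omega
  refine ⟨hsum, ?_⟩
  obtain rfl | hz := eq_or_ne z 0
  · simp
  have hlt : padicValRat p q < padicValRat p z := by rw [padicValRat.of_int]; omega
  rw [add_comm, add_eq_of_lt (by rwa [add_comm]) hq0 (by exact_mod_cast hz) hlt]

end padicValRat

theorem padicValNat_choose_succ_succ_of_not_dvd {p n k : ℕ} [Fact p.Prime] (hk : k ≤ n)
    (hp : ¬p ∣ k + 1) :
    padicValNat p ((n + 1).choose (k + 1))
      = padicValNat p (n + 1) + padicValNat p (n.choose k) := by
  have h := congrArg (padicValNat p) (Nat.add_one_mul_choose_eq n k)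
  rwa [padicValNat.mul (by omega) (Nat.choose_pos hk).ne',
    padicValNat.mul (Nat.choose_pos (by omega)).ne' (by omega),
    padicValNat.eq_zero_of_not_dvd hp, add_zero, eq_comm] at h

theorem padicValNat_choose_lt {p n : ℕ} [hp : Fact p.Prime] (hn : n ≠ 0) (k : ℕ) :
    padicValNat p (n.choose k) < n := by
  rw [← Nat.factorization_def _ hp.out]
  exact Nat.factorization_choose_le_log.trans_lt (Nat.log_lt_self p hn)

theorem padicValRat_two_natCast_div_four_pow {m : ℕ} (hm : m ≠ 0) (r : ℕ) :
    padicValRat 2 ((m : ℚ) / 4 ^ r) = padicValNat 2 m - 2 * r := by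
  have h4 : (4 : ℚ) ^ r = ((2 : ℕ) : ℚ) ^ (2 * r) := by rw [pow_mul]; norm_num
  rw [padicValRat.div (by exact_mod_cast hm) (by positivity), h4, padicValRat.pow _,
    padicValRat.of_nat, padicValRat.self one_lt_two]
  push_cast
  ring

theorem cZ_eq (a b r : ℕ) :
    cZ a b r = 2 * (-1) ^ r *
      ((((2 * r).choose (2 * b + 2) - (2 * r).choose (2 * a + 1) : ℤ) : ℚ)
        + ((2 * r).choose (2 * a + 1) : ℚ) / 4 ^ r) := by
  have h4 : (2 : ℚ) ^ (-(2 * (r : ℤ))) = ((4 : ℚ) ^ r)⁻¹ := by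
    rw [zpow_neg, zpow_mul, zpow_natCast]; norm_num
  rw [cZ, h4]
  push_cast
  ring

theorem padicValRat_two_two_mul_neg_one_pow (r : ℕ) : padicValRat 2 (2 * (-1) ^ r) = 1 := by
  rw [padicValRat.mul two_ne_zero (by simp), padicValRat.pow _, padicValRat.neg,
    padicValRat.one, mul_zero, add_zero]
  exact padicValRat.self (p := 2) one_lt_two

/-- For all `a, b ≥ 0`, with `n = a + b + 1`, the number `c_{a,b}` is nonzero
and `ν₂(c_{a,b}) = 2 − 2n + ν₂(n) + ν₂(C(2n−1, 2a))`. -/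
theorem cZ_two_adic_valuation_formula (a b : ℕ) :
    cZ a b (a + b + 1) ≠ 0 ∧
    padicValRat 2 (cZ a b (a + b + 1)) =
      2 - 2 * ((a : ℤ) + b + 1) + (padicValNat 2 (a + b + 1) : ℤ)
        + (padicValNat 2 ((2 * (a + b + 1) - 1).choose (2 * a)) : ℤ) := by
  set n := a + b + 1
  have hchoose : padicValNat 2 ((2 * n).choose (2 * a + 1))
      = 1 + padicValNat 2 n + padicValNat 2 ((2 * n - 1).choose (2 * a)) := by
    have h := padicValNat_choose_succ_succ_of_not_dvd (p := 2) (n := 2 * n - 1) (k := 2 * a)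
      (by omega) (by omega)
    rwa [Nat.sub_add_cancel (by omega), padicValNat.mul two_ne_zero (by omega),
      padicValNat.self one_lt_two] at h
  have hfrac := padicValRat_two_natCast_div_four_pow
    (Nat.choose_pos (show 2 * a + 1 ≤ 2 * n by omega)).ne' n
  have hneg : padicValRat 2 (((2 * n).choose (2 * a + 1) : ℚ) / 4 ^ n) < 0 := by
    have := padicValNat_choose_lt (p := 2) (n := 2 * n) (by omega) (2 * a + 1)
    omega
  obtain ⟨hsum, hval⟩ := padicValRat.intCast_add_of_neg
    ((2 * n).choose (2 * b + 2) - (2 * n).choose (2 * a + 1)) hneg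
  have hunit : (2 : ℚ) * (-1) ^ n ≠ 0 := by simp
  rw [cZ_eq]
  refine ⟨mul_ne_zero hunit hsum, ?_⟩
  rw [padicValRat.mul hunit hsum, padicValRat_two_two_mul_neg_one_pow, hval, hfrac, hchoose]
  push_cast [n]
  ring
end

section
/- For all integers a, b ≥ 0 and every integer r with 1 ≤ r ≤ a + b + 1, one has c_{a,b}^r = Σ_{0≤α≤a, 0≤β≤b, α+β+1=r} c_{α,β}^r − Σ_{0≤α<a, 0≤β≤b, α+β+1=r} c_{β,α}^r + 2·(−1)^r·( 𝟙(a ≥ r) − 𝟙(b ≥ r) ), where 𝟙(A) equals 1 if the statement A is true and 0 otherwise. -/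
open Finset

theorem Finset.sum_filter_add_add_one_eq {M : Type*} [AddCommMonoid M] (f : ℕ → ℕ → M)
    (A b r : ℕ) :
    ∑ p ∈ (range A ×ˢ range (b + 1)).filter (fun p => p.1 + p.2 + 1 = r), f p.1 p.2 =
      ∑ α ∈ Ico (r - 1 - b) (min A r), f α (r - 1 - α) := by
  have hpairs : (range A ×ˢ range (b + 1)).filter (fun p => p.1 + p.2 + 1 = r) =
      (Ico (r - 1 - b) (min A r)).image (fun α => (α, r - 1 - α)) := by
    ext ⟨α, β⟩
    simp only [mem_filter, mem_product, mem_range, mem_image, mem_Ico, Prod.mk.injEq, lt_min_iff]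
    constructor
    · rintro ⟨⟨hα, hβ⟩, h⟩
      exact ⟨α, ⟨by omega, hα, by omega⟩, rfl, by omega⟩
    · rintro ⟨α, ⟨h₁, h₂, h₃⟩, rfl, rfl⟩
      exact ⟨⟨h₂, by omega⟩, by omega⟩
  rw [hpairs, sum_image fun x _ y _ h => (Prod.ext_iff.mp h).1]

theorem Nat.choose_two_mul_two_mul_sub_one_sub (r b : ℕ) :
    (2 * r).choose (2 * (r - 1 - b)) = (2 * r).choose (2 * b + 2) + if r ≤ b then 1 else 0 := by
  split_ifs with hrb
  · rw [show r - 1 - b = 0 by omega, Nat.choose_eq_zero_of_lt (by omega : 2 * r < 2 * b + 2)]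
    simp
  · rw [← Nat.choose_symm (by omega), add_zero]
    congr 1
    omega

theorem Nat.choose_two_mul_two_mul_sub_one_sub_add_two {r α : ℕ} (h : α < r) :
    (2 * r).choose (2 * (r - 1 - α) + 2) = (2 * r).choose (2 * α) := by
  rw [← Nat.choose_symm (by omega)]
  congr 1
  omega

theorem Nat.choose_two_mul_two_mul_sub_one_sub_add_one {r α : ℕ} (h : α < r) :
    (2 * r).choose (2 * (r - 1 - α) + 1) = (2 * r).choose (2 * α + 1) := by
  rw [← Nat.choose_symm (by omega)]
  congr 1
  omega

theorem cZ_of_le {a r : ℕ} (b : ℕ) (h : r ≤ a) :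
    cZ a b r = 2 * (-1) ^ r * ((2 * r).choose (2 * b + 2) : ℚ) := by
  rw [cZ, Nat.choose_eq_zero_of_lt (by omega : 2 * r < 2 * a + 1)]
  simp

theorem cZ_sub_one_sub_sub_cZ {a r : ℕ} (b : ℕ) (h : a < r) :
    cZ a (r - 1 - a) r - cZ a b r =
      2 * (-1) ^ r * ((2 * r).choose (2 * a) - (2 * r).choose (2 * b + 2) : ℚ) := by
  rw [cZ, cZ, Nat.choose_two_mul_two_mul_sub_one_sub_add_two h]
  ring

theorem cZ_sub_cZ_swap {α r : ℕ} (h : α < r) :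
    cZ α (r - 1 - α) r - cZ (r - 1 - α) α r =
      2 * (-1) ^ r * ((2 * r).choose (2 * α) - (2 * r).choose (2 * α + 2) : ℚ) := by
  rw [cZ, cZ, Nat.choose_two_mul_two_mul_sub_one_sub_add_two h,
    Nat.choose_two_mul_two_mul_sub_one_sub_add_one h]
  ring

theorem sum_Ico_cZ_sub_sum_Ico_cZ_swap {L N r : ℕ} (hLN : L ≤ N) (hN : N ≤ r) :
    ∑ α ∈ Ico L N, cZ α (r - 1 - α) r - ∑ α ∈ Ico L N, cZ (r - 1 - α) α r =
      2 * (-1) ^ r * ((2 * r).choose (2 * L) - (2 * r).choose (2 * N) : ℚ) := by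
  have htel := sum_Ico_sub (fun i => ((2 * r).choose (2 * i) : ℚ)) hLN
  rw [← sum_sub_distrib, sum_congr rfl fun α hα => cZ_sub_cZ_swap (by simp at hα; omega),
    ← mul_sum, ← neg_sub, ← htel, ← sum_neg_distrib]
  simp only [neg_sub, mul_add, mul_one]

theorem cZ_recursion_general (a b r : ℕ) (hr' : r ≤ a + b + 1) :
    cZ a b r =
      (∑ p ∈ (Finset.range (a + 1) ×ˢ Finset.range (b + 1)).filter
          (fun p => p.1 + p.2 + 1 = r), cZ p.1 p.2 r)
      - (∑ p ∈ (Finset.range a ×ˢ Finset.range (b + 1)).filter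
          (fun p => p.1 + p.2 + 1 = r), cZ p.2 p.1 r)
      + 2 * (-1) ^ r * ((if r ≤ a then (1 : ℚ) else 0) - (if r ≤ b then (1 : ℚ) else 0)) := by
  rw [sum_filter_add_add_one_eq (fun α β => cZ α β r),
    sum_filter_add_add_one_eq (fun α β => cZ β α r)]
  have hchoose := Nat.choose_two_mul_two_mul_sub_one_sub r b
  rcases lt_or_ge a r with har | hra
  · rw [min_eq_left (by omega : a + 1 ≤ r), min_eq_left har.le,
      sum_Ico_succ_top (by omega : r - 1 - b ≤ a), add_sub_right_comm,
      sum_Ico_cZ_sub_sum_Ico_cZ_swap (by omega) har.le, if_neg (by omega), hchoose]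
    push_cast
    linear_combination -(cZ_sub_one_sub_sub_cZ b har)
  · rw [min_eq_right (by omega : r ≤ a + 1), min_eq_right hra,
      sum_Ico_cZ_sub_sum_Ico_cZ_swap (by omega) le_rfl, if_pos hra, cZ_of_le b hra, hchoose,
      Nat.choose_self]
    push_cast
    ring

/-- For all `a, b ≥ 0` and `1 ≤ r ≤ a + b + 1`,
`c_{a,b}^r = Σ_{0≤α≤a, 0≤β≤b, α+β+1=r} c_{α,β}^r − Σ_{0≤α<a, 0≤β≤b, α+β+1=r} c_{β,α}^r
 + 2·(−1)^r·(𝟙(a ≥ r) − 𝟙(b ≥ r))`. -/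
theorem cZ_recursion (a b r : ℕ) (hr : 1 ≤ r) (hr' : r ≤ a + b + 1) :
    cZ a b r =
      (∑ p ∈ (Finset.range (a + 1) ×ˢ Finset.range (b + 1)).filter
          (fun p => p.1 + p.2 + 1 = r), cZ p.1 p.2 r)
      - (∑ p ∈ (Finset.range a ×ˢ Finset.range (b + 1)).filter
          (fun p => p.1 + p.2 + 1 = r), cZ p.2 p.1 r)
      + 2 * (-1) ^ r * ((if r ≤ a then (1 : ℚ) else 0) - (if r ≤ b then (1 : ℚ) else 0)) :=
  cZ_recursion_general a b r hr'
end

section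
/- For any polynomial P with complex coefficients satisfying P(0) = P(1) = 0, one has ∫₀¹ P(x) · cot(πx/2) dx = 2 · Σ_{k=1}^{⌊deg(P)/2⌋} (−1)^k · ( (1 − 2^{−2k}) · P^{(2k)}(1) + P^{(2k)}(0) ) · ζ(2k+1) / π^{2k+1}, where P^{(2k)} denotes the (2k)-th derivative of P, and the integral converges. -/
open Real MeasureTheory Polynomial
open Filter FourierTransform Topology

private lemma sum_sin_mul (x : ℝ) (N : ℕ) :
    (∑ n ∈ Finset.range N, Real.sin (((n : ℝ) + 1) * π * x)) * (2 * Real.sin (π * x / 2))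
      = Real.cos (π * x / 2) - Real.cos ((2 * (N : ℝ) + 1) * π * x / 2) := by
  induction N with
  | zero => simp [show (2 * (0 : ℝ) + 1) * π * x / 2 = π * x / 2 by ring]
  | succ N ih =>
    rw [Finset.sum_range_succ, add_mul, ih]
    have h := Real.cos_sub_cos ((2 * (N : ℝ) + 1) * π * x / 2)
      ((2 * ((N : ℝ) + 1) + 1) * π * x / 2)
    rw [show ((2 * (N : ℝ) + 1) * π * x / 2 + (2 * ((N : ℝ) + 1) + 1) * π * x / 2) / 2
          = ((N : ℝ) + 1) * π * x by ring,
        show ((2 * (N : ℝ) + 1) * π * x / 2 - (2 * ((N : ℝ) + 1) + 1) * π * x / 2) / 2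
          = -(π * x / 2) by ring,
        Real.sin_neg] at h
    push_cast
    nlinarith [h]

private lemma cosdiv_identity {x : ℝ} (hx : x ∈ Set.Icc (0:ℝ) 1) (N : ℕ) :
    Real.cos (π * x / 2) / Real.sin (π * x / 2)
      = 2 * (∑ n ∈ Finset.range N, Real.sin (((n : ℝ) + 1) * π * x))
        + Real.cos ((2 * (N : ℝ) + 1) * π * x / 2) / Real.sin (π * x / 2) := by
  obtain ⟨hx0, hx1⟩ := hx
  rcases eq_or_lt_of_le hx0 with h | h
  · simp [← h]
  · have hπ := Real.pi_pos
    have hs : 0 < Real.sin (π * x / 2) :=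
      Real.sin_pos_of_pos_of_lt_pi (by positivity) (by nlinarith)
    have key := sum_sin_mul x N
    rw [div_eq_iff hs.ne', add_mul, div_mul_cancel₀ _ hs.ne']
    linear_combination -key


private lemma hasDerivAt_negcosdiv {c : ℝ} (hc : c ≠ 0) (x : ℝ) :
    HasDerivAt (fun y : ℝ => -Real.cos (c * y) / c) (Real.sin (c * x)) x := by
  have h1 : HasDerivAt (fun y : ℝ => c * y) c x := by
    simpa using (hasDerivAt_id x).const_mul c
  have h2 := (Real.hasDerivAt_cos (c * x)).comp x h1
  have h3 := (h2.neg).div_const c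
  exact h3.congr_deriv (by field_simp)

private lemma hasDerivAt_sindiv {c : ℝ} (hc : c ≠ 0) (x : ℝ) :
    HasDerivAt (fun y : ℝ => Real.sin (c * y) / c) (Real.cos (c * x)) x := by
  have h1 : HasDerivAt (fun y : ℝ => c * y) c x := by
    simpa using (hasDerivAt_id x).const_mul c
  have h2 := (Real.hasDerivAt_sin (c * x)).comp x h1
  have h3 := h2.div_const c
  exact h3.congr_deriv (by field_simp)

private lemma poly_hasDerivAt (Q : Polynomial ℂ) (x : ℝ) :
    HasDerivAt (fun y : ℝ => Q.eval (y : ℂ)) ((Polynomial.derivative Q).eval (x : ℂ)) x :=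
  (Q.hasDerivAt (x : ℂ)).comp_ofReal

private lemma poly_cont (Q : Polynomial ℂ) : Continuous fun y : ℝ => Q.eval (y : ℂ) :=
  Q.continuous.comp Complex.continuous_ofReal

private lemma ibp_sin (Q : Polynomial ℂ) {c : ℝ} (hc : c ≠ 0) :
    ∫ x in (0:ℝ)..1, Q.eval (x : ℂ) * ((Real.sin (c * x) : ℝ) : ℂ)
      = (Q.eval 0 - Q.eval 1 * ((Real.cos c : ℝ) : ℂ)) / (c : ℂ)
        + (1 / (c : ℂ)) * ∫ x in (0:ℝ)..1,
            (Polynomial.derivative Q).eval (x : ℂ) * ((Real.cos (c * x) : ℝ) : ℂ) := by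
  have h := intervalIntegral.integral_mul_deriv_eq_deriv_mul
    (u := fun x : ℝ => Q.eval (x : ℂ))
    (u' := fun x : ℝ => (Polynomial.derivative Q).eval (x : ℂ))
    (v := fun x : ℝ => ((-Real.cos (c * x) / c : ℝ) : ℂ))
    (v' := fun x : ℝ => ((Real.sin (c * x) : ℝ) : ℂ))
    (a := 0) (b := 1)
    (fun x _ => poly_hasDerivAt Q x)
    (fun x _ => (hasDerivAt_negcosdiv hc x).ofReal_comp)
    ((poly_cont (Polynomial.derivative Q)).intervalIntegrable 0 1)
    ((Complex.continuous_ofReal.comp (by continuity)).intervalIntegrable 0 1)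
  rw [h]
  have e : (fun x : ℝ => (Polynomial.derivative Q).eval (x : ℂ) * ((-Real.cos (c * x) / c : ℝ) : ℂ))
      = fun x : ℝ => (-(1:ℂ) / c) * ((Polynomial.derivative Q).eval (x : ℂ) * ((Real.cos (c * x) : ℝ) : ℂ)) := by
    funext x; push_cast; ring
  rw [e, intervalIntegral.integral_const_mul]
  push_cast [mul_one, mul_zero, Real.cos_zero]
  ring

private lemma ibp_cos (Q : Polynomial ℂ) {c : ℝ} (hc : c ≠ 0) :
    ∫ x in (0:ℝ)..1, Q.eval (x : ℂ) * ((Real.cos (c * x) : ℝ) : ℂ)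
      = Q.eval 1 * ((Real.sin c : ℝ) : ℂ) / (c : ℂ)
        - (1 / (c : ℂ)) * ∫ x in (0:ℝ)..1,
            (Polynomial.derivative Q).eval (x : ℂ) * ((Real.sin (c * x) : ℝ) : ℂ) := by
  have h := intervalIntegral.integral_mul_deriv_eq_deriv_mul
    (u := fun x : ℝ => Q.eval (x : ℂ))
    (u' := fun x : ℝ => (Polynomial.derivative Q).eval (x : ℂ))
    (v := fun x : ℝ => ((Real.sin (c * x) / c : ℝ) : ℂ))
    (v' := fun x : ℝ => ((Real.cos (c * x) : ℝ) : ℂ))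
    (a := 0) (b := 1)
    (fun x _ => poly_hasDerivAt Q x)
    (fun x _ => (hasDerivAt_sindiv hc x).ofReal_comp)
    ((poly_cont (Polynomial.derivative Q)).intervalIntegrable 0 1)
    ((Complex.continuous_ofReal.comp (by continuity)).intervalIntegrable 0 1)
  rw [h]
  have e : (fun x : ℝ => (Polynomial.derivative Q).eval (x : ℂ) * ((Real.sin (c * x) / c : ℝ) : ℂ))
      = fun x : ℝ => ((1:ℂ) / c) * ((Polynomial.derivative Q).eval (x : ℂ) * ((Real.sin (c * x) : ℝ) : ℂ)) := by
    funext x; push_cast; ring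
  rw [e, intervalIntegral.integral_const_mul]
  push_cast [mul_one, mul_zero, Real.sin_zero]
  ring


private lemma Jrec (Q : Polynomial ℂ) (n : ℕ) :
    ∫ x in (0:ℝ)..1, Q.eval (x:ℂ) * ((Real.sin ((((n:ℝ)+1)*π) * x) : ℝ) : ℂ)
      = (Q.eval 0 - (-1:ℂ)^(n+1) * Q.eval 1) / ((((n:ℝ)+1)*π : ℝ) : ℂ)
        - (1 / ((((n:ℝ)+1)*π : ℝ) : ℂ))^2 *
          ∫ x in (0:ℝ)..1, (Polynomial.derivative (Polynomial.derivative Q)).eval (x:ℂ)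
            * ((Real.sin ((((n:ℝ)+1)*π) * x) : ℝ):ℂ) := by
  have hπ := Real.pi_pos
  have hc : (((n:ℝ)+1)*π) ≠ 0 := by positivity
  have hcos : Real.cos (((n:ℝ)+1)*π) = (-1:ℝ)^(n+1) := by
    have h' := Real.cos_nat_mul_pi_sub 0 (n+1)
    push_cast at h'
    simpa using h'
  have hsin : Real.sin (((n:ℝ)+1)*π) = 0 := by
    have h' := Real.sin_nat_mul_pi (n+1)
    push_cast at h'
    exact h'
  rw [ibp_sin Q hc, ibp_cos (Polynomial.derivative Q) hc, hcos, hsin]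
  push_cast
  ring

private lemma iter_two (Q : Polynomial ℂ) :
    Polynomial.derivative^[2] Q = Polynomial.derivative (Polynomial.derivative Q) := rfl

private lemma Jform : ∀ (K : ℕ) (Q : Polynomial ℂ), Q.natDegree ≤ 2*K+1 → ∀ n : ℕ,
    ∫ x in (0:ℝ)..1, Q.eval (x:ℂ) * ((Real.sin ((((n:ℝ)+1)*π) * x) : ℝ) : ℂ)
      = ∑ k ∈ Finset.range (K+1),
          (-1:ℂ)^k * ((Polynomial.derivative^[2*k] Q).eval 0
              - (-1:ℂ)^(n+1) * (Polynomial.derivative^[2*k] Q).eval 1)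
            / ((((n:ℝ)+1)*π : ℝ) : ℂ)^(2*k+1) := by
  intro K
  induction K with
  | zero =>
    intro Q hQ n
    have h2 : Polynomial.derivative (Polynomial.derivative Q) = 0 := by
      rw [← iter_two]
      exact Polynomial.iterate_derivative_eq_zero (by omega)
    rw [Jrec, h2]
    simp [Finset.sum_range_one]
  | succ K ih =>
    intro Q hQ n
    have hπ := Real.pi_pos
    have hc : ((((n:ℝ)+1)*π : ℝ) : ℂ) ≠ 0 := by
      simp only [ne_eq, Complex.ofReal_eq_zero]
      positivity
    have hdeg : (Polynomial.derivative (Polynomial.derivative Q)).natDegree ≤ 2*K+1 := by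
      have l1 := Polynomial.natDegree_derivative_le Q
      have l2 := Polynomial.natDegree_derivative_le (Polynomial.derivative Q)
      omega
    rw [Jrec, Finset.sum_range_succ' _ (K+1), ih _ hdeg n]
    have hterm : ∀ k ∈ Finset.range (K+1),
        (-1:ℂ)^(k+1) * ((Polynomial.derivative^[2*(k+1)] Q).eval 0
            - (-1:ℂ)^(n+1) * (Polynomial.derivative^[2*(k+1)] Q).eval 1)
          / ((((n:ℝ)+1)*π : ℝ) : ℂ)^(2*(k+1)+1)
        = -((1 / ((((n:ℝ)+1)*π : ℝ) : ℂ))^2 *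
            ((-1:ℂ)^k * ((Polynomial.derivative^[2*k] (Polynomial.derivative (Polynomial.derivative Q))).eval 0
              - (-1:ℂ)^(n+1) * (Polynomial.derivative^[2*k] (Polynomial.derivative (Polynomial.derivative Q))).eval 1)
            / ((((n:ℝ)+1)*π : ℝ) : ℂ)^(2*k+1))) := by
      intro k _
      have hiter : Polynomial.derivative^[2*(k+1)] Q
          = Polynomial.derivative^[2*k] (Polynomial.derivative (Polynomial.derivative Q)) := by
        rw [show 2*(k+1) = 2*k + 2 by ring, Function.iterate_add_apply, iter_two]
      rw [hiter]
      field_simp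
      ring
    rw [Finset.sum_congr rfl hterm, Finset.sum_neg_distrib, ← Finset.mul_sum]
    simp only [pow_zero, one_mul, Nat.mul_zero, Function.iterate_zero, id_eq, pow_one]
    ring


private lemma summable_g (s : ℕ) (hs : 2 ≤ s) :
    Summable (fun n : ℕ => 1 / ((n:ℝ)+1)^s) := by
  have h := (summable_one_div_nat_pow (p := s)).mpr (by omega)
  have h2 := (summable_nat_add_iff (f := fun n : ℕ => 1 / (n:ℝ)^s) 1).mpr h
  refine h2.congr fun n => ?_
  push_cast
  ring

private lemma alt_hasSum (s : ℕ) (hs : 2 ≤ s) :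
    HasSum (fun n : ℕ => (-1:ℝ)^n / ((n:ℝ)+1)^s)
      ((1 - 2 * ((2:ℝ)^s)⁻¹) * ∑' n : ℕ, 1 / ((n:ℝ)+1)^s) := by
  set g : ℕ → ℝ := fun n => 1 / ((n:ℝ)+1)^s with hgdef
  set Z : ℝ := ∑' n : ℕ, g n with hZ
  have hg : Summable g := summable_g s hs
  set f : ℕ → ℝ := fun n => (-1:ℝ)^n / ((n:ℝ)+1)^s with hfdef
  have hnorm : (fun n => ‖f n‖) = g := by
    funext n
    have habs : |(n:ℝ)+1| = (n:ℝ)+1 := abs_of_nonneg (by positivity)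
    simp [hfdef, hgdef, Real.norm_eq_abs, abs_div, abs_pow, habs]
  have hf : Summable f := Summable.of_norm (hnorm ▸ hg)
  have hinj2 : Function.Injective (fun k : ℕ => 2*k) := fun a b h => by dsimp at h; omega
  have hinj2' : Function.Injective (fun k : ℕ => 2*k+1) := fun a b h => by dsimp at h; omega
  have he_g : Summable (fun k : ℕ => g (2*k)) := hg.comp_injective hinj2
  have ho_g : Summable (fun k : ℕ => g (2*k+1)) := hg.comp_injective hinj2'
  have he_f : Summable (fun k : ℕ => f (2*k)) := hf.comp_injective hinj2
  have ho_f : Summable (fun k : ℕ => f (2*k+1)) := hf.comp_injective hinj2'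
  have eo : (fun k : ℕ => g (2*k+1)) = fun k : ℕ => ((2:ℝ)^s)⁻¹ * g k := by
    funext k
    simp only [hgdef]
    push_cast
    rw [show (2*(k:ℝ)+1)+1 = 2*((k:ℝ)+1) by ring, mul_pow]
    have h1 : ((k:ℝ)+1)^s ≠ 0 := by positivity
    field_simp
  have t1 : ∑' k : ℕ, g (2*k+1) = ((2:ℝ)^s)⁻¹ * Z := by rw [eo, tsum_mul_left]
  have tg : (∑' k : ℕ, g (2*k)) + ∑' k : ℕ, g (2*k+1) = Z := tsum_even_add_odd he_g ho_g
  have t0 : ∑' k : ℕ, g (2*k) = Z - ((2:ℝ)^s)⁻¹ * Z := by linarith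
  have ef : (fun k : ℕ => f (2*k)) = fun k : ℕ => g (2*k) := by
    funext k
    simp only [hfdef, hgdef, pow_mul, neg_one_sq, one_pow]
  have of : (fun k : ℕ => f (2*k+1)) = fun k : ℕ => -g (2*k+1) := by
    funext k
    simp only [hfdef, hgdef, pow_succ, pow_mul, neg_one_sq, one_pow, one_mul]
    ring
  have tf : ∑' k : ℕ, f k = (1 - 2 * ((2:ℝ)^s)⁻¹) * Z := by
    rw [← tsum_even_add_odd he_f ho_f, ef, of, tsum_neg, t0, t1]
    ring
  exact tf ▸ hf.hasSum


private lemma rl_cos (g : ℝ → ℂ) (hg : IntegrableOn g (Set.Ioc (0:ℝ) 1) volume)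
    (μ : ℕ → ℝ) (hμ : Tendsto μ atTop atTop) :
    Tendsto (fun N => ∫ x in Set.Ioc (0:ℝ) 1, g x * ((Real.cos (μ N * x) : ℝ) : ℂ))
      atTop (𝓝 0) := by
  have hπ := Real.pi_pos
  set f : ℝ → ℂ := (Set.Ioc (0:ℝ) 1).indicator g with hfdef
  have hf : Integrable f := hg.integrable_indicator measurableSet_Ioc
  set F : ℝ → ℂ := fun w => ∫ v : ℝ, 𝐞 (-(v * w)) • f v with hFdef
  have hF : Tendsto F (cocompact ℝ) (𝓝 0) := Real.tendsto_integral_exp_smul_cocompact f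
  have hFtop : Tendsto F atTop (𝓝 0) :=
    hF.mono_left (by rw [cocompact_eq_atBot_atTop]; exact le_sup_right)
  have hFbot : Tendsto F atBot (𝓝 0) :=
    hF.mono_left (by rw [cocompact_eq_atBot_atTop]; exact le_sup_left)
  have hdiv : Tendsto (fun N => μ N / (2*π)) atTop atTop := hμ.atTop_div_const (by positivity)
  have h1 : Tendsto (fun N => F (μ N / (2*π))) atTop (𝓝 0) := hFtop.comp hdiv
  have h2 : Tendsto (fun N => F (-(μ N / (2*π)))) atTop (𝓝 0) :=
    hFbot.comp (tendsto_neg_atBot_iff.mpr hdiv)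
  have key : ∀ N, ∫ x in Set.Ioc (0:ℝ) 1, g x * ((Real.cos (μ N * x) : ℝ) : ℂ)
      = (F (μ N / (2*π)) + F (-(μ N / (2*π)))) / 2 := by
    intro N
    set w : ℝ := μ N / (2*π) with hw
    have hI1 : Integrable (fun v : ℝ => 𝐞 (-(v * w)) • f v) :=
      by simpa [mul_comm] using (Real.fourierIntegral_convergent_iff w).2 hf
    have hI2 : Integrable (fun v : ℝ => 𝐞 (-(v * -w)) • f v) :=
      by simpa [mul_comm] using (Real.fourierIntegral_convergent_iff (-w)).2 hf
    have hsum : F w + F (-w) = ∫ v : ℝ, (𝐞 (-(v * w)) • f v + 𝐞 (-(v * -w)) • f v) := by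
      rw [integral_add hI1 hI2]
    have hpt : ∀ v : ℝ, 𝐞 (-(v * w)) • f v + 𝐞 (-(v * -w)) • f v
        = f v * ((Real.cos (μ N * v) : ℝ) : ℂ) * 2 := by
      intro v
      rw [Circle.smul_def, Circle.smul_def, Real.fourierChar_apply, Real.fourierChar_apply]
      have harg : 2 * π * -(v * w) = -(μ N * v) := by
        rw [hw]; field_simp
      have harg2 : 2 * π * -(v * -w) = μ N * v := by
        rw [hw]; field_simp
      rw [harg, harg2, smul_eq_mul, smul_eq_mul]
      have h2c := Complex.two_cos (x := ((μ N * v : ℝ) : ℂ))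
      push_cast at h2c ⊢
      linear_combination -((f v) * h2c)
    rw [hsum]
    simp_rw [hpt]
    have : (fun v : ℝ => f v * ((Real.cos (μ N * v) : ℝ) : ℂ) * 2)
        = fun v : ℝ => (Set.Ioc (0:ℝ) 1).indicator
            (fun x => g x * ((Real.cos (μ N * x) : ℝ) : ℂ) * 2) v := by
      funext v
      rw [hfdef]
      rw [Set.indicator_mul_left, Set.indicator_mul_left]
    rw [this, integral_indicator measurableSet_Ioc]
    rw [integral_mul_const]
    field_simp
  simp_rw [key]
  have := (h1.add h2).div_const (2:ℂ)
  simpa using this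


/-- For any complex polynomial `P` with `P(0) = P(1) = 0`, the integral
`∫₀¹ P(x) cot(πx/2) dx` converges and equals
`2 Σ_{k=1}^{⌊deg P/2⌋} (−1)^k ((1 − 2^{−2k}) P^{(2k)}(1) + P^{(2k)}(0)) ζ(2k+1)/π^{2k+1}`. -/
theorem integral_poly_cot (P : Polynomial ℂ) (h0 : P.eval 0 = 0) (h1 : P.eval 1 = 0) :
    IntervalIntegrable
      (fun x : ℝ => P.eval (x : ℂ) * (Real.cot (π * x / 2) : ℂ)) volume 0 1 ∧
    ∫ x in (0 : ℝ)..1, P.eval (x : ℂ) * (Real.cot (π * x / 2) : ℂ) =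
      2 * ∑ k ∈ Finset.Icc 1 (P.natDegree / 2),
        (-1 : ℂ) ^ k
          * ((1 - (2 : ℂ) ^ (-(2 * (k : ℤ)))) * (Polynomial.derivative^[2 * k] P).eval 1
              + (Polynomial.derivative^[2 * k] P).eval 0)
          * ((∑' n : ℕ, (1 : ℝ) / ((n : ℝ) + 1) ^ (2 * k + 1) : ℝ) : ℂ)
          / (π : ℂ) ^ (2 * k + 1) := by
  have hπ := Real.pi_pos
  set K := P.natDegree / 2 with hKdef
  set gg : ℝ → ℂ := fun x => P.eval (x:ℂ) * (((Real.sin (π*x/2))⁻¹ : ℝ) : ℂ) with hggdef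
  set rem : ℕ → ℝ → ℂ :=
    fun N x => P.eval (x:ℂ) *
      ((Real.cos ((2*(N:ℝ)+1)*π*x/2) / Real.sin (π*x/2) : ℝ) : ℂ) with hremdef
  have hremg : ∀ (N : ℕ) (x : ℝ),
      rem N x = gg x * ((Real.cos ((2*(N:ℝ)+1)*π*x/2) : ℝ) : ℂ) := by
    intro N x
    simp only [hremdef, hggdef]
    push_cast
    ring
  have hrem_eq_cot :
      (fun x : ℝ => P.eval (x:ℂ) * ((Real.cot (π * x / 2) : ℝ) : ℂ)) = rem 0 := by
    funext x
    simp only [hremdef, Real.cot_eq_cos_div_sin]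
    norm_num
  obtain ⟨Q, hPQ⟩ : (Polynomial.X : Polynomial ℂ) ∣ P :=
    Polynomial.X_dvd_iff.mpr (by rwa [Polynomial.coeff_zero_eq_eval_zero])
  obtain ⟨C, hC⟩ : ∃ C : ℝ, ∀ x ∈ Set.Icc (0:ℝ) 1, ‖Q.eval (x:ℂ)‖ ≤ C := by
    obtain ⟨C, hC⟩ := (isCompact_Icc (a := (0:ℝ)) (b := 1)).exists_bound_of_continuousOn
      (Continuous.continuousOn (Q.continuous.comp Complex.continuous_ofReal))
    exact ⟨C, hC⟩
  have hC0 : 0 ≤ C := le_trans (norm_nonneg _) (hC 0 (by norm_num))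
  -- bound for gg
  have hgbd : ∀ x ∈ Set.Icc (0:ℝ) 1, ‖gg x‖ ≤ C := by
    intro x hx
    obtain ⟨hx0, hx1⟩ := hx
    rcases eq_or_lt_of_le hx0 with h | h
    · simp only [hggdef, ← h]
      simpa [hPQ] using hC0
    · have hsx : x ≤ Real.sin (π*x/2) := by
        have h2 := Real.mul_le_sin (x := π*x/2) (by positivity) (by nlinarith)
        calc x = 2/π*(π*x/2) := by field_simp
          _ ≤ Real.sin (π*x/2) := h2
      have hs : 0 < Real.sin (π*x/2) := lt_of_lt_of_le h hsx
      have e1 : ‖P.eval (x:ℂ)‖ ≤ C * x := by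
        rw [hPQ, Polynomial.eval_mul, Polynomial.eval_X, norm_mul, Complex.norm_real,
          Real.norm_eq_abs, abs_of_pos h]
        calc x * ‖Q.eval (x:ℂ)‖ ≤ x * C :=
              mul_le_mul_of_nonneg_left (hC x ⟨hx0, hx1⟩) h.le
          _ = C * x := by ring
      have e2 : (Real.sin (π*x/2))⁻¹ ≤ x⁻¹ := by
        rw [← one_div, ← one_div]
        exact one_div_le_one_div_of_le h hsx
      simp only [hggdef, norm_mul, Complex.norm_real, Real.norm_eq_abs,
        abs_of_pos (inv_pos.mpr hs)]
      calc ‖P.eval (x:ℂ)‖ * (Real.sin (π*x/2))⁻¹ ≤ (C*x) * x⁻¹ :=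
            mul_le_mul e1 e2 (by positivity) (by positivity)
        _ = C := by field_simp
  -- measurability
  have hmg : Measurable gg := by
    apply Measurable.mul ((P.continuous.comp Complex.continuous_ofReal)).measurable
    exact Complex.measurable_ofReal.comp
      ((Real.continuous_sin.comp ((continuous_const.mul continuous_id).div_const 2)).measurable.inv)
  have hgint : IntegrableOn gg (Set.Ioc (0:ℝ) 1) volume := by
    apply Measure.integrableOn_of_bounded (M := C) measure_Ioc_lt_top.ne
      hmg.aestronglyMeasurable
    rw [ae_restrict_iff' measurableSet_Ioc]
    exact Eventually.of_forall fun x hx => hgbd x (Set.Ioc_subset_Icc_self hx)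
  have hrembd : ∀ (N : ℕ), ∀ x ∈ Set.Icc (0:ℝ) 1, ‖rem N x‖ ≤ C := by
    intro N x hx
    rw [hremg, norm_mul]
    calc ‖gg x‖ * ‖((Real.cos ((2*(N:ℝ)+1)*π*x/2) : ℝ) : ℂ)‖ ≤ C * 1 := by
          apply mul_le_mul (hgbd x hx) _ (norm_nonneg _) hC0
          rw [Complex.norm_real, Real.norm_eq_abs]
          exact Real.abs_cos_le_one _
      _ = C := mul_one C
  have hmrem : ∀ N : ℕ, Measurable (rem N) := by
    intro N
    apply Measurable.mul ((P.continuous.comp Complex.continuous_ofReal)).measurable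
    exact Complex.measurable_ofReal.comp
      (((Real.continuous_cos.comp ((continuous_const.mul continuous_id).div_const 2)).measurable).div
        ((Real.continuous_sin.comp ((continuous_const.mul continuous_id).div_const 2)).measurable))
  have hint : ∀ N : ℕ, IntervalIntegrable (rem N) volume 0 1 := by
    intro N
    rw [intervalIntegrable_iff_integrableOn_Ioc_of_le zero_le_one]
    apply Measure.integrableOn_of_bounded (M := C) measure_Ioc_lt_top.ne
      (hmrem N).aestronglyMeasurable
    rw [ae_restrict_iff' measurableSet_Ioc]
    exact Eventually.of_forall fun x hx => hrembd N x (Set.Ioc_subset_Icc_self hx)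
  refine ⟨by rw [hrem_eq_cot]; exact hint 0, ?_⟩
  -- splitting the integral
  have hcontn : ∀ n : ℕ, Continuous
      (fun x : ℝ => P.eval (x:ℂ) * ((Real.sin ((((n:ℝ)+1)*π) * x) : ℝ) : ℂ)) := by
    intro n
    exact (P.continuous.comp Complex.continuous_ofReal).mul
      (Complex.continuous_ofReal.comp (Real.continuous_sin.comp (continuous_const.mul continuous_id)))
  have hsplit : ∀ N : ℕ, ∫ x in (0:ℝ)..1, rem 0 x
      = 2 * ∑ n ∈ Finset.range N,
          (∫ x in (0:ℝ)..1, P.eval (x:ℂ) * ((Real.sin ((((n:ℝ)+1)*π) * x) : ℝ) : ℂ))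
        + ∫ x in (0:ℝ)..1, rem N x := by
    intro N
    have hptid : Set.EqOn (rem 0)
        (fun x => (2:ℂ) * (∑ n ∈ Finset.range N,
            P.eval (x:ℂ) * ((Real.sin ((((n:ℝ)+1)*π) * x) : ℝ) : ℂ)) + rem N x)
        (Set.uIcc (0:ℝ) 1) := by
      intro x hx
      rw [Set.uIcc_of_le zero_le_one] at hx
      have hid := cosdiv_identity hx N
      simp only [hremdef]
      have h00 : (2*((0:ℕ):ℝ)+1)*π*x/2 = π*x/2 := by norm_num
      have harg : ∀ n : ℕ, ((n:ℝ)+1)*π*x = (((n:ℝ)+1)*π)*x := fun n => by ring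
      rw [h00, hid]
      push_cast
      have hdist : ∀ (a c : ℂ) (s : Finset ℕ) (f : ℕ → ℂ),
          a * (2 * (∑ n ∈ s, f n) + c) = 2 * (∑ n ∈ s, a * f n) + a * c := by
        intro a c s f
        rw [← Finset.mul_sum]
        ring
      exact hdist _ _ _ _
    rw [intervalIntegral.integral_congr hptid]
    rw [intervalIntegral.integral_add (f := fun x : ℝ => (2:ℂ) * ∑ n ∈ Finset.range N,
        P.eval (x:ℂ) * ((Real.sin ((((n:ℝ)+1)*π) * x) : ℝ) : ℂ))
      (((continuous_const.mul (continuous_finset_sum _ (fun n _ => hcontn n)))).intervalIntegrable 0 1)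
      (hint N)]
    rw [intervalIntegral.integral_const_mul,
      intervalIntegral.integral_finset_sum (fun n _ => (hcontn n).intervalIntegrable 0 1)]
  -- the closed form for each n
  have hJ : ∀ n : ℕ, ∫ x in (0:ℝ)..1, P.eval (x:ℂ) * ((Real.sin ((((n:ℝ)+1)*π) * x) : ℝ) : ℂ)
      = ∑ k ∈ Finset.Icc 1 K,
          (-1:ℂ)^k * ((Polynomial.derivative^[2*k] P).eval 0
            - (-1:ℂ)^(n+1) * (Polynomial.derivative^[2*k] P).eval 1)
          / ((((n:ℝ)+1)*π : ℝ) : ℂ)^(2*k+1) := by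
    intro n
    rw [Jform K P (by omega) n]
    have hmem : (0:ℕ) ∈ Finset.range (K+1) := by simp
    rw [← Finset.add_sum_erase _ _ hmem]
    have herase : (Finset.range (K+1)).erase 0 = Finset.Icc 1 K := by
      ext m
      simp only [Finset.mem_erase, Finset.mem_range, Finset.mem_Icc]
      omega
    rw [herase]
    simp [h0, h1]
  -- swap the sums
  have hswap : ∀ N : ℕ, (2:ℂ) * ∑ n ∈ Finset.range N,
        (∫ x in (0:ℝ)..1, P.eval (x:ℂ) * ((Real.sin ((((n:ℝ)+1)*π) * x) : ℝ) : ℂ))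
      = ∑ k ∈ Finset.Icc 1 K, ((-1:ℂ)^k * 2 / (π:ℂ)^(2*k+1)) *
          ((Polynomial.derivative^[2*k] P).eval 0 *
              ((∑ n ∈ Finset.range N, 1/((n:ℝ)+1)^(2*k+1) : ℝ) : ℂ)
            + (Polynomial.derivative^[2*k] P).eval 1 *
              ((∑ n ∈ Finset.range N, (-1:ℝ)^n/((n:ℝ)+1)^(2*k+1) : ℝ) : ℂ)) := by
    intro N
    rw [Finset.sum_congr rfl (fun n _ => hJ n), Finset.sum_comm, Finset.mul_sum]
    apply Finset.sum_congr rfl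
    intro k _
    rw [Complex.ofReal_sum, Complex.ofReal_sum, Finset.mul_sum, Finset.mul_sum, Finset.mul_sum,
      ← Finset.sum_add_distrib, Finset.mul_sum]
    apply Finset.sum_congr rfl
    intro n _
    have hne : ((n:ℂ)+1) ≠ 0 := by
      have h' := Nat.cast_add_one_ne_zero (R := ℂ) n
      push_cast at h'
      exact h'
    have hπc : (π:ℂ) ≠ 0 := by
      simp only [ne_eq, Complex.ofReal_eq_zero]
      exact hπ.ne'
    push_cast
    rw [mul_pow]
    have hp1 : ((n:ℂ)+1)^(2*k+1) ≠ 0 := pow_ne_zero _ hne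
    have hp2 : (π:ℂ)^(2*k+1) ≠ 0 := pow_ne_zero _ hπc
    field_simp
    ring
  -- limits
  have htend : Tendsto (fun N : ℕ => (2:ℂ) * ∑ n ∈ Finset.range N,
        (∫ x in (0:ℝ)..1, P.eval (x:ℂ) * ((Real.sin ((((n:ℝ)+1)*π) * x) : ℝ) : ℂ)))
      atTop (𝓝 (∑ k ∈ Finset.Icc 1 K, ((-1:ℂ)^k * 2 / (π:ℂ)^(2*k+1)) *
        ((Polynomial.derivative^[2*k] P).eval 0 *
            ((∑' n : ℕ, 1/((n:ℝ)+1)^(2*k+1) : ℝ) : ℂ)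
          + (Polynomial.derivative^[2*k] P).eval 1 *
            (((1 - 2 * ((2:ℝ)^(2*k+1))⁻¹) * ∑' n : ℕ, 1/((n:ℝ)+1)^(2*k+1) : ℝ) : ℂ)))) := by
    apply Tendsto.congr (fun N => (hswap N).symm)
    apply tendsto_finset_sum
    intro k hk
    have hs2 : 2 ≤ 2*k+1 := by
      have := (Finset.mem_Icc.mp hk).1
      omega
    have hσ := (summable_g (2*k+1) hs2).hasSum.tendsto_sum_nat
    have hτ := (alt_hasSum (2*k+1) hs2).tendsto_sum_nat
    have hσc := (Complex.continuous_ofReal.tendsto _).comp hσ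
    have hτc := (Complex.continuous_ofReal.tendsto _).comp hτ
    exact (((hσc.const_mul _).add (hτc.const_mul _)).const_mul _)
  -- remainder tends to zero
  have hμt : Tendsto (fun N : ℕ => (2*(N:ℝ)+1)*π/2) atTop atTop := by
    have h1 : Tendsto (fun N : ℕ => (N:ℝ)) atTop atTop := tendsto_natCast_atTop_atTop
    have h2 := tendsto_atTop_add_const_right atTop (π/2) (h1.atTop_mul_const hπ)
    exact h2.congr fun N => by ring
  have hremtend : Tendsto (fun N => ∫ x in (0:ℝ)..1, rem N x) atTop (𝓝 0) := by
    have hrl := rl_cos gg hgint (fun N : ℕ => (2*(N:ℝ)+1)*π/2) hμt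
    apply hrl.congr
    intro N
    rw [intervalIntegral.integral_of_le zero_le_one]
    have hpt : ∀ x : ℝ, gg x * ((Real.cos ((2*(N:ℝ)+1)*π/2 * x) : ℝ) : ℂ) = rem N x := by
      intro x
      rw [hremg N x, show (2*(N:ℝ)+1)*π/2*x = (2*(N:ℝ)+1)*π*x/2 by ring]
    simp_rw [hpt]
  -- conclude
  have hlim2 : Tendsto (fun N : ℕ => (2:ℂ) * ∑ n ∈ Finset.range N,
        (∫ x in (0:ℝ)..1, P.eval (x:ℂ) * ((Real.sin ((((n:ℝ)+1)*π) * x) : ℝ) : ℂ)))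
      atTop (𝓝 (∫ x in (0:ℝ)..1, rem 0 x)) := by
    have heq2 : ∀ N : ℕ, (∫ x in (0:ℝ)..1, rem 0 x) - (∫ x in (0:ℝ)..1, rem N x)
        = (2:ℂ) * ∑ n ∈ Finset.range N,
            (∫ x in (0:ℝ)..1, P.eval (x:ℂ) * ((Real.sin ((((n:ℝ)+1)*π) * x) : ℝ) : ℂ)) := by
      intro N
      rw [hsplit N]
      ring
    have := (tendsto_const_nhds (x := ∫ x in (0:ℝ)..1, rem 0 x)
      (f := atTop (α := ℕ))).sub hremtend
    rw [sub_zero] at this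
    exact this.congr heq2
  have hfinal := tendsto_nhds_unique hlim2 htend
  rw [hrem_eq_cot, hfinal, Finset.mul_sum]
  apply Finset.sum_congr rfl
  intro k hk
  have h2k : (2:ℂ)^(-(2*(k:ℤ))) = ((2:ℂ)^(2*k : ℕ))⁻¹ := by
    rw [zpow_neg]
    norm_cast
  rw [h2k]
  have h2ne : ((2:ℂ)^(2*k : ℕ)) ≠ 0 := by norm_num
  push_cast
  field_simp
  ring
end

section
/- For every integer r ≥ 1 and every real number x with |x| ≤ 1, one has arcsin(x)^{2r} / (2r)! = 4^{−r} · Σ_{n=1}^{∞} ( 4^n / (n² · C(2n,n)) ) · x^{2n} · Σ_{0 < n₁ < n₂ < ⋯ < n_{r−1} < n} 1/(n₁² n₂² ⋯ n_{r−1}²), where the inner sum (over strictly increasing (r−1)-tuples of positive integers below n) is interpreted as 1 when r = 1, and the series converges. -/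
open Real

/-- The inner multiple sum `Σ_{0 < n₁ < ⋯ < n_{r−1} < n} 1/(n₁² ⋯ n_{r−1}²)`
(interpreted as `1` when `r = 1`). -/
noncomputable def innerSum (r n : ℕ) : ℝ :=
  ∑' g : {g : Fin (r - 1) → ℕ // StrictMono g ∧ (∀ i, 0 < g i) ∧ ∀ i, g i < n},
    ∏ i : Fin (r - 1), (1 : ℝ) / ((g.1 i : ℝ) ^ 2)

/-- The `n`-th term `(4^n/(n² C(2n,n))) x^{2n} Σ_{n₁<⋯<n_{r−1}<n} 1/(n₁²⋯n_{r−1}²)`. -/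
noncomputable def arcsinTerm (r : ℕ) (x : ℝ) (n : ℕ) : ℝ :=
  (4 : ℝ) ^ n / ((n : ℝ) ^ 2 * ((2 * n).choose n : ℝ)) * x ^ (2 * n) * innerSum r n

namespace ArcsinAux

open Filter MeasureTheory intervalIntegral Set Finset

/-! ### Coefficients -/

noncomputable def aa (n : ℕ) : ℝ := (4 : ℝ) ^ n / ((n : ℝ) ^ 2 * (n.centralBinom : ℝ))
noncomputable def ee (n : ℕ) : ℝ := (4 : ℝ) ^ n / (n.centralBinom : ℝ)
noncomputable def dd (k : ℕ) : ℝ := (4 : ℝ) ^ k / ((2 * (k : ℝ) + 1) * (k.centralBinom : ℝ))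
noncomputable def cc (m n : ℕ) : ℝ :=
  if m < n then (m.centralBinom : ℝ) / 4 ^ (m + 1) * aa n else 0
noncomputable def bb (r n : ℕ) : ℝ := ((4 : ℝ) ^ r)⁻¹ * aa n * innerSum r n

lemma cB_pos (n : ℕ) : (0 : ℝ) < (n.centralBinom : ℝ) := by
  exact_mod_cast n.centralBinom_pos

lemma cB_ne (n : ℕ) : (n.centralBinom : ℝ) ≠ 0 := (cB_pos n).ne'

lemma cB_succ (n : ℕ) :
    ((n : ℝ) + 1) * ((n + 1).centralBinom : ℝ) = 2 * (2 * n + 1) * (n.centralBinom : ℝ) := by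
  have h := congrArg (fun k : ℕ => (k : ℝ)) (Nat.succ_mul_centralBinom_succ n)
  push_cast at h
  push_cast
  linarith

lemma cB_succ_div (n : ℕ) :
    ((n + 1).centralBinom : ℝ) = 2 * (2 * n + 1) * (n.centralBinom : ℝ) / ((n : ℝ) + 1) := by
  rw [eq_div_iff (by positivity)]
  linarith [cB_succ n]

lemma aa_nonneg (n : ℕ) : 0 ≤ aa n := by unfold aa; positivity
lemma ee_nonneg (n : ℕ) : 0 ≤ ee n := by unfold ee; positivity
lemma dd_nonneg (k : ℕ) : 0 ≤ dd k := by unfold dd; positivity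
lemma cc_nonneg (m n : ℕ) : 0 ≤ cc m n := by
  unfold cc; split
  · exact mul_nonneg (by positivity) (aa_nonneg n)
  · exact le_refl 0

lemma key16 : ∀ n : ℕ, 1 ≤ n → (16 : ℝ) ^ n ≤ 4 * n * ((n.centralBinom : ℝ)) ^ 2 := by
  intro n hn
  induction n with
  | zero => omega
  | succ n ih =>
    rcases Nat.lt_or_ge 1 (n + 1) with h1 | h1
    · have hn' : 1 ≤ n := by omega
      have ih' := ih hn'
      have hc := cB_succ n
      have hC := cB_pos n
      have hpos : (0 : ℝ) < (n : ℝ) + 1 := by positivity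
      have h2 : ((n : ℝ) + 1) * ((16 : ℝ) ^ (n + 1))
          ≤ ((n : ℝ) + 1) * (4 * ((n : ℝ) + 1) * (((n + 1).centralBinom : ℝ)) ^ 2) := by
        have e1 : ((n : ℝ) + 1) * (4 * ((n : ℝ) + 1) * (((n + 1).centralBinom : ℝ)) ^ 2)
            = 4 * (((n : ℝ) + 1) * ((n + 1).centralBinom : ℝ)) ^ 2 := by ring
        rw [e1, hc]
        have e2 : ((n : ℝ) + 1) * (16 : ℝ) ^ (n + 1) = 16 * ((n : ℝ) + 1) * (16 : ℝ) ^ n := by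
          ring
        rw [e2]
        have hkey : 4 * (n : ℝ) * ((n : ℝ) + 1) ≤ (2 * (n : ℝ) + 1) ^ 2 := by nlinarith
        nlinarith [mul_le_mul_of_nonneg_left ih'
            (show (0 : ℝ) ≤ 16 * ((n : ℝ) + 1) by positivity),
          mul_le_mul_of_nonneg_left hkey
            (show (0 : ℝ) ≤ 16 * ((n.centralBinom : ℝ)) ^ 2 by positivity)]
      have := le_of_mul_le_mul_left h2 hpos
      push_cast
      linarith
    · have : n = 0 := by omega
      subst this
      norm_num [Nat.centralBinom]

lemma ee_sq (n : ℕ) : (ee n) ^ 2 ≤ 4 * n + 4 := by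
  rcases Nat.eq_zero_or_pos n with rfl | hn
  · norm_num [ee, Nat.centralBinom_zero]
  · have h := key16 n hn
    have hC := cB_pos n
    unfold ee
    rw [div_pow, div_le_iff₀ (by positivity)]
    have e1 : ((4 : ℝ) ^ n) ^ 2 = (16 : ℝ) ^ n := by
      rw [← pow_mul, mul_comm, pow_mul]; norm_num
    rw [e1]
    nlinarith [sq_nonneg ((n.centralBinom : ℝ))]

lemma ee_le (n : ℕ) : ee n ≤ 2 * n + 2 := by
  nlinarith [ee_sq n, ee_nonneg n, Nat.cast_nonneg (α := ℝ) n]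

lemma aa_ee (n : ℕ) : aa n = ee n / (n : ℝ) ^ 2 := by
  unfold aa ee; rw [div_div]; ring_nf

lemma summable_aa : Summable (fun n : ℕ => aa (n + 1)) := by
  have h0 : Summable (fun n : ℕ => (1 : ℝ) / (n : ℝ) ^ ((3 : ℝ) / 2)) :=
    Real.summable_one_div_nat_rpow.mpr (by norm_num)
  have h1 := (summable_nat_add_iff 1).mpr h0
  have hp : Summable (fun n : ℕ => 3 * ((1 : ℝ) / ((n : ℝ) + 1) ^ ((3 : ℝ) / 2))) := by
    refine (h1.mul_left 3).congr fun n => ?_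
    push_cast
    ring_nf
  apply Summable.of_nonneg_of_le (fun n => aa_nonneg _) ?_ hp
  intro n
  have hsq := ee_sq (n + 1)
  have hee0 := ee_nonneg (n + 1)
  have h1' : ee (n + 1) ≤ 3 * Real.sqrt ((n : ℝ) + 1) := by
    have h2 : (ee (n + 1)) ^ 2 ≤ (3 * Real.sqrt ((n : ℝ) + 1)) ^ 2 := by
      rw [mul_pow, Real.sq_sqrt (by positivity)]
      push_cast at hsq
      nlinarith
    calc ee (n + 1) = Real.sqrt ((ee (n + 1)) ^ 2) := (Real.sqrt_sq hee0).symm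
      _ ≤ Real.sqrt ((3 * Real.sqrt ((n : ℝ) + 1)) ^ 2) := Real.sqrt_le_sqrt h2
      _ = 3 * Real.sqrt ((n : ℝ) + 1) := Real.sqrt_sq (by positivity)
  have haa : aa (n + 1) = ee (n + 1) / ((n : ℝ) + 1) ^ 2 := by
    rw [aa_ee]; push_cast; ring_nf
  rw [haa, div_le_iff₀ (by positivity)]
  have hr : (1 : ℝ) / ((n : ℝ) + 1) ^ ((3 : ℝ) / 2) * ((n : ℝ) + 1) ^ 2
      = Real.sqrt ((n : ℝ) + 1) := by
    rw [Real.sqrt_eq_rpow, ← Real.rpow_natCast ((n : ℝ) + 1) 2, one_div,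
      ← Real.rpow_neg (by positivity), ← Real.rpow_add (by positivity)]
    norm_num
  calc ee (n + 1) ≤ 3 * Real.sqrt ((n : ℝ) + 1) := h1'
    _ = 3 * ((1 : ℝ) / ((n : ℝ) + 1) ^ ((3 : ℝ) / 2)) * ((n : ℝ) + 1) ^ 2 := by
        rw [mul_assoc, hr]

/-! ### innerSum -/

section InnerSum

abbrev Idx (k n : ℕ) := {g : Fin k → ℕ // StrictMono g ∧ (∀ i, 0 < g i) ∧ ∀ i, g i < n}

instance (k n : ℕ) : Finite (Idx k n) := by
  apply Finite.of_injective (fun g : Idx k n => fun i => (⟨g.1 i, g.2.2.2 i⟩ : Fin n))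
  intro g h hgh
  exact Subtype.ext (funext fun i => congrArg Fin.val (congrFun hgh i))

lemma innerSum_eq (r n : ℕ) :
    innerSum r n = ∑' g : Idx (r - 1) n, ∏ i : Fin (r - 1), (1 : ℝ) / ((g.1 i : ℝ) ^ 2) := rfl

lemma innerSum_one (n : ℕ) : innerSum 1 n = 1 := by
  have el : Idx 0 n :=
    ⟨fun i => i.elim0, by intro a b h; exact a.elim0, fun i => i.elim0, fun i => i.elim0⟩
  rw [innerSum_eq]
  rw [tsum_eq_single el (fun b hb => absurd (Subtype.ext (funext fun i => i.elim0)) hb)]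
  simp

lemma innerSum_nonneg (r n : ℕ) : 0 ≤ innerSum r n :=
  tsum_nonneg fun g => Finset.prod_nonneg fun i _ => by positivity

lemma snoc_strictMono {k : ℕ} {f : Fin k → ℕ} {m : ℕ} (hf : StrictMono f)
    (hm : ∀ i, f i < m) : StrictMono (Fin.snoc f m : Fin (k + 1) → ℕ) := by
  intro i j hij
  rcases Fin.eq_castSucc_or_eq_last j with ⟨j', rfl⟩ | rfl
  · rcases Fin.eq_castSucc_or_eq_last i with ⟨i', rfl⟩ | rfl
    · rw [Fin.snoc_castSucc, Fin.snoc_castSucc]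
      exact hf (Fin.castSucc_lt_castSucc_iff.mp hij)
    · exact absurd (hij.trans (Fin.castSucc_lt_last j')) (lt_irrefl _)
  · rcases Fin.eq_castSucc_or_eq_last i with ⟨i', rfl⟩ | rfl
    · rw [Fin.snoc_castSucc, Fin.snoc_last]; exact hm i'
    · exact absurd hij (lt_irrefl _)

lemma innerSum_rec (s n : ℕ) :
    innerSum (s + 2) n = ∑ m ∈ Finset.Ioo 0 n, (1 / (m : ℝ) ^ 2) * innerSum (s + 1) m := by
  classical
  have hItype : innerSum (s + 2) n
      = ∑' g : Idx (s + 1) n, ∏ i : Fin (s + 1), (1 : ℝ) / ((g.1 i : ℝ) ^ 2) := rfl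
  let F : (Σ m : ↥(Finset.Ioo 0 n), Idx s (m.1 : ℕ)) → Idx (s + 1) n := fun p =>
    ⟨Fin.snoc p.2.1 (p.1.1 : ℕ),
      snoc_strictMono p.2.2.1 p.2.2.2.2,
      fun i => by
        rcases Fin.eq_castSucc_or_eq_last i with ⟨i', rfl⟩ | rfl
        · rw [Fin.snoc_castSucc]; exact p.2.2.2.1 i'
        · rw [Fin.snoc_last]; exact (Finset.mem_Ioo.mp p.1.2).1,
      fun i => by
        rcases Fin.eq_castSucc_or_eq_last i with ⟨i', rfl⟩ | rfl
        · rw [Fin.snoc_castSucc]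
          exact (p.2.2.2.2 i').trans (Finset.mem_Ioo.mp p.1.2).2
        · rw [Fin.snoc_last]; exact (Finset.mem_Ioo.mp p.1.2).2⟩
  have hFbij : Function.Bijective F := by
    constructor
    · rintro ⟨⟨m, hm⟩, g, hg⟩ ⟨⟨m', hm'⟩, g', hg'⟩ h
      have hval := congrArg Subtype.val h
      have h1 : m = m' := by
        have := congrFun hval (Fin.last s)
        simpa [F, Fin.snoc_last] using this
      subst h1
      have h2 : g = g' := funext fun i => by
        have := congrFun hval (Fin.castSucc i)
        simpa [F, Fin.snoc_castSucc] using this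
      subst h2
      rfl
    · rintro ⟨g, hsm, hpos, hlt⟩
      refine ⟨⟨⟨g (Fin.last s), Finset.mem_Ioo.mpr ⟨hpos _, hlt _⟩⟩,
        ⟨fun i => g (Fin.castSucc i),
          fun i j hij => hsm (Fin.castSucc_lt_castSucc_iff.mpr hij),
          fun i => hpos _, fun i => hsm (Fin.castSucc_lt_last i)⟩⟩, ?_⟩
      exact Subtype.ext (Fin.snoc_init_self g)
  rw [hItype, ← (Equiv.ofBijective F hFbij).tsum_eq]
  rw [Summable.tsum_sigma' (fun b => Summable.of_finite) Summable.of_finite]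
  have hstep : ∀ m : ↥(Finset.Ioo 0 n),
      (∑' g : Idx s (m.1 : ℕ), ∏ i : Fin (s + 1), (1 : ℝ) / (((F ⟨m, g⟩).1 i : ℝ) ^ 2))
        = (1 / ((m.1 : ℕ) : ℝ) ^ 2) * innerSum (s + 1) (m.1 : ℕ) := by
    intro m
    have hprod : ∀ g : Idx s (m.1 : ℕ),
        (∏ i : Fin (s + 1), (1 : ℝ) / (((F ⟨m, g⟩).1 i : ℝ) ^ 2))
          = (∏ i : Fin s, (1 : ℝ) / ((g.1 i : ℝ) ^ 2)) * (1 / ((m.1 : ℕ) : ℝ) ^ 2) := by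
      intro g
      rw [Fin.prod_univ_castSucc]
      congr 1
      · exact Finset.prod_congr rfl fun i _ => by
          simp only [F, Fin.snoc_castSucc]
      · simp only [F, Fin.snoc_last]
    calc (∑' g : Idx s (m.1 : ℕ), ∏ i : Fin (s + 1), (1 : ℝ) / (((F ⟨m, g⟩).1 i : ℝ) ^ 2))
        = ∑' g : Idx s (m.1 : ℕ),
            (∏ i : Fin s, (1 : ℝ) / ((g.1 i : ℝ) ^ 2)) * (1 / ((m.1 : ℕ) : ℝ) ^ 2) :=
          tsum_congr hprod
      _ = (∑' g : Idx s (m.1 : ℕ), ∏ i : Fin s, (1 : ℝ) / ((g.1 i : ℝ) ^ 2))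
            * (1 / ((m.1 : ℕ) : ℝ) ^ 2) := tsum_mul_right
      _ = (1 / ((m.1 : ℕ) : ℝ) ^ 2) * innerSum (s + 1) (m.1 : ℕ) := mul_comm _ _
  calc (∑' (m : ↥(Finset.Ioo 0 n)) (g : Idx s (m.1 : ℕ)),
        ∏ i : Fin (s + 1), (1 : ℝ) / (((F ⟨m, g⟩).1 i : ℝ) ^ 2))
      = ∑' m : ↥(Finset.Ioo 0 n), (1 / ((m.1 : ℕ) : ℝ) ^ 2) * innerSum (s + 1) (m.1 : ℕ) :=
        tsum_congr hstep
    _ = ∑ m ∈ Finset.Ioo 0 n, (1 / (m : ℝ) ^ 2) * innerSum (s + 1) m :=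
        Finset.tsum_subtype (Finset.Ioo 0 n) (fun m => (1 / (m : ℝ) ^ 2) * innerSum (s + 1) m)

lemma basel_aux : ∀ n : ℕ, ∑ m ∈ Finset.Ioc 0 (n + 1), (1 / (m : ℝ) ^ 2) ≤ 2 - 1 / ((n : ℝ) + 1) := by
  intro n
  induction n with
  | zero =>
    rw [Nat.Ioc_succ_singleton]
    norm_num
  | succ n ih =>
    rw [Finset.sum_Ioc_succ_top (by omega : 0 ≤ n + 1)]
    have hkey : (1 : ℝ) / ((n : ℝ) + 1 + 1) ^ 2 ≤ 1 / ((n : ℝ) + 1) - 1 / ((n : ℝ) + 1 + 1) := by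
      rw [div_sub_div _ _ (by positivity) (by positivity), div_le_div_iff₀ (by positivity) (by positivity)]
      ring_nf
      nlinarith [Nat.cast_nonneg (α := ℝ) n]
    push_cast
    push_cast at ih
    linarith

lemma basel : ∀ n : ℕ, ∑ m ∈ Finset.Ioo 0 n, (1 / (m : ℝ) ^ 2) ≤ 2 := by
  intro n
  match n with
  | 0 => simp
  | 1 =>
    have he : Finset.Ioo 0 1 = (∅ : Finset ℕ) := by decide
    rw [he]; norm_num
  | (k + 2) =>
    have he : Finset.Ioo 0 (k + 2) = Finset.Ioc 0 (k + 1) := by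
      ext m; simp [Nat.lt_succ_iff]
    rw [he]
    have h1 : (0 : ℝ) < (k : ℝ) + 1 := by positivity
    have := basel_aux k
    have h2 : (0 : ℝ) < 1 / ((k : ℝ) + 1) := by positivity
    linarith

lemma innerSum_le (s : ℕ) : ∀ n : ℕ, innerSum (s + 1) n ≤ 2 ^ s := by
  induction s with
  | zero => intro n; rw [innerSum_one]; norm_num
  | succ s ih =>
    intro n
    rw [innerSum_rec]
    calc ∑ m ∈ Finset.Ioo 0 n, (1 / (m : ℝ) ^ 2) * innerSum (s + 1) m
        ≤ ∑ m ∈ Finset.Ioo 0 n, (1 / (m : ℝ) ^ 2) * 2 ^ s :=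
          Finset.sum_le_sum fun m _ => mul_le_mul_of_nonneg_left (ih m) (by positivity)
      _ = (∑ m ∈ Finset.Ioo 0 n, (1 / (m : ℝ) ^ 2)) * 2 ^ s := by rw [Finset.sum_mul]
      _ ≤ 2 * 2 ^ s := mul_le_mul_of_nonneg_right (basel n) (by positivity)
      _ = 2 ^ (s + 1) := by ring

end InnerSum

/-! ### bb -/

lemma aa_zero : aa 0 = 0 := by simp [aa]

lemma bb_zero (r : ℕ) : bb r 0 = 0 := by simp [bb, aa_zero]

lemma bb_nonneg (r n : ℕ) : 0 ≤ bb r n :=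
  mul_nonneg (mul_nonneg (by positivity) (aa_nonneg n)) (innerSum_nonneg r n)

lemma bb_one (n : ℕ) (hn : 0 < n) : bb 1 n = cc 0 n := by
  unfold bb cc
  rw [if_pos hn, innerSum_one]
  norm_num [Nat.centralBinom_zero]

lemma bb_rec (s n : ℕ) :
    bb (s + 2) n = ∑ m ∈ Finset.range n, cc m n * bb (s + 1) m := by
  have hsub : ∑ m ∈ Finset.range n, cc m n * bb (s + 1) m
      = ∑ m ∈ Finset.Ioo 0 n, cc m n * bb (s + 1) m := by
    refine (Finset.sum_subset ?_ ?_).symm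
    · intro m hm; rw [Finset.mem_Ioo] at hm; exact Finset.mem_range.mpr hm.2
    · intro m hm hnot
      have hm' : m = 0 := by
        rw [Finset.mem_range] at hm
        simp only [Finset.mem_Ioo] at hnot
        omega
      subst hm'
      rw [bb_zero]; ring
  rw [hsub]
  unfold bb
  rw [innerSum_rec, Finset.mul_sum]
  refine Finset.sum_congr rfl fun m hm => ?_
  rw [Finset.mem_Ioo] at hm
  obtain ⟨hm0, hmn⟩ := hm
  have hn0 : 0 < n := lt_of_le_of_lt (Nat.zero_le m) hmn
  unfold cc
  rw [if_pos hmn]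
  unfold aa
  have hmr : ((m : ℝ)) ≠ 0 := by exact_mod_cast hm0.ne'
  have hnr : ((n : ℝ)) ≠ 0 := by exact_mod_cast hn0.ne'
  have h1 := cB_ne m
  have h2 := cB_ne n
  field_simp
  ring

lemma summable_bb (s : ℕ) : Summable (fun n : ℕ => bb (s + 1) (n + 1)) := by
  apply Summable.of_nonneg_of_le (fun n => bb_nonneg _ _) ?_ (summable_aa.mul_left (2 ^ s))
  intro n
  have h1 : ((4 : ℝ) ^ (s + 1))⁻¹ ≤ 1 :=
    inv_le_one_of_one_le₀ (one_le_pow₀ (by norm_num))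
  unfold bb
  calc ((4 : ℝ) ^ (s + 1))⁻¹ * aa (n + 1) * innerSum (s + 1) (n + 1)
      ≤ 1 * aa (n + 1) * 2 ^ s := by
        apply mul_le_mul ?_ (innerSum_le s (n + 1)) (innerSum_nonneg _ _) ?_
        · exact mul_le_mul h1 le_rfl (aa_nonneg _) zero_le_one
        · rw [one_mul]; exact aa_nonneg _
    _ = 2 ^ s * aa (n + 1) := by ring

/-! ### Integrals -/

noncomputable def Jm (m : ℕ) (t : ℝ) : ℝ := ∫ s in (0 : ℝ)..t, sin s ^ (2 * m)
noncomputable def Im (m : ℕ) (θ : ℝ) : ℝ := ∫ t in (0 : ℝ)..θ, Jm m t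

lemma sinpow_nonneg (m : ℕ) (t : ℝ) : 0 ≤ sin t ^ (2 * m) := by
  rw [pow_mul]; positivity

lemma sinpow_cont (m : ℕ) : Continuous fun s : ℝ => sin s ^ (2 * m) := by fun_prop

lemma Jm_cont (m : ℕ) : Continuous (Jm m) :=
  intervalIntegral.continuous_primitive (fun a b => ((sinpow_cont m).intervalIntegrable a b)) 0

lemma sinpow_norm_le (m : ℕ) (t : ℝ) : ‖sin t ^ (2 * m)‖ ≤ 1 := by
  rw [norm_pow]
  exact pow_le_one₀ (norm_nonneg _) (by rw [Real.norm_eq_abs]; exact abs_sin_le_one t)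

lemma D1 (k : ℕ) (t : ℝ) :
    HasDerivAt (fun s => sin s ^ (2 * k + 1) * cos s)
      ((2 * k + 1) * sin t ^ (2 * k) - (2 * k + 2) * sin t ^ (2 * k + 2)) t := by
  have hs := Real.hasDerivAt_sin t
  have hc := Real.hasDerivAt_cos t
  have hm := (hs.fun_pow (2 * k + 1)).fun_mul hc
  refine hm.congr_deriv (Eq.symm ?_)
  simp only [Nat.add_sub_cancel]
  push_cast
  linear_combination (-(2 * (k : ℝ) + 1)) * sin t ^ (2 * k) * (Real.cos_sq' t)

lemma red (k : ℕ) (θ : ℝ) :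
    Jm (k + 1) θ = ((2 * k + 1) * Jm k θ - sin θ ^ (2 * k + 1) * cos θ) / (2 * k + 2) := by
  have hD : ∀ t ∈ Set.uIcc (0 : ℝ) θ, HasDerivAt (fun s => sin s ^ (2 * k + 1) * cos s)
      ((fun u => (2 * (k : ℝ) + 1) * sin u ^ (2 * k) - (2 * (k : ℝ) + 2) * sin u ^ (2 * k + 2)) t)
      t := fun t _ => by simpa using D1 k t
  have hInt : IntervalIntegrable
      (fun u => (2 * (k : ℝ) + 1) * sin u ^ (2 * k) - (2 * (k : ℝ) + 2) * sin u ^ (2 * k + 2))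
      MeasureTheory.volume 0 θ := Continuous.intervalIntegrable (by fun_prop) _ _
  have hFTC := intervalIntegral.integral_eq_sub_of_hasDerivAt hD hInt
  simp only [Real.sin_zero, Real.cos_zero, mul_one] at hFTC
  rw [zero_pow (by omega : 2 * k + 1 ≠ 0), sub_zero] at hFTC
  rw [intervalIntegral.integral_sub
      (Continuous.intervalIntegrable (by fun_prop) _ _)
      (Continuous.intervalIntegrable (by fun_prop) _ _)] at hFTC
  rw [intervalIntegral.integral_const_mul, intervalIntegral.integral_const_mul] at hFTC
  have hJ1 : (∫ u in (0 : ℝ)..θ, sin u ^ (2 * k)) = Jm k θ := rfl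
  have hJ2 : (∫ u in (0 : ℝ)..θ, sin u ^ (2 * k + 2)) = Jm (k + 1) θ := by
    unfold Jm
    rw [show 2 * (k + 1) = 2 * k + 2 from by ring]
  rw [hJ1, hJ2] at hFTC
  rw [eq_div_iff (by positivity : (2 * (k : ℝ) + 2) ≠ 0)]
  linarith

lemma sinpow_cos_integral (k : ℕ) (θ : ℝ) :
    ∫ t in (0 : ℝ)..θ, sin t ^ (2 * k + 1) * cos t = sin θ ^ (2 * k + 2) / (2 * k + 2) := by
  have hD : ∀ t ∈ Set.uIcc (0 : ℝ) θ, HasDerivAt (fun s => sin s ^ (2 * k + 2) / (2 * (k : ℝ) + 2))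
      ((fun u => sin u ^ (2 * k + 1) * cos u) t) t := by
    intro t _
    have hp := ((Real.hasDerivAt_sin t).pow (2 * k + 2)).div_const (2 * (k : ℝ) + 2)
    refine hp.congr_deriv (Eq.symm ?_)
    simp only [Nat.add_sub_cancel]
    push_cast
    field_simp
  have hInt : IntervalIntegrable (fun u => sin u ^ (2 * k + 1) * cos u)
      MeasureTheory.volume 0 θ := Continuous.intervalIntegrable (by fun_prop) _ _
  have h := intervalIntegral.integral_eq_sub_of_hasDerivAt hD hInt
  rw [h]
  rw [Real.sin_zero, zero_pow (by omega : 2 * k + 2 ≠ 0), zero_div, sub_zero]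

lemma tele : ∀ (N : ℕ) (t : ℝ),
    t = (∑ k ∈ Finset.range N, dd k * (sin t ^ (2 * k + 1) * cos t)) + ee N * Jm N t := by
  intro N
  induction N with
  | zero =>
    intro t
    have h1 : Jm 0 t = t := by unfold Jm; simp
    rw [h1]
    simp [ee, Nat.centralBinom_zero]
  | succ N ih =>
    intro t
    rw [Finset.sum_range_succ]
    have hred := red N t
    have hC := cB_ne N
    have hcs := cB_succ_div N
    have hN1 : ((N : ℝ) + 1) ≠ 0 := by positivity
    have h2N1 : (2 * (N : ℝ) + 1) ≠ 0 := by positivity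
    have h2N2 : (2 * (N : ℝ) + 2) ≠ 0 := by positivity
    have hA : ee (N + 1) * (2 * (N : ℝ) + 1) / (2 * (N : ℝ) + 2) = ee N := by
      unfold ee
      rw [hcs]
      field_simp
      ring
    have hB : ee (N + 1) / (2 * (N : ℝ) + 2) = dd N := by
      unfold ee dd
      rw [hcs]
      field_simp
      ring
    have h1 : ee (N + 1) * Jm (N + 1) t
        = ee N * Jm N t - dd N * (sin t ^ (2 * N + 1) * cos t) := by
      rw [hred]
      rw [← hA, ← hB]
      field_simp
    have := ih t
    linarith

lemma Im0 (θ : ℝ) : Im 0 θ = θ ^ 2 / 2 := by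
  unfold Im
  have h1 : ∀ t : ℝ, Jm 0 t = t := by intro t; unfold Jm; simp
  rw [intervalIntegral.integral_congr (g := fun t => t) fun t _ => h1 t]
  rw [integral_id]
  ring

lemma dd_cc (k : ℕ) : dd k / (2 * k + 2) = cc 0 (k + 1) := by
  unfold dd cc
  rw [if_pos (Nat.succ_pos k)]
  unfold aa
  rw [cB_succ_div k, Nat.centralBinom_zero]
  push_cast
  have h1 := cB_ne k
  have h2 : ((k : ℝ) + 1) ≠ 0 := by positivity
  have h3 : (2 * (k : ℝ) + 1) ≠ 0 := by positivity
  field_simp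
  ring

lemma int_tele (N : ℕ) (θ : ℝ) :
    θ ^ 2 / 2 = (∑ k ∈ Finset.range N, cc 0 (k + 1) * sin θ ^ (2 * (k + 1))) + ee N * Im N θ := by
  have hsumcont : Continuous fun t => ∑ k ∈ Finset.range N, dd k * (sin t ^ (2 * k + 1) * cos t) := by
    apply continuous_finset_sum
    intro k _
    fun_prop
  have h0 : (∫ t in (0 : ℝ)..θ, t)
      = ∫ t in (0 : ℝ)..θ,
          ((∑ k ∈ Finset.range N, dd k * (sin t ^ (2 * k + 1) * cos t)) + ee N * Jm N t) :=
    intervalIntegral.integral_congr fun t _ => tele N t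
  rw [integral_id] at h0
  rw [intervalIntegral.integral_add (hsumcont.intervalIntegrable _ _)
      ((continuous_const.mul (Jm_cont N)).intervalIntegrable _ _) (g := fun t => ee N * Jm N t)] at h0
  rw [intervalIntegral.integral_finset_sum
      (fun k _ => Continuous.intervalIntegrable (by fun_prop) _ _)] at h0
  rw [intervalIntegral.integral_const_mul] at h0
  have hterm : ∀ k : ℕ, (∫ t in (0 : ℝ)..θ, dd k * (sin t ^ (2 * k + 1) * cos t))
      = cc 0 (k + 1) * sin θ ^ (2 * (k + 1)) := by
    intro k
    rw [intervalIntegral.integral_const_mul, sinpow_cos_integral, ← dd_cc k,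
      show 2 * (k + 1) = 2 * k + 2 from by ring]
    ring
  rw [Finset.sum_congr rfl fun k _ => hterm k] at h0
  unfold Im
  norm_num at h0
  linarith

lemma Jm_nonneg (m : ℕ) {t : ℝ} (ht : 0 ≤ t) : 0 ≤ Jm m t :=
  intervalIntegral.integral_nonneg ht fun s _ => sinpow_nonneg m s

lemma Im_nonneg (m : ℕ) {θ : ℝ} (hθ : 0 ≤ θ) : 0 ≤ Im m θ :=
  intervalIntegral.integral_nonneg hθ fun t ht => Jm_nonneg m ht.1

lemma Jm_crude (m : ℕ) {t : ℝ} (ht : 0 ≤ t) : Jm m t ≤ t := by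
  have h := intervalIntegral.norm_integral_le_of_norm_le_const (C := 1)
      (f := fun s => sin s ^ (2 * m)) (a := 0) (b := t) fun s _ => sinpow_norm_le m s
  rw [sub_zero, Real.norm_eq_abs] at h
  calc Jm m t ≤ |Jm m t| := le_abs_self _
    _ ≤ 1 * |t| := h
    _ = t := by rw [one_mul, abs_of_nonneg ht]

lemma Im_crude (m : ℕ) {θ : ℝ} (hθ : 0 ≤ θ) : Im m θ ≤ θ * θ := by
  have h : ∀ t ∈ Set.uIoc (0 : ℝ) θ, ‖Jm m t‖ ≤ θ := by
    intro t htm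
    rw [Set.uIoc_of_le hθ] at htm
    obtain ⟨h1, h2⟩ := htm
    rw [Real.norm_eq_abs, abs_of_nonneg (Jm_nonneg m h1.le)]
    exact (Jm_crude m h1.le).trans h2
  have h2 := intervalIntegral.norm_integral_le_of_norm_le_const h
  rw [sub_zero, Real.norm_eq_abs, abs_of_nonneg hθ] at h2
  calc Im m θ ≤ |Im m θ| := le_abs_self _
    _ ≤ θ * θ := h2

lemma Im_le (m : ℕ) {θ : ℝ} (h0 : 0 ≤ θ) (hθ : θ ≤ π / 2) :
    Im m θ ≤ θ ^ 2 * sin θ ^ (2 * m) := by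
  have hJ : ∀ t ∈ Set.uIoc (0 : ℝ) θ, ‖Jm m t‖ ≤ θ * sin θ ^ (2 * m) := by
    intro t htm
    rw [Set.uIoc_of_le h0] at htm
    obtain ⟨h1, h2⟩ := htm
    have hb : ∀ s ∈ Set.uIoc (0 : ℝ) t, ‖sin s ^ (2 * m)‖ ≤ sin θ ^ (2 * m) := by
      intro s hs
      rw [Set.uIoc_of_le h1.le] at hs
      have hs0 : 0 ≤ sin s :=
        sin_nonneg_of_nonneg_of_le_pi hs.1.le (by linarith [pi_pos, hs.2, h2])
      have hss : sin s ≤ sin θ :=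
        sin_le_sin_of_le_of_le_pi_div_two (by linarith [pi_pos, hs.1]) hθ (by linarith [hs.2])
      rw [norm_pow, Real.norm_eq_abs, abs_of_nonneg hs0]
      exact pow_le_pow_left₀ hs0 hss _
    have h3 := intervalIntegral.norm_integral_le_of_norm_le_const hb
    rw [sub_zero] at h3
    calc ‖Jm m t‖ ≤ sin θ ^ (2 * m) * |t| := h3
      _ = |t| * sin θ ^ (2 * m) := by ring
      _ ≤ θ * sin θ ^ (2 * m) := by
          apply mul_le_mul_of_nonneg_right ?_ (sinpow_nonneg m θ)
          rw [abs_of_nonneg h1.le]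
          exact h2
  have h2 := intervalIntegral.norm_integral_le_of_norm_le_const hJ
  rw [sub_zero, Real.norm_eq_abs, abs_of_nonneg h0] at h2
  calc Im m θ ≤ |Im m θ| := le_abs_self _
    _ ≤ θ * sin θ ^ (2 * m) * θ := h2
    _ = θ ^ 2 * sin θ ^ (2 * m) := by ring

/-! ### The base series -/

lemma L2 {θ : ℝ} (h0 : 0 ≤ θ) (hθ : θ < π / 2) :
    HasSum (fun j : ℕ => cc 0 (j + 1) * sin θ ^ (2 * (j + 1))) (θ ^ 2 / 2) := by
  have hq0 : 0 ≤ sin θ := sin_nonneg_of_nonneg_of_le_pi h0 (by linarith [pi_pos])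
  have hq1 : sin θ < 1 := by
    have h := sin_lt_sin_of_lt_of_le_pi_div_two (x := θ) (y := π / 2)
      (by linarith [pi_pos]) le_rfl hθ
    rwa [sin_pi_div_two] at h
  have hnn : ∀ j : ℕ, 0 ≤ cc 0 (j + 1) * sin θ ^ (2 * (j + 1)) :=
    fun j => mul_nonneg (cc_nonneg _ _) (sinpow_nonneg _ _)
  have hpart : ∀ N : ℕ, ∑ j ∈ Finset.range N, cc 0 (j + 1) * sin θ ^ (2 * (j + 1))
      = θ ^ 2 / 2 - ee N * Im N θ := fun N => by linarith [int_tele N θ]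
  have hImnn : ∀ N : ℕ, 0 ≤ ee N * Im N θ :=
    fun N => mul_nonneg (ee_nonneg N) (Im_nonneg N h0)
  have hS : Summable (fun j : ℕ => cc 0 (j + 1) * sin θ ^ (2 * (j + 1))) :=
    summable_of_sum_range_le (c := θ ^ 2 / 2) hnn fun N => by
      rw [hpart N]; linarith [hImnn N]
  have hbnd : ∀ N : ℕ, ee N * Im N θ ≤ (2 * (N : ℝ) + 2) * θ ^ 2 * (sin θ ^ 2) ^ N := by
    intro N
    have h1 : Im N θ ≤ θ ^ 2 * sin θ ^ (2 * N) := Im_le N h0 hθ.le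
    have h2 : ee N * Im N θ ≤ (2 * (N : ℝ) + 2) * (θ ^ 2 * sin θ ^ (2 * N)) :=
      mul_le_mul (ee_le N) h1 (Im_nonneg N h0) (by positivity)
    calc ee N * Im N θ ≤ (2 * (N : ℝ) + 2) * (θ ^ 2 * sin θ ^ (2 * N)) := h2
      _ = (2 * (N : ℝ) + 2) * θ ^ 2 * (sin θ ^ 2) ^ N := by rw [← pow_mul]; ring
  have hgeo : Summable (fun N : ℕ => (2 * (N : ℝ) + 2) * θ ^ 2 * (sin θ ^ 2) ^ N) := by
    have hr : ‖sin θ ^ 2‖ < 1 := by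
      rw [Real.norm_eq_abs, abs_of_nonneg (by positivity)]
      nlinarith
    have h1 : Summable (fun N : ℕ => (N : ℝ) * (sin θ ^ 2) ^ N) := by
      simpa using summable_pow_mul_geometric_of_norm_lt_one 1 hr
    have h2 : Summable (fun N : ℕ => (sin θ ^ 2) ^ N) :=
      summable_geometric_of_lt_one (by positivity) (by nlinarith)
    refine ((h1.mul_left (2 * θ ^ 2)).add (h2.mul_left (2 * θ ^ 2))).congr fun N => ?_
    ring
  have htend0 : Tendsto (fun N : ℕ => ee N * Im N θ) atTop (nhds 0) :=
    squeeze_zero (fun N => hImnn N) hbnd hgeo.tendsto_atTop_zero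
  have hval : Tendsto (fun N : ℕ => ∑ j ∈ Finset.range N, cc 0 (j + 1) * sin θ ^ (2 * (j + 1)))
      atTop (nhds (θ ^ 2 / 2)) := by
    simp_rw [hpart]
    simpa using tendsto_const_nhds.sub htend0
  have heq : (∑' j : ℕ, cc 0 (j + 1) * sin θ ^ (2 * (j + 1))) = θ ^ 2 / 2 :=
    tendsto_nhds_unique hS.hasSum.tendsto_sum_nat hval
  have hfin := hS.hasSum
  rwa [heq] at hfin

lemma cc_diag (m : ℕ) : cc m (m + 1) = 1 / ((2 * m + 2) * (2 * m + 1)) := by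
  unfold cc
  rw [if_pos (Nat.lt_succ_self m)]
  unfold aa
  rw [cB_succ_div m]
  push_cast
  have h1 := cB_ne m
  have h2 : ((m : ℝ) + 1) ≠ 0 := by positivity
  have h3 : (2 * (m : ℝ) + 1) ≠ 0 := by positivity
  field_simp

lemma cc_step (m j : ℕ) (y : ℝ) :
    cc (m + 1) (j + 1) * y ^ (2 * (j + 1)) =
      ((2 * m + 1) * (cc m (j + 1) * y ^ (2 * (j + 1)))
        - (if j = m then y ^ (2 * (m + 1)) / (2 * m + 2) else 0)) / (2 * m + 2) := by
  rcases lt_trichotomy j m with h | h | h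
  · rw [if_neg (by omega)]
    unfold cc
    rw [if_neg (by omega), if_neg (by omega)]
    ring
  · subst h
    rw [if_pos rfl]
    have h1 : cc (j + 1) (j + 1) = 0 := by unfold cc; rw [if_neg (lt_irrefl _)]
    rw [h1, cc_diag j, zero_mul]
    have h2 : (2 * (j : ℝ) + 2) ≠ 0 := by positivity
    have h3 : (2 * (j : ℝ) + 1) ≠ 0 := by positivity
    field_simp
    ring
  · rw [if_neg (by omega)]
    unfold cc
    rw [if_pos (by omega), if_pos (by omega)]
    rw [cB_succ_div m]
    push_cast
    have h1 := cB_ne m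
    have h2 : ((m : ℝ) + 1) ≠ 0 := by positivity
    have h3 : (2 * (m : ℝ) + 2) ≠ 0 := by positivity
    field_simp
    ring

lemma Im_rec (m : ℕ) (θ : ℝ) :
    Im (m + 1) θ = ((2 * m + 1) * Im m θ - sin θ ^ (2 * (m + 1)) / (2 * m + 2)) / (2 * m + 2) := by
  have hcongr : Im (m + 1) θ
      = ∫ t in (0 : ℝ)..θ,
          ((2 * (m : ℝ) + 1) * Jm m t - sin t ^ (2 * m + 1) * cos t) / (2 * (m : ℝ) + 2) := by
    unfold Im
    exact intervalIntegral.integral_congr fun t _ => by rw [red m t]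
  rw [hcongr]
  rw [intervalIntegral.integral_div]
  rw [intervalIntegral.integral_sub ((continuous_const.mul (Jm_cont m)).intervalIntegrable _ _) (f := fun t => (2 * (m : ℝ) + 1) * Jm m t)
      (Continuous.intervalIntegrable (by fun_prop) _ _)]
  rw [intervalIntegral.integral_const_mul, sinpow_cos_integral]
  rw [show 2 * (m + 1) = 2 * m + 2 from by ring]
  unfold Im
  ring

lemma L3 (m : ℕ) {θ : ℝ} (h0 : 0 ≤ θ) (hθ : θ < π / 2) :
    HasSum (fun j : ℕ => cc m (j + 1) * sin θ ^ (2 * (j + 1))) (Im m θ) := by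
  induction m with
  | zero => rw [Im0]; exact L2 h0 hθ
  | succ m ih =>
    have h1 := (ih.mul_left (2 * (m : ℝ) + 1)).sub
      (hasSum_ite_eq m (sin θ ^ (2 * (m + 1)) / (2 * (m : ℝ) + 2)))
    have h2 := h1.div_const (2 * (m : ℝ) + 2)
    have h3 : (fun j : ℕ => ((2 * (m : ℝ) + 1) * (cc m (j + 1) * sin θ ^ (2 * (j + 1)))
        - (if j = m then sin θ ^ (2 * (m + 1)) / (2 * (m : ℝ) + 2) else 0)) / (2 * (m : ℝ) + 2))
        = fun j : ℕ => cc (m + 1) (j + 1) * sin θ ^ (2 * (j + 1)) := by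
      funext j
      rw [cc_step m j (sin θ)]
    rw [h3] at h2
    rw [Im_rec m θ]
    exact h2

/-! ### The swap lemma -/

set_option maxHeartbeats 1000000 in
lemma swapT {f : ℕ → ℝ} (hf0 : ∀ m, 0 ≤ f m) (hfs : Summable f) {θ : ℝ} (h0 : 0 ≤ θ) :
    HasSum (fun m => f m * Im m θ)
      (∫ t in (0 : ℝ)..θ, ∫ s in (0 : ℝ)..t, (∑' m, f m * sin s ^ (2 * m))) := by
  set A : ℝ → ℝ := fun s => ∑' m, f m * sin s ^ (2 * m) with hA
  have hterm_cont : ∀ m : ℕ, Continuous fun s : ℝ => f m * sin s ^ (2 * m) :=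
    fun m => by fun_prop
  have hbound : ∀ (m : ℕ) (s : ℝ), ‖f m * sin s ^ (2 * m)‖ ≤ f m := by
    intro m s
    rw [norm_mul, Real.norm_eq_abs (f m), abs_of_nonneg (hf0 m)]
    calc f m * ‖sin s ^ (2 * m)‖ ≤ f m * 1 :=
        mul_le_mul_of_nonneg_left (sinpow_norm_le m s) (hf0 m)
      _ = f m := mul_one _
  have hAsum : ∀ s : ℝ, Summable fun m => f m * sin s ^ (2 * m) := fun s =>
    hfs.of_nonneg_of_le (fun m => mul_nonneg (hf0 m) (sinpow_nonneg m s))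
      (fun m => by
        have := hbound m s
        rwa [norm_mul, Real.norm_eq_abs (f m), abs_of_nonneg (hf0 m), Real.norm_eq_abs,
          abs_of_nonneg (sinpow_nonneg m s)] at this)
  have hAcont : Continuous A := continuous_tsum hterm_cont hfs hbound
  set J : ℝ → ℝ := fun t => ∫ s in (0 : ℝ)..t, A s with hJ
  have hJcont : Continuous J :=
    intervalIntegral.continuous_primitive (fun a b => hAcont.intervalIntegrable a b) 0
  set T : ℕ → ℝ := fun N => ∑' m, f (m + N) with hT
  have hTnn : ∀ N, 0 ≤ T N := fun N => tsum_nonneg fun m => hf0 _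
  have htail : ∀ (N : ℕ) (t : ℝ), 0 ≤ t → ‖J t - ∑ m ∈ Finset.range N, f m * Jm m t‖ ≤ T N * t := by
    intro N t ht
    have hpsum : ∑ m ∈ Finset.range N, f m * Jm m t
        = ∫ s in (0 : ℝ)..t, ∑ m ∈ Finset.range N, f m * sin s ^ (2 * m) := by
      rw [intervalIntegral.integral_finset_sum
        (fun m _ => ((hterm_cont m).intervalIntegrable _ _))]
      exact Finset.sum_congr rfl fun m _ => by
        rw [intervalIntegral.integral_const_mul]; rfl
    have hsub : J t - ∑ m ∈ Finset.range N, f m * Jm m t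
        = ∫ s in (0 : ℝ)..t, (A s - ∑ m ∈ Finset.range N, f m * sin s ^ (2 * m)) := by
      rw [hpsum]
      rw [intervalIntegral.integral_sub (hAcont.intervalIntegrable _ _)
        ((continuous_finset_sum _ fun m _ => hterm_cont m).intervalIntegrable _ _)]
    rw [hsub]
    have hptw : ∀ s ∈ Set.uIoc (0 : ℝ) t,
        ‖A s - ∑ m ∈ Finset.range N, f m * sin s ^ (2 * m)‖ ≤ T N := by
      intro s _
      have hdec := Summable.sum_add_tsum_nat_add (f := fun m => f m * sin s ^ (2 * m)) N (hAsum s)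
      have htl : A s - ∑ m ∈ Finset.range N, f m * sin s ^ (2 * m)
          = ∑' m, f (m + N) * sin s ^ (2 * (m + N)) := by
        rw [hA]; linarith [hdec]
      rw [htl]
      have h1 : 0 ≤ ∑' m, f (m + N) * sin s ^ (2 * (m + N)) :=
        tsum_nonneg fun m => mul_nonneg (hf0 _) (sinpow_nonneg _ _)
      rw [Real.norm_eq_abs, abs_of_nonneg h1]
      apply Summable.tsum_le_tsum ?_
        ((summable_nat_add_iff (f := fun m => f m * sin s ^ (2 * m)) N).mpr (hAsum s))
        ((summable_nat_add_iff (f := f) N).mpr hfs)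
      intro m
      calc f (m + N) * sin s ^ (2 * (m + N)) ≤ f (m + N) * 1 := by
            apply mul_le_mul_of_nonneg_left ?_ (hf0 _)
            rw [pow_mul]
            apply pow_le_one₀ (by positivity)
            nlinarith [neg_one_le_sin s, sin_le_one s]
        _ = f (m + N) := mul_one _
    have h2 := intervalIntegral.norm_integral_le_of_norm_le_const hptw
    rwa [sub_zero, abs_of_nonneg ht] at h2
  have hIm_bd : ∀ N : ℕ, ‖(∫ t in (0 : ℝ)..θ, J t) - ∑ m ∈ Finset.range N, f m * Im m θ‖
      ≤ T N * θ * θ := by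
    intro N
    have hpsum : ∑ m ∈ Finset.range N, f m * Im m θ
        = ∫ t in (0 : ℝ)..θ, ∑ m ∈ Finset.range N, f m * Jm m t := by
      rw [intervalIntegral.integral_finset_sum
        (fun m _ => ((continuous_const.mul (Jm_cont m)).intervalIntegrable _ _)) (f := fun m t => f m * Jm m t)]
      exact Finset.sum_congr rfl fun m _ => by
        rw [intervalIntegral.integral_const_mul]; rfl
    have hsub : (∫ t in (0 : ℝ)..θ, J t) - ∑ m ∈ Finset.range N, f m * Im m θ
        = ∫ t in (0 : ℝ)..θ, (J t - ∑ m ∈ Finset.range N, f m * Jm m t) := by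
      rw [hpsum]
      rw [intervalIntegral.integral_sub (hJcont.intervalIntegrable _ _)
        ((continuous_finset_sum _ fun m _ => continuous_const.mul (Jm_cont m) : Continuous fun t => ∑ m ∈ Finset.range N, f m * Jm m t).intervalIntegrable _ _)]
    rw [hsub]
    have hptw : ∀ t ∈ Set.uIoc (0 : ℝ) θ,
        ‖J t - ∑ m ∈ Finset.range N, f m * Jm m t‖ ≤ T N * θ := by
      intro t htm
      rw [Set.uIoc_of_le h0] at htm
      calc ‖J t - ∑ m ∈ Finset.range N, f m * Jm m t‖ ≤ T N * t := htail N t htm.1.le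
        _ ≤ T N * θ := mul_le_mul_of_nonneg_left htm.2 (hTnn N)
    have h2 := intervalIntegral.norm_integral_le_of_norm_le_const hptw
    rwa [sub_zero, abs_of_nonneg h0] at h2
  have hSm : Summable fun m => f m * Im m θ := by
    apply Summable.of_nonneg_of_le (fun m => mul_nonneg (hf0 m) (Im_nonneg m h0)) ?_
      (hfs.mul_right (θ * θ))
    intro m
    exact mul_le_mul_of_nonneg_left (Im_crude m h0) (hf0 m)
  have hT0 : Tendsto T atTop (nhds 0) := by
    have := tendsto_sum_nat_add f
    exact this
  have hTend : Tendsto (fun N => ∑ m ∈ Finset.range N, f m * Im m θ) atTop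
      (nhds (∫ t in (0 : ℝ)..θ, J t)) := by
    rw [tendsto_iff_norm_sub_tendsto_zero]
    refine squeeze_zero (g := fun N => T N * θ * θ) (fun N => norm_nonneg _) (fun N => ?_) ?_
    · rw [norm_sub_rev]
      exact hIm_bd N
    · simpa using (hT0.mul_const θ).mul_const θ
  have heq : (∑' m, f m * Im m θ) = ∫ t in (0 : ℝ)..θ, J t :=
    tendsto_nhds_unique hSm.hasSum.tendsto_sum_nat hTend
  have hfin := hSm.hasSum
  rw [heq] at hfin
  exact hfin

/-! ### The master induction -/

set_option maxHeartbeats 1000000 in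
lemma master : ∀ s : ℕ, ∀ θ : ℝ, 0 ≤ θ → θ < π / 2 →
    HasSum (fun j : ℕ => bb (s + 1) (j + 1) * sin θ ^ (2 * (j + 1)))
      (θ ^ (2 * (s + 1)) / (Nat.factorial (2 * (s + 1)) : ℝ)) := by
  intro s
  induction s with
  | zero =>
    intro θ h0 hθ
    have hL2 := L2 h0 hθ
    have hcoef : (fun j : ℕ => cc 0 (j + 1) * sin θ ^ (2 * (j + 1)))
        = fun j : ℕ => bb 1 (j + 1) * sin θ ^ (2 * (j + 1)) := by
      funext j
      rw [bb_one (j + 1) (Nat.succ_pos j)]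
    rw [hcoef] at hL2
    have hval : θ ^ 2 / 2 = θ ^ (2 * (0 + 1)) / (Nat.factorial (2 * (0 + 1)) : ℝ) := by
      norm_num
    rwa [hval] at hL2
  | succ s ih =>
    intro θ h0 hθ
    set f : ℕ → ℝ := fun m => bb (s + 1) m with hf
    have hf0 : ∀ m, 0 ≤ f m := fun m => bb_nonneg _ _
    have hfs : Summable f :=
      (summable_nat_add_iff (f := fun m => bb (s + 1) m) 1).mp (summable_bb s)
    have hswap := swapT hf0 hfs h0
    have hAeq : ∀ u : ℝ, 0 ≤ u → u ≤ θ → (∑' m, f m * sin u ^ (2 * m))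
        = u ^ (2 * (s + 1)) / (Nat.factorial (2 * (s + 1)) : ℝ) := by
      intro u hu huθ
      have h := ih u hu (lt_of_le_of_lt huθ hθ)
      have h' := (hasSum_nat_add_iff (f := fun m => f m * sin u ^ (2 * m)) 1).mp h
      simp only [Finset.sum_range_one] at h'
      have hz : f 0 * sin u ^ (2 * 0) = 0 := by
        have : f 0 = 0 := bb_zero (s + 1)
        rw [this, zero_mul]
      rw [hz, add_zero] at h'
      exact h'.tsum_eq
    have hval : (∫ t in (0 : ℝ)..θ, ∫ u in (0 : ℝ)..t, (∑' m, f m * sin u ^ (2 * m)))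
        = θ ^ (2 * (s + 2)) / (Nat.factorial (2 * (s + 2)) : ℝ) := by
      have hinner : Set.EqOn (fun t => ∫ u in (0 : ℝ)..t, (∑' m, f m * sin u ^ (2 * m)))
          (fun t => t ^ (2 * (s + 1) + 1)
            / ((2 * (s + 1) + 1) * (Nat.factorial (2 * (s + 1)) : ℝ)))
          (Set.uIcc (0 : ℝ) θ) := by
        intro t ht
        rw [Set.uIcc_of_le h0] at ht
        have h1 : (∫ u in (0 : ℝ)..t, (∑' m, f m * sin u ^ (2 * m)))
            = ∫ u in (0 : ℝ)..t, u ^ (2 * (s + 1)) / (Nat.factorial (2 * (s + 1)) : ℝ) := by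
          apply intervalIntegral.integral_congr
          intro u hu
          rw [Set.uIcc_of_le ht.1] at hu
          exact hAeq u hu.1 (hu.2.trans ht.2)
        simp only
        rw [h1, intervalIntegral.integral_div, integral_pow]
        rw [zero_pow (by omega : 2 * (s + 1) + 1 ≠ 0), sub_zero]
        have hne1 : ((2 * (s + 1) : ℕ) : ℝ) + 1 ≠ 0 := by positivity
        have hne2 : (2 * ((s : ℝ) + 1) + 1) ≠ 0 := by positivity
        have hne3 : (Nat.factorial (2 * (s + 1)) : ℝ) ≠ 0 := by
          exact_mod_cast (Nat.factorial_pos _).ne'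
        push_cast
        field_simp
        try ring
      calc (∫ t in (0 : ℝ)..θ, ∫ u in (0 : ℝ)..t, (∑' m, f m * sin u ^ (2 * m)))
          = ∫ t in (0 : ℝ)..θ, t ^ (2 * (s + 1) + 1)
              / ((2 * (s + 1) + 1) * (Nat.factorial (2 * (s + 1)) : ℝ)) :=
            intervalIntegral.integral_congr hinner
        _ = θ ^ (2 * (s + 2)) / (Nat.factorial (2 * (s + 2)) : ℝ) := by
            rw [intervalIntegral.integral_div, integral_pow]
            rw [zero_pow (by omega : 2 * (s + 1) + 1 + 1 ≠ 0), sub_zero]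
            rw [show 2 * (s + 2) = 2 * (s + 1) + 1 + 1 from by ring]
            have hfac : (Nat.factorial (2 * (s + 1) + 1 + 1) : ℝ)
                = ((2 * ((s : ℝ) + 1) + 1 + 1) * ((2 * ((s : ℝ) + 1) + 1)
                    * (Nat.factorial (2 * (s + 1)) : ℝ))) := by
              rw [Nat.factorial_succ, Nat.factorial_succ]
              push_cast
              ring
            rw [hfac]
            have hne3 : (Nat.factorial (2 * (s + 1)) : ℝ) ≠ 0 := by
              exact_mod_cast (Nat.factorial_pos _).ne'
            push_cast
            field_simp
            try ring
    have hProw : ∀ m : ℕ, HasSum (fun j => f m * (cc m (j + 1) * sin θ ^ (2 * (j + 1))))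
        (f m * Im m θ) := fun m => (L3 m h0 hθ).mul_left (f m)
    set P : ℕ × ℕ → ℝ := fun p => f p.1 * (cc p.1 (p.2 + 1) * sin θ ^ (2 * (p.2 + 1))) with hP
    have hPnn : 0 ≤ P := fun p =>
      mul_nonneg (hf0 _) (mul_nonneg (cc_nonneg _ _) (sinpow_nonneg _ _))
    have hPsum : Summable P := by
      refine (summable_prod_of_nonneg hPnn).mpr ⟨fun m => (hProw m).summable, ?_⟩
      have he : (fun m => ∑' j, P (m, j)) = fun m => f m * Im m θ :=
        funext fun m => (hProw m).tsum_eq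
      rw [he]
      exact hswap.summable
    have hPtot : HasSum P
        (∫ t in (0 : ℝ)..θ, ∫ u in (0 : ℝ)..t, (∑' m, f m * sin u ^ (2 * m))) := by
      have h1 : ∑' p, P p = ∑' m, ∑' j, P (m, j) :=
        Summable.tsum_prod' hPsum fun m => (hProw m).summable
      have h2 : (∑' m, ∑' j, P (m, j)) = ∑' m, f m * Im m θ :=
        tsum_congr fun m => (hProw m).tsum_eq
      have h3 := hPsum.hasSum
      rwa [h1, h2, hswap.tsum_eq] at h3
    have hcol : ∀ j : ℕ, HasSum (fun m => (P ∘ (Equiv.prodComm ℕ ℕ)) (j, m))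
        (bb (s + 2) (j + 1) * sin θ ^ (2 * (j + 1))) := by
      intro j
      have h0' : ∀ m ∉ Finset.range (j + 1), P (m, j) = 0 := by
        intro m hm
        have hnot : ¬ m < j + 1 := by simpa using hm
        simp [hP, cc, hnot]
        exact fun h => absurd (Nat.lt_succ_of_le h) hnot
      have h1 := hasSum_sum_of_ne_finset_zero (s := Finset.range (j + 1))
        (f := fun m => P (m, j)) (L := SummationFilter.unconditional ℕ) h0'
      have h2 : (∑ m ∈ Finset.range (j + 1), P (m, j))
          = bb (s + 2) (j + 1) * sin θ ^ (2 * (j + 1)) := by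
        rw [bb_rec, Finset.sum_mul]
        apply Finset.sum_congr rfl
        intro m _
        simp only [hP]
        ring
      rw [h2] at h1
      exact h1
    have final := HasSum.prod_fiberwise (((Equiv.prodComm ℕ ℕ).hasSum_iff).mpr hPtot) hcol
    rw [hval] at final
    exact final

lemma master_Icc (s : ℕ) {θ : ℝ} (hθ : θ ∈ Set.Icc (-(π / 2)) (π / 2)) :
    HasSum (fun j : ℕ => bb (s + 1) (j + 1) * sin θ ^ (2 * (j + 1)))
      (θ ^ (2 * (s + 1)) / (Nat.factorial (2 * (s + 1)) : ℝ)) := by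
  have hu : Summable (fun j : ℕ => bb (s + 1) (j + 1)) := summable_bb s
  have hbnd : ∀ (j : ℕ) (t : ℝ), ‖bb (s + 1) (j + 1) * sin t ^ (2 * (j + 1))‖
      ≤ bb (s + 1) (j + 1) := by
    intro j t
    rw [norm_mul, Real.norm_eq_abs (bb (s + 1) (j + 1)), abs_of_nonneg (bb_nonneg _ _)]
    calc bb (s + 1) (j + 1) * ‖sin t ^ (2 * (j + 1))‖ ≤ bb (s + 1) (j + 1) * 1 :=
        mul_le_mul_of_nonneg_left (sinpow_norm_le (j + 1) t) (bb_nonneg _ _)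
      _ = _ := mul_one _
  have hSum : ∀ t : ℝ, Summable (fun j : ℕ => bb (s + 1) (j + 1) * sin t ^ (2 * (j + 1))) :=
    fun t => hu.of_nonneg_of_le (fun j => mul_nonneg (bb_nonneg _ _) (sinpow_nonneg _ _))
      (fun j => by
        have h := hbnd j t
        rwa [norm_mul, Real.norm_eq_abs (bb (s + 1) (j + 1)), abs_of_nonneg (bb_nonneg _ _),
          Real.norm_eq_abs, abs_of_nonneg (sinpow_nonneg _ _)] at h)
  set g : ℝ → ℝ := fun t => ∑' j, bb (s + 1) (j + 1) * sin t ^ (2 * (j + 1)) with hg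
  have hgc : Continuous g := continuous_tsum (fun j => by fun_prop) hu hbnd
  have hhc : Continuous fun t : ℝ => t ^ (2 * (s + 1)) / (Nat.factorial (2 * (s + 1)) : ℝ) :=
    (continuous_pow _).div_const _
  have heqon : Set.EqOn g
      (fun t => t ^ (2 * (s + 1)) / (Nat.factorial (2 * (s + 1)) : ℝ))
      (Set.Ioo (-(π / 2)) (π / 2)) := by
    intro t ht
    obtain ⟨ht1, ht2⟩ := ht
    rcases le_or_gt 0 t with hpos | hneg
    · exact (master s t hpos ht2).tsum_eq
    · have h1 := (master s (-t) (by linarith) (by linarith)).tsum_eq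
      have h2 : g t = ∑' j, bb (s + 1) (j + 1) * sin (-t) ^ (2 * (j + 1)) :=
        tsum_congr fun j => by rw [Real.sin_neg, Even.neg_pow ⟨j + 1, by ring⟩]
      have h3 : (-t) ^ (2 * (s + 1)) = t ^ (2 * (s + 1)) :=
        Even.neg_pow ⟨s + 1, by ring⟩ t
      show g t = _
      calc g t = ∑' j, bb (s + 1) (j + 1) * sin (-t) ^ (2 * (j + 1)) := h2
        _ = (-t) ^ (2 * (s + 1)) / (Nat.factorial (2 * (s + 1)) : ℝ) := h1
        _ = t ^ (2 * (s + 1)) / (Nat.factorial (2 * (s + 1)) : ℝ) := by rw [h3]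
  have hcl := heqon.closure hgc hhc
  rw [closure_Ioo (by linarith [pi_pos] : -(π / 2) ≠ π / 2)] at hcl
  have hval : (∑' j, bb (s + 1) (j + 1) * sin θ ^ (2 * (j + 1)))
      = θ ^ (2 * (s + 1)) / (Nat.factorial (2 * (s + 1)) : ℝ) := hcl hθ
  have hfin := (hSum θ).hasSum
  rwa [hval] at hfin

end ArcsinAux

theorem arcsin_pow_series (r : ℕ) (hr : 1 ≤ r) (x : ℝ) (hx : |x| ≤ 1) :
    Summable (fun n : ℕ => arcsinTerm r x (n + 1)) ∧
    Real.arcsin x ^ (2 * r) / (Nat.factorial (2 * r) : ℝ) =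
      (4 : ℝ) ^ (-(r : ℤ)) * ∑' n : ℕ, arcsinTerm r x (n + 1) := by
  obtain ⟨s, rfl⟩ : ∃ s, r = s + 1 := ⟨r - 1, by omega⟩
  obtain ⟨hx1, hx2⟩ := abs_le.mp hx
  have hmem := Real.arcsin_mem_Icc x
  have hsin := Real.sin_arcsin hx1 hx2
  have H := ArcsinAux.master_Icc s hmem
  rw [hsin] at H
  have H4 := H.mul_left ((4 : ℝ) ^ (s + 1))
  have hterm : (fun j : ℕ => (4 : ℝ) ^ (s + 1) * (ArcsinAux.bb (s + 1) (j + 1) * x ^ (2 * (j + 1))))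
      = fun j : ℕ => arcsinTerm (s + 1) x (j + 1) := by
    funext j
    have h4 : ((4 : ℝ) ^ (s + 1)) ≠ 0 := by positivity
    have haa : (4 : ℝ) ^ (j + 1) / (((j + 1 : ℕ) : ℝ) ^ 2 * (((2 * (j + 1)).choose (j + 1) : ℕ) : ℝ))
        = ArcsinAux.aa (j + 1) := rfl
    simp only [arcsinTerm, ArcsinAux.bb, haa]
    field_simp
  rw [hterm] at H4
  refine ⟨H4.summable, ?_⟩
  rw [H4.tsum_eq, zpow_neg, zpow_natCast]
  rw [inv_mul_cancel_left₀ (by positivity : ((4 : ℝ) ^ (s + 1)) ≠ 0)]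
end

section
/- (Hoffman–Zagier) For every integer d ≥ 0 one has ζ({2}^d) = π^{2d} / (2d+1)!, i.e. Σ_{n₁ > n₂ > ⋯ > n_d > 0} 1/(n₁² n₂² ⋯ n_d²) = π^{2d}/(2d+1)!. -/
/-- The multiple zeta value `ζ(k₁,…,k_d) = Σ_{n₁ > ⋯ > n_d > 0} 1/(n₁^{k₁} ⋯ n_d^{k_d})`
associated to an index list `ks = [k₁,…,k_d]` (equal to `1` for the empty index). -/
noncomputable def mzv (ks : List ℕ) : ℝ :=
  ∑' n : {f : Fin ks.length → ℕ // StrictAnti f ∧ ∀ i, 0 < f i},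
    ∏ i : Fin ks.length, (1 : ℝ) / ((n.1 i : ℝ) ^ ks.get i)

open Real

open Filter Finset Topology

namespace MzvTwoPow


noncomputable def a (k : ℕ) : ℝ := 1 / ((k : ℝ) + 1) ^ 2

lemma a_nonneg (k : ℕ) : 0 ≤ a k := by unfold a; positivity

lemma summable_a : Summable a := by
  have := (Real.summable_one_div_nat_pow (p := 2)).2 one_lt_two
  have h := (summable_nat_add_iff 1).2 this
  exact h.congr fun n => by simp [a]

noncomputable def P (t : ℝ) (s : Finset ℕ) : ℝ := ∏ k ∈ s, (t * a k)

lemma P_nonneg {t : ℝ} (ht : 0 ≤ t) (s : Finset ℕ) : 0 ≤ P t s :=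
  Finset.prod_nonneg fun k _ => mul_nonneg ht (a_nonneg k)

lemma sum_powerset_P (t : ℝ) (N : ℕ) :
    ∑ s ∈ (Finset.range N).powerset, P t s = ∏ k ∈ Finset.range N, (t * a k + 1) := by
  rw [Finset.prod_add]
  simp [P]

lemma summable_P (t : ℝ) : Summable (P t) := by
  rw [← summable_abs_iff]
  have habs : ∀ s, |P t s| = P |t| s := by
    intro s
    rw [P, P, Finset.abs_prod]
    exact Finset.prod_congr rfl fun k _ => by rw [abs_mul, abs_of_nonneg (a_nonneg k)]
  simp only [habs]
  apply summable_of_sum_le (fun s => P_nonneg (abs_nonneg t) s) (c := Real.exp (|t| * ∑' k, a k))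
  intro S
  set N : ℕ := S.sup (fun s => s.sup id + 1) with hN
  have hsub : S ⊆ (Finset.range N).powerset := by
    intro s hs
    rw [Finset.mem_powerset]
    intro k hk
    rw [Finset.mem_range]
    calc k < s.sup id + 1 := Nat.lt_succ_of_le (Finset.le_sup (f := id) hk)
    _ ≤ N := Finset.le_sup (f := fun s => s.sup id + 1) hs
  calc ∑ s ∈ S, P |t| s ≤ ∑ s ∈ (Finset.range N).powerset, P |t| s :=
        Finset.sum_le_sum_of_subset_of_nonneg hsub fun s _ _ => P_nonneg (abs_nonneg t) s
    _ = ∏ k ∈ Finset.range N, (|t| * a k + 1) := sum_powerset_P _ _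
    _ ≤ ∏ k ∈ Finset.range N, Real.exp (|t| * a k) := by
        apply Finset.prod_le_prod
        · intro k _; have := a_nonneg k; positivity
        · intro k _; have h1 := Real.add_one_le_exp (|t| * a k); linarith
    _ = Real.exp (∑ k ∈ Finset.range N, |t| * a k) := (Real.exp_sum _ _).symm
    _ ≤ Real.exp (|t| * ∑' k, a k) := by
        apply Real.exp_le_exp.2
        rw [← Finset.mul_sum]
        exact mul_le_mul_of_nonneg_left (Summable.sum_le_tsum _ (fun k _ => a_nonneg k) summable_a) (abs_nonneg t)


noncomputable def E (d : ℕ) : ℝ :=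
  ∑' s : (Finset.card ⁻¹' {d} : Set (Finset ℕ)), ∏ k ∈ (s : Finset ℕ), a k

lemma E_nonneg (d : ℕ) : 0 ≤ E d :=
  tsum_nonneg fun s => Finset.prod_nonneg fun k _ => a_nonneg k

lemma hasSum_E_mul (t : ℝ) : HasSum (fun d => E d * t ^ d) (∑' s, P t s) := by
  have h := ((summable_P t).hasSum).tsum_fiberwise Finset.card
  have he : ∀ d : ℕ, (∑' s : (Finset.card ⁻¹' {d} : Set (Finset ℕ)), P t s) = E d * t ^ d := by
    intro d
    have hterm : ∀ s : (Finset.card ⁻¹' {d} : Set (Finset ℕ)),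
        P t (s : Finset ℕ) = (∏ k ∈ (s : Finset ℕ), a k) * t ^ d := by
      rintro ⟨s, hs⟩
      have hcard : s.card = d := hs
      simp only [P, Finset.prod_mul_distrib, Finset.prod_const, hcard, mul_comm]
    rw [tsum_congr hterm, tsum_mul_right]; rfl
  simpa only [he] using h

lemma F_eq_sin (x : ℝ) (hx : x ≠ 0) :
    ∑' s, P (-x^2) s = Real.sin (π * x) / (π * x) := by
  have hp : Tendsto (fun N : ℕ => (Finset.range N).powerset) atTop atTop := by
    apply tendsto_atTop_finset_of_monotone
    · intro m n hmn
      exact Finset.powerset_mono.2 (Finset.range_subset_range.2 hmn)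
    · intro s
      obtain ⟨n, hn⟩ := s.exists_nat_subset_range
      exact ⟨n, Finset.mem_powerset.2 hn⟩
  have h1 : Tendsto (fun N : ℕ => ∑ s ∈ (Finset.range N).powerset, P (-x^2) s) atTop
      (𝓝 (∑' s, P (-x^2) s)) := ((summable_P _).hasSum).comp hp
  have h2 : (fun N : ℕ => ∑ s ∈ (Finset.range N).powerset, P (-x^2) s)
      = fun N => ∏ k ∈ Finset.range N, ((1:ℝ) - x^2 / ((k:ℝ)+1)^2) := by
    funext N
    rw [sum_powerset_P]
    refine Finset.prod_congr rfl fun k _ => ?_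
    have hk : ((k:ℝ)+1) ≠ 0 := by positivity
    unfold a
    field_simp
    ring
  have hpx : (π * x) ≠ 0 := mul_ne_zero Real.pi_ne_zero hx
  have h3 : Tendsto (fun N : ℕ => ∏ k ∈ Finset.range N, ((1:ℝ) - x^2/((k:ℝ)+1)^2)) atTop
      (𝓝 (Real.sin (π * x) / (π * x))) := by
    have h4 := Filter.Tendsto.const_mul ((π*x)⁻¹) (Real.tendsto_euler_sin_prod x)
    simp only [← mul_assoc, inv_mul_cancel₀ hpx, one_mul, inv_mul_eq_div] at h4
    exact h4
  rw [h2] at h1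
  exact tendsto_nhds_unique h1 h3

lemma hasSum_sinc (x : ℝ) (hx : x ≠ 0) :
    HasSum (fun d : ℕ => (-1)^d * (π*x)^(2*d) / (Nat.factorial (2*d+1) : ℝ))
      (Real.sin (π*x) / (π*x)) := by
  have hpx : (π * x) ≠ 0 := mul_ne_zero Real.pi_ne_zero hx
  have h := (Real.hasSum_sin (π * x)).div_const (π * x)
  have he : (fun n : ℕ => ((-1)^n * (π*x)^(2*n+1) / ((Nat.factorial (2*n+1):ℝ))) / (π * x))
      = fun d : ℕ => (-1)^d * (π*x)^(2*d) / (Nat.factorial (2*d+1) : ℝ) := by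
    funext n
    have hfac : ((Nat.factorial (2*n+1) : ℝ)) ≠ 0 := Nat.cast_ne_zero.2 (Nat.factorial_ne_zero _)
    rw [pow_succ]
    field_simp
  rwa [he] at h


set_option maxHeartbeats 1000000 in
lemma coeff_zero (h : ℕ → ℝ) (hs : Summable (fun d => |h d|))
    (hz : ∀ u : ℝ, u ∈ Set.Ioo (0:ℝ) 1 → HasSum (fun d => h d * u ^ d) 0) : ∀ d, h d = 0 := by
  intro k
  induction k using Nat.strong_induction_on with
  | _ k IH =>
  have hs' : Summable (fun d => |h (d + (k+1))|) := (summable_nat_add_iff (f := fun d => |h d|) (k+1)).2 hs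
  set M : ℝ := ∑' d, |h (d + (k+1))| * (1/2) ^ d with hM
  have hsM : Summable (fun d => |h (d + (k+1))| * (1/2:ℝ) ^ d) := by
    refine Summable.of_nonneg_of_le (fun d => by positivity) (fun d => ?_) hs'
    exact mul_le_of_le_one_right (abs_nonneg _) (pow_le_one₀ (by norm_num) (by norm_num))
  have hM0 : 0 ≤ M := tsum_nonneg fun d => by positivity
  have key : ∀ u : ℝ, u ∈ Set.Ioo (0:ℝ) (1/2) → |h k| ≤ u * M := by
    intro u hu
    obtain ⟨hu0, hu2⟩ := hu
    have hu1 : u < 1 := hu2.trans (by norm_num)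
    have hsum := hz u ⟨hu0, hu1⟩
    have hsummable := hsum.summable
    have hsplit := Summable.sum_add_tsum_nat_add (f := fun d => h d * u ^ d) (k+1) hsummable
    rw [hsum.tsum_eq] at hsplit
    have hfin : ∑ i ∈ Finset.range (k+1), h i * u ^ i = h k * u ^ k := by
      rw [Finset.sum_range_succ]
      have hzero : ∑ i ∈ Finset.range k, h i * u ^ i = 0 :=
        Finset.sum_eq_zero fun i hi => by rw [IH i (Finset.mem_range.1 hi), zero_mul]
      rw [hzero, zero_add]
    rw [hfin] at hsplit
    have hsummand : Summable (fun d => |h (d + (k+1)) * u ^ (d + (k+1))|) := by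
      refine Summable.of_nonneg_of_le (fun d => abs_nonneg _) (fun d => ?_) hs'
      rw [abs_mul]
      refine mul_le_of_le_one_right (abs_nonneg _) ?_
      rw [abs_of_nonneg (pow_nonneg hu0.le _)]
      exact pow_le_one₀ hu0.le hu1.le
    have hsummand' : Summable (fun d => |h (d + (k+1))| * u ^ (d + (k+1))) :=
      hsummand.congr (fun d => by rw [abs_mul, abs_of_nonneg (pow_nonneg hu0.le _)])
    have htail : h k * u ^ k = - ∑' d, h (d + (k+1)) * u ^ (d + (k+1)) := by linarith
    have habs : |h k| * u ^ k ≤ ∑' d, |h (d + (k+1))| * u ^ (d + (k+1)) :=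
      calc |h k| * u ^ k = |h k * u ^ k| := by
            rw [abs_mul, abs_of_nonneg (pow_nonneg hu0.le _)]
        _ = |∑' d, h (d + (k+1)) * u ^ (d + (k+1))| := by rw [htail, abs_neg]
        _ ≤ ∑' d, |h (d + (k+1)) * u ^ (d + (k+1))| := by
            have hn := norm_tsum_le_tsum_norm (f := fun d => h (d + (k+1)) * u ^ (d + (k+1)))
              (by simpa only [Real.norm_eq_abs] using hsummand)
            simpa only [Real.norm_eq_abs] using hn
        _ = ∑' d, |h (d + (k+1))| * u ^ (d + (k+1)) := tsum_congr fun d => by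
            rw [abs_mul, abs_of_nonneg (pow_nonneg hu0.le _)]
    have hbound : ∑' d, |h (d + (k+1))| * u ^ (d + (k+1))
        ≤ ∑' d, u ^ (k+1) * (|h (d + (k+1))| * (1/2:ℝ) ^ d) := by
      refine Summable.tsum_le_tsum (fun d => ?_) hsummand' (hsM.mul_left _)
      have : u ^ (d + (k+1)) ≤ (1/2:ℝ) ^ d * u ^ (k+1) := by
        rw [pow_add]
        exact mul_le_mul_of_nonneg_right (pow_le_pow_left₀ hu0.le hu2.le d) (pow_nonneg hu0.le _)
      calc |h (d + (k+1))| * u ^ (d + (k+1)) ≤ |h (d + (k+1))| * ((1/2:ℝ) ^ d * u ^ (k+1)) :=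
            mul_le_mul_of_nonneg_left this (abs_nonneg _)
        _ = u ^ (k+1) * (|h (d + (k+1))| * (1/2:ℝ) ^ d) := by ring
    rw [tsum_mul_left, ← hM] at hbound
    have hfinal : |h k| * u ^ k ≤ (u * M) * u ^ k := by
      have : u ^ (k+1) * M = (u * M) * u ^ k := by ring
      linarith [habs.trans hbound, this.ge.trans_eq rfl]
    exact le_of_mul_le_mul_right hfinal (pow_pos hu0 k)
  by_contra hk0
  have hpos : 0 < |h k| := abs_pos.2 hk0
  set u := min (1/4 : ℝ) (|h k| / (2 * (M+1))) with hu
  have hM1 : (0:ℝ) < M + 1 := by linarith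
  have hu0 : 0 < u := lt_min (by norm_num) (by positivity)
  have hub := key u ⟨hu0, (min_le_left _ _).trans_lt (by norm_num)⟩
  have h2 : u ≤ |h k| / (2*(M+1)) := min_le_right _ _
  have h3 : |h k| / (2*(M+1)) * (2*(M+1)) = |h k| := by field_simp
  nlinarith [mul_le_mul_of_nonneg_right h2 hM0, hpos, hM0]





lemma sub_one_inj {d : ℕ} (g : Fin d → ℕ) (hanti : StrictAnti g) (hpos : ∀ i, 0 < g i) :
    Function.Injective (fun i => g i - 1) := by
  intro i j hij
  have hij' : g i - 1 = g j - 1 := hij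
  have h1 := hpos i; have h2 := hpos j
  exact hanti.injective (by omega)

def tupEquiv (d : ℕ) :
    {f : Fin d → ℕ // StrictAnti f ∧ ∀ i, 0 < f i} ≃ (Finset.card ⁻¹' {d} : Set (Finset ℕ)) where
  toFun f := ⟨Finset.image (fun i => f.1 i - 1) Finset.univ, by
    have hinj : Function.Injective (fun i => f.1 i - 1) := sub_one_inj f.1 f.2.1 f.2.2
    simp only [Set.mem_preimage, Set.mem_singleton_iff]
    rw [Finset.card_image_of_injective _ hinj, Finset.card_univ, Fintype.card_fin]⟩
  invFun s := ⟨fun i => (s.1.orderEmbOfFin (s.2 : s.1.card = d)) i.rev + 1, by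
      intro i j hij
      have hrev : j.rev < i.rev := Fin.rev_lt_rev.2 hij
      have hm := (s.1.orderEmbOfFin (s.2 : s.1.card = d)).strictMono hrev
      exact Nat.add_lt_add_right hm 1,
    fun i => Nat.succ_pos _⟩
  left_inv f := by
    ext i
    obtain ⟨g, hanti, hpos⟩ := f
    simp only
    set s : Finset ℕ := Finset.image (fun i => g i - 1) Finset.univ with hs
    have hcard : s.card = d := by
      rw [hs, Finset.card_image_of_injective _ (sub_one_inj g hanti hpos), Finset.card_univ,
        Fintype.card_fin]
    have huniq : (fun j : Fin d => g j.rev - 1) = s.orderEmbOfFin hcard := by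
      apply Finset.orderEmbOfFin_unique
      · intro j
        exact Finset.mem_image.2 ⟨j.rev, Finset.mem_univ _, rfl⟩
      · intro i j hij
        have hrev : j.rev < i.rev := Fin.rev_lt_rev.2 hij
        have hlt : g i.rev < g j.rev := hanti hrev
        have hp := hpos i.rev
        show g i.rev - 1 < g j.rev - 1
        omega
    show s.orderEmbOfFin _ i.rev + 1 = g i
    rw [← huniq]
    show g i.rev.rev - 1 + 1 = g i
    rw [Fin.rev_rev]
    have := hpos i
    omega
  right_inv s := by
    ext1
    simp only
    have hcard : s.1.card = d := s.2
    have h1 : ∀ i : Fin d, (s.1.orderEmbOfFin hcard) i.rev + 1 - 1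
        = (s.1.orderEmbOfFin hcard) i.rev := fun i => by omega
    show Finset.image _ Finset.univ = s.1
    calc Finset.image (fun i : Fin d => (s.1.orderEmbOfFin hcard) i.rev + 1 - 1) Finset.univ
        = Finset.image (fun i : Fin d => (s.1.orderEmbOfFin hcard) i.rev) Finset.univ := by
          apply Finset.image_congr; intro i _; exact h1 i
      _ = Finset.image (s.1.orderEmbOfFin hcard) (Finset.image Fin.rev Finset.univ) := by
          rw [Finset.image_image]; rfl
      _ = Finset.image (s.1.orderEmbOfFin hcard) Finset.univ := by
          congr 1
          exact Finset.image_univ_equiv (Fin.revPerm)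
      _ = s.1 := by
          apply Finset.coe_injective
          rw [Finset.coe_image, Finset.coe_univ, Set.image_univ, Finset.range_orderEmbOfFin]

lemma E_eq_tsum (d : ℕ) :
    E d = ∑' f : {f : Fin d → ℕ // StrictAnti f ∧ ∀ i, 0 < f i},
      ∏ i : Fin d, (1 : ℝ) / ((f.1 i : ℝ) ^ 2) := by
  rw [E, ← Equiv.tsum_eq (tupEquiv d) (fun s => ∏ k ∈ (s : Finset ℕ), a k)]
  apply tsum_congr
  intro f
  show ∏ k ∈ Finset.image (fun i => f.1 i - 1) Finset.univ, a k = _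
  have hinj : Function.Injective (fun i => f.1 i - 1) := sub_one_inj f.1 f.2.1 f.2.2
  rw [Finset.prod_image (fun i _ j _ h => hinj h)]
  apply Finset.prod_congr rfl
  intro i _
  unfold a
  have hp := f.2.2 i
  have hcast : ((f.1 i - 1 : ℕ) : ℝ) + 1 = (f.1 i : ℝ) := by
    have : (f.1 i - 1) + 1 = f.1 i := by omega
    exact_mod_cast congrArg (Nat.cast : ℕ → ℝ) this
  rw [hcast]

lemma mzv_aux {ks : List ℕ} {n : ℕ} (hlen : ks.length = n)
    (hget : ∀ i : Fin ks.length, ks.get i = 2) :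
    mzv ks = ∑' f : {f : Fin n → ℕ // StrictAnti f ∧ ∀ i, 0 < f i},
      ∏ i : Fin n, (1:ℝ)/((f.1 i:ℝ)^2) := by
  subst hlen
  unfold mzv
  apply tsum_congr
  intro f
  apply Finset.prod_congr rfl
  intro i _
  rw [hget i]

lemma mzv_replicate_two (d : ℕ) : mzv (List.replicate d 2) = E d := by
  rw [mzv_aux (List.length_replicate (n := d) (a := 2)) (fun i => by simp), E_eq_tsum]


lemma summable_E : Summable E := by
  have := (hasSum_E_mul 1).summable
  simpa using this

lemma summable_b : Summable (fun d : ℕ => π ^ (2*d) / (Nat.factorial (2*d+1) : ℝ)) := by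
  refine Summable.of_nonneg_of_le (fun d => by positivity) (fun d => ?_)
    (Real.summable_pow_div_factorial (π ^ 2))
  rw [pow_mul]
  refine div_le_div₀ (by positivity) le_rfl (by positivity) ?_
  exact_mod_cast Nat.factorial_le (by omega : d ≤ 2*d+1)

lemma E_eq_b (d : ℕ) : E d = π ^ (2*d) / (Nat.factorial (2*d+1) : ℝ) := by
  set b : ℕ → ℝ := fun d => π ^ (2*d) / (Nat.factorial (2*d+1) : ℝ) with hb
  set h : ℕ → ℝ := fun d => (-1)^d * E d - (-1)^d * b d with hh
  have hb0 : ∀ d, 0 ≤ b d := fun d => by positivity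
  have hs : Summable (fun d => |h d|) := by
    refine Summable.of_nonneg_of_le (fun d => abs_nonneg _) (fun d => ?_)
      (summable_E.add summable_b)
    have : |h d| = |E d - b d| := by
      rw [hh]
      simp only
      rw [← mul_sub, abs_mul, abs_pow, abs_neg, abs_one, one_pow, one_mul]
    rw [this]
    calc |E d - b d| ≤ |E d| + |b d| := abs_sub _ _
      _ = E d + b d := by rw [abs_of_nonneg (E_nonneg d), abs_of_nonneg (hb0 d)]
  have hz : ∀ u : ℝ, u ∈ Set.Ioo (0:ℝ) 1 → HasSum (fun d => h d * u ^ d) 0 := by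
    intro u hu
    set x : ℝ := Real.sqrt u with hxdef
    have hx0 : x ≠ 0 := ne_of_gt (Real.sqrt_pos.2 hu.1)
    have hx2 : x ^ 2 = u := Real.sq_sqrt hu.1.le
    have h1 : HasSum (fun d => E d * (-u) ^ d) (Real.sin (π * x) / (π * x)) := by
      have h0 := hasSum_E_mul (-u)
      have hF : ∑' s, P (-u) s = Real.sin (π * x) / (π * x) := by
        rw [show (-u) = -x^2 by rw [hx2]]
        exact F_eq_sin x hx0
      rwa [hF] at h0
    have h2 := hasSum_sinc x hx0
    have hsub := h1.sub h2
    rw [sub_self] at hsub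
    have he : ∀ d : ℕ, E d * (-u) ^ d - (-1)^d * (π*x)^(2*d) / (Nat.factorial (2*d+1) : ℝ)
        = h d * u ^ d := by
      intro d
      have hx2d : (π*x)^(2*d) = π^(2*d) * u ^ d := by
        rw [mul_pow, pow_mul x, hx2]
      rw [hx2d, neg_pow u d, hh, hb]
      ring
    have hfe : (fun d : ℕ => h d * u ^ d)
        = fun d : ℕ => E d * (-u) ^ d - (-1)^d * (π*x)^(2*d) / (Nat.factorial (2*d+1) : ℝ) :=
      funext fun d => (he d).symm
    rw [hfe]
    exact hsub
  have hzero := coeff_zero h hs hz d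
  have h5 : (-1:ℝ)^d * E d - (-1:ℝ)^d * b d = 0 := hzero
  have h6 : (-1:ℝ)^d * E d = (-1:ℝ)^d * b d := by linarith
  exact mul_left_cancel₀ (pow_ne_zero d (by norm_num : (-1:ℝ) ≠ 0)) h6

end MzvTwoPow

/-- Hoffman–Zagier: for every `d ≥ 0`, `ζ({2}^d) = π^{2d}/(2d+1)!`. -/
theorem mzv_two_pow (d : ℕ) :
    mzv (List.replicate d 2) = π ^ (2 * d) / (Nat.factorial (2 * d + 1) : ℝ) := by
  rw [MzvTwoPow.mzv_replicate_two, MzvTwoPow.E_eq_b]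
end

section
/- For every integer n ≥ 1 one has the identity of real numbers Σ_{i=0}^{n−1} ζ({2}^i, 3, {2}^{n−1−i}) = − Σ_{i=1}^{n} (−1)^i · ζ(2i+1) · ζ({2}^{n−i}), where ζ(2i+1) = Σ_{m≥1} m^{−(2i+1)} and ζ({2}^0) = 1. -/
open Finset

noncomputable section
namespace MzvAux

abbrev P (k : ℕ) := {f : Fin k → ℕ // StrictAnti f ∧ ∀ i, 0 < f i}
abbrev A (k : ℕ) := {s : Finset ℕ // s.card = k ∧ 0 ∉ s}

def w (s : Finset ℕ) : ℝ := ∏ j ∈ s, (1:ℝ)/(j:ℝ)^2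

lemma w_nonneg (s : Finset ℕ) : 0 ≤ w s :=
  Finset.prod_nonneg fun _ _ => by positivity

lemma summable_g : Summable (fun m : ℕ => (1:ℝ)/((m:ℝ)+1)^2) := by
  have h : Summable (fun n : ℕ => 1/(n:ℝ)^2) := Real.summable_one_div_nat_pow.mpr one_lt_two
  have := h.comp_injective Nat.succ_injective
  refine this.congr fun m => ?_
  simp [Function.comp, Nat.succ_eq_add_one]

lemma summable_pi (k : ℕ) :
    Summable (fun f : Fin k → ℕ => ∏ i, (1:ℝ)/((f i : ℝ)+1)^2) := by
  induction k with
  | zero =>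
    have : Finite (Fin 0 → ℕ) := inferInstance
    exact Summable.of_finite
  | succ k ih =>
    have h := summable_g.mul_of_nonneg ih (fun m => by positivity)
      (fun f => Finset.prod_nonneg fun _ _ => by positivity)
    rw [← (Fin.consEquiv fun _ : Fin (k+1) => ℕ).summable_iff]
    refine h.congr fun p => ?_
    simp only [Function.comp_apply, Fin.consEquiv_apply]
    rw [show (fun i => (1:ℝ)/(((Fin.cons p.1 p.2 : ∀ _ : Fin (k+1), ℕ) i : ℝ)+1)^2)
        = Fin.cons ((1:ℝ)/((p.1:ℝ)+1)^2) (fun i => (1:ℝ)/((p.2 i : ℝ)+1)^2) from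
      funext fun i => Fin.cases (by simp) (by simp) i]
    rw [Fin.prod_cons]

lemma summable_P_of_le {k : ℕ} {h : P k → ℝ} (h0 : ∀ f, 0 ≤ h f)
    (hle : ∀ f, h f ≤ ∏ i, (1:ℝ)/((f.1 i:ℝ))^2) : Summable h := by
  refine Summable.of_nonneg_of_le h0 hle ?_
  have hinj : Function.Injective (fun f : P k => fun i => f.1 i - 1) := by
    intro f g hfg
    apply Subtype.ext; funext i
    have := congrFun hfg i
    simp only at this
    have hf := f.2.2 i; have hg := g.2.2 i
    omega
  have := (summable_pi k).comp_injective hinj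
  refine this.congr fun f => ?_
  simp only [Function.comp]
  refine Finset.prod_congr rfl fun i _ => ?_
  have := f.2.2 i
  congr 2
  have : ((f.1 i - 1 : ℕ) : ℝ) = (f.1 i : ℝ) - 1 := by
    have := f.2.2 i; push_cast [Nat.cast_sub this]; ring
  rw [this]; ring


def PA (k : ℕ) : P k ≃ A k where
  toFun f := ⟨Finset.image f.1 univ, by
      rw [Finset.card_image_of_injective _ f.2.1.injective, card_univ, Fintype.card_fin], by
      simp only [Finset.mem_image, mem_univ, true_and]
      rintro ⟨i, hi⟩
      exact (f.2.2 i).ne' hi⟩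
  invFun s := ⟨fun i => s.1.orderEmbOfFin s.2.1 i.rev,
    fun a b hab => (s.1.orderEmbOfFin s.2.1).strictMono (Fin.rev_lt_rev.mpr hab),
    fun i => Nat.pos_of_ne_zero fun h => s.2.2 (by
      have hm := Finset.orderEmbOfFin_mem s.1 s.2.1 i.rev
      simp only at h
      rwa [h] at hm)⟩
  left_inv f := by
    apply Subtype.ext
    have hs : (Finset.image f.1 univ).card = k := by
      rw [Finset.card_image_of_injective _ f.2.1.injective, card_univ, Fintype.card_fin]
    have hmono : StrictMono (fun i : Fin k => f.1 i.rev) := by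
      intro a b hab
      exact f.2.1 (Fin.rev_lt_rev.mpr hab)
    have hmem : ∀ i : Fin k, f.1 i.rev ∈ Finset.image f.1 univ := by
      intro i; exact Finset.mem_image_of_mem _ (mem_univ _)
    have := Finset.orderEmbOfFin_unique hs hmem hmono
    funext i
    show (Finset.image f.1 univ).orderEmbOfFin _ i.rev = f.1 i
    rw [← congrFun this i.rev, Fin.rev_rev]
  right_inv s := by
    apply Subtype.ext
    show Finset.image (fun i : Fin k => (s.1.orderEmbOfFin s.2.1 i.rev : ℕ)) univ = s.1
    ext x
    simp only [Finset.mem_image, mem_univ, true_and]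
    constructor
    · rintro ⟨i, rfl⟩; exact Finset.orderEmbOfFin_mem _ _ _
    · intro hx
      have : x ∈ Set.range (s.1.orderEmbOfFin s.2.1) := by
        rw [Finset.range_orderEmbOfFin]; exact hx
      rcases this with ⟨i, rfl⟩
      exact ⟨i.rev, by rw [Fin.rev_rev]⟩

lemma PA_prod (k : ℕ) (f : P k) (h : ℕ → ℝ) :
    ∏ j ∈ ((PA k) f).1, h j = ∏ i, h (f.1 i) := by
  show ∏ j ∈ Finset.image f.1 univ, h j = _
  rw [Finset.prod_image fun a _ b _ hab => f.2.1.injective hab]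

lemma PA_sum (k : ℕ) (f : P k) (h : ℕ → ℝ) :
    ∑ j ∈ ((PA k) f).1, h j = ∑ i, h (f.1 i) := by
  show ∑ j ∈ Finset.image f.1 univ, h j = _
  rw [Finset.sum_image fun a _ b _ hab => f.2.1.injective hab]

def ee (k : ℕ) : ℝ := ∑' s : A k, w s.1
def EE (m k : ℕ) : ℝ := ∑' t : {t : A k // m ∉ t.1}, w t.1.1

lemma wP_eq (k : ℕ) (f : P k) : w ((PA k) f).1 = ∏ i, (1:ℝ)/((f.1 i:ℝ))^2 :=
  PA_prod k f _

lemma summable_w (k : ℕ) : Summable (fun s : A k => w s.1) := by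
  rw [← (PA k).summable_iff]
  refine summable_P_of_le (fun f => w_nonneg _) (fun f => ?_)
  rw [Function.comp_apply, wP_eq]

lemma summable_A_of_le {k : ℕ} {C : ℝ} {h : A k → ℝ} (h0 : ∀ s, 0 ≤ h s)
    (hle : ∀ s, h s ≤ C * w s.1) : Summable h :=
  Summable.of_nonneg_of_le h0 hle ((summable_w k).mul_left C)

lemma summable_E (m k : ℕ) : Summable (fun t : {t : A k // m ∉ t.1} => w t.1.1) := by
  exact (summable_w k).subtype {t : A k | m ∉ t.1}


lemma ee_zero : ee 0 = 1 := by
  rw [ee, tsum_eq_single (⟨∅, by simp⟩ : A 0)]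
  · simp [w]
  · intro b hb
    exact absurd (Subtype.ext (Finset.card_eq_zero.mp b.2.1)) hb

lemma EE_zero (m : ℕ) : EE m 0 = 1 := by
  rw [EE, tsum_eq_single (⟨⟨∅, by simp⟩, Finset.notMem_empty m⟩ : {t : A 0 // m ∉ t.1})]
  · simp [w]
  · intro b hb
    exact absurd (Subtype.ext (Subtype.ext (Finset.card_eq_zero.mp b.1.2.1))) hb

/-- insertion equivalence -/
def insEquiv (m k : ℕ) (hm : 0 < m) :
    {t : A k // m ∉ t.1} ≃ {s : A (k+1) // m ∈ s.1} where
  toFun t := ⟨⟨insert m t.1.1, by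
      rw [Finset.card_insert_of_notMem t.2, t.1.2.1], by
      simp only [Finset.mem_insert, not_or]
      exact ⟨fun h => hm.ne h, t.1.2.2⟩⟩, Finset.mem_insert_self m _⟩
  invFun s := ⟨⟨s.1.1.erase m, by
      simp [Finset.card_erase_of_mem s.2, s.1.2.1], fun h =>
      s.1.2.2 (Finset.mem_of_mem_erase h)⟩, Finset.notMem_erase m _⟩
  left_inv t := Subtype.ext (Subtype.ext (Finset.erase_insert t.2))
  right_inv s := Subtype.ext (Subtype.ext (Finset.insert_erase s.2))

lemma ee_split (m k : ℕ) (hm : 0 < m) :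
    ee (k+1) = EE m (k+1) + (1/(m:ℝ)^2) * EE m k := by
  have hsum := summable_w (k+1)
  have hsplit := Summable.tsum_subtype_add_tsum_subtype_compl hsum {s : A (k+1) | m ∉ s.1}
  rw [ee, ← hsplit]
  congr 1
  let e1 : ↥({s : A (k+1) | m ∉ s.1}ᶜ) ≃ {s : A (k+1) // m ∈ s.1} :=
    Equiv.subtypeEquivRight (fun s => by simp)
  let e3 : {t : A k // m ∉ t.1} ≃ ↥({s : A (k+1) | m ∉ s.1}ᶜ) :=
    (insEquiv m k hm).trans e1.symm
  have h1 : ∑' (x : ↥({s : A (k+1) | m ∉ s.1}ᶜ)), w x.1.1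
      = ∑' t : {t : A k // m ∉ t.1}, w ((e3 t) : ↥({s : A (k+1) | m ∉ s.1}ᶜ)).1.1 :=
    (e3.tsum_eq _).symm
  have h2 : ∀ t : {t : A k // m ∉ t.1},
      w ((e3 t) : ↥({s : A (k+1) | m ∉ s.1}ᶜ)).1.1 = (1/(m:ℝ)^2) * w t.1.1 := by
    intro t
    have : ((e3 t) : ↥({s : A (k+1) | m ∉ s.1}ᶜ)).1.1 = insert m t.1.1 := rfl
    rw [this, w, Finset.prod_insert t.2]
    rfl
  rw [h1, tsum_congr h2, tsum_mul_left]
  rfl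

lemma EE_formula (m : ℕ) (hm : 0 < m) :
    ∀ k, EE m k = ∑ i ∈ Finset.range (k+1), (-1:ℝ)^i * (1/(m:ℝ)^2)^i * ee (k-i)
  | 0 => by simp [EE_zero, ee_zero]
  | (k+1) => by
    have hsplit := ee_split m k hm
    have ih := EE_formula m hm k
    have hE : EE m (k+1) = ee (k+1) - (1/(m:ℝ)^2) * EE m k := by linarith
    rw [hE, ih, Finset.sum_range_succ' _ (k+1)]
    have hpt : ∀ i ∈ Finset.range (k+1),
        (-1:ℝ)^(i+1) * (1/(m:ℝ)^2)^(i+1) * ee (k+1-(i+1))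
        = (-(1/(m:ℝ)^2)) * ((-1:ℝ)^i * (1/(m:ℝ)^2)^i * ee (k-i)) := by
      intro i _
      have h : k+1-(i+1) = k-i := by omega
      rw [h]; ring
    rw [Finset.sum_congr rfl hpt, ← Finset.mul_sum]
    simp only [pow_zero, one_mul, Nat.sub_zero]
    ring

lemma mzv_eq (ks : List ℕ) (k : ℕ) (hk : ks.length = k) (wt : Fin k → ℕ)
    (hw : ∀ j : Fin k, ks.get (Fin.cast hk.symm j) = wt j) :
    mzv ks = ∑' f : P k, ∏ j, (1:ℝ)/((f.1 j : ℝ))^(wt j) := by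
  subst hk
  refine tsum_congr fun f => ?_
  refine Finset.prod_congr rfl fun j _ => ?_
  rw [← hw j]
  rfl

lemma mzv_rep (k : ℕ) : mzv (List.replicate k 2) = ee k := by
  rw [mzv_eq (List.replicate k 2) k (by simp) (fun _ => 2) (fun j => by
    rw [List.get_eq_getElem, List.getElem_replicate])]
  rw [ee, ← (PA k).tsum_eq (fun s : A k => w s.1)]
  exact tsum_congr fun f => (wP_eq k f).symm

def zeta (p : ℕ) : ℝ := ∑' m : {m : ℕ // 0 < m}, (1:ℝ)/((m:ℝ))^p

def P1e : P 1 ≃ {m : ℕ // 0 < m} where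
  toFun f := ⟨f.1 0, f.2.2 0⟩
  invFun m := ⟨fun _ => m.1,
    fun a b hab => absurd hab (by rw [Subsingleton.elim a b]; exact lt_irrefl b),
    fun _ => m.2⟩
  left_inv f := Subtype.ext (funext fun i => by rw [Subsingleton.elim i 0])
  right_inv m := rfl

lemma mzv_single (p : ℕ) : mzv [p] = zeta p := by
  rw [mzv_eq [p] 1 rfl (fun _ => p) (fun j => by
    rw [Subsingleton.elim (Fin.cast rfl j) (0 : Fin 1)]; rfl)]
  rw [zeta, ← P1e.tsum_eq (fun m : {m : ℕ // 0 < m} => (1:ℝ)/((m:ℝ))^p)]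
  exact tsum_congr fun f => by rw [Fin.prod_univ_one]; rfl

lemma length_mix (a b : ℕ) :
    (List.replicate a 2 ++ 3 :: List.replicate b 2).length = a + b + 1 := by
  simp [List.length_append]; omega

lemma get_mix (a b : ℕ) (j : Fin (List.replicate a 2 ++ 3 :: List.replicate b 2).length) :
    (List.replicate a 2 ++ 3 :: List.replicate b 2).get j = if (j:ℕ) = a then 3 else 2 := by
  have hj : (j:ℕ) < a + b + 1 := lt_of_lt_of_le j.2 (le_of_eq (length_mix a b))
  rw [List.get_eq_getElem]
  rcases lt_trichotomy (j:ℕ) a with h|h|h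
  · rw [List.getElem_append_left (by simpa using h), List.getElem_replicate, if_neg h.ne]
  · rw [List.getElem_append_right (by simp [h]), if_pos h]
    simp [h]
  · rw [List.getElem_append_right (by simp; omega), if_neg h.ne']
    have h2 : (j:ℕ) - (List.replicate a 2).length = ((j:ℕ) - a - 1) + 1 := by
      simp; omega
    simp only [h2]
    rw [List.getElem_cons_succ, List.getElem_replicate]

def w2P {k : ℕ} (f : P k) : ℝ := ∏ j, (1:ℝ)/((f.1 j:ℝ))^2

lemma w2P_nonneg {k : ℕ} (f : P k) : 0 ≤ w2P f :=
  Finset.prod_nonneg fun _ _ => by positivity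

def S {k : ℕ} (i : ℕ) (f : P k) : ℝ := ∑ j : Fin k, (if (j:ℕ) = i then (1:ℝ)/(f.1 j:ℝ) else 0)

lemma one_div_f_le_one {k : ℕ} (f : P k) (j : Fin k) : (1:ℝ)/(f.1 j:ℝ) ≤ 1 := by
  have h1 : (1:ℝ) ≤ (f.1 j:ℝ) := Nat.one_le_cast.mpr (f.2.2 j)
  have := one_div_le_one_div_of_le one_pos h1
  simpa using this

lemma S_eq {k : ℕ} (i : ℕ) (hi : i < k) (f : P k) : S i f = (1:ℝ)/(f.1 ⟨i, hi⟩ : ℝ) := by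
  rw [S]
  have huniq : ∀ j : Fin k, ((j:ℕ) = i) ↔ (j = ⟨i, hi⟩) := fun j =>
    ⟨fun h => Fin.ext h, fun h => by rw [h]⟩
  rw [Finset.sum_congr rfl (fun j _ => if_congr (huniq j) rfl rfl),
    Finset.sum_ite_eq' univ (⟨i,hi⟩ : Fin k) (fun j => (1:ℝ)/(f.1 j:ℝ)), if_pos (mem_univ _)]

lemma S_nonneg {k : ℕ} (i : ℕ) (f : P k) : 0 ≤ S i f :=
  Finset.sum_nonneg fun j _ => by positivity

lemma summable_G {k : ℕ} (i : ℕ) (hi : i < k) :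
    Summable (fun f : P k => w2P f * S i f) := by
  refine summable_P_of_le (fun f => mul_nonneg (w2P_nonneg f) (S_nonneg i f)) (fun f => ?_)
  have h2 : S i f ≤ 1 := by rw [S_eq i hi f]; exact one_div_f_le_one f _
  have := mul_le_of_le_one_right (w2P_nonneg f) h2
  exact this.trans_eq rfl

lemma mzv_mix (n i : ℕ) (hi : i < n) :
    mzv (List.replicate i 2 ++ 3 :: List.replicate (n-1-i) 2)
    = ∑' f : P n, w2P f * S i f := by
  rw [mzv_eq _ n (by rw [length_mix]; omega) (fun j => if (j:ℕ) = i then 3 else 2)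
      (fun j => by rw [get_mix]; rfl)]
  refine tsum_congr fun f => ?_
  have h1 : ∀ j : Fin n, (1:ℝ)/((f.1 j:ℝ))^(if (j:ℕ) = i then 3 else 2)
      = (1:ℝ)/((f.1 j:ℝ))^2 * (if (j:ℕ) = i then (1:ℝ)/(f.1 j:ℝ) else 1) := by
    intro j
    split
    · rw [pow_succ, one_div, one_div, one_div, mul_inv]
    · rw [mul_one]
  rw [Finset.prod_congr rfl (fun j _ => h1 j), Finset.prod_mul_distrib]
  rw [w2P, S]
  congr 1
  have huniq : ∀ j : Fin n, ((j:ℕ) = i) ↔ (j = ⟨i, hi⟩) := fun j =>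
    ⟨fun h => Fin.ext h, fun h => by rw [h]⟩
  rw [Finset.prod_congr rfl (fun j _ => if_congr (huniq j) rfl rfl),
    Finset.sum_congr rfl (fun j _ => if_congr (huniq j) rfl rfl),
    Finset.prod_ite_eq' univ (⟨i,hi⟩ : Fin n) (fun j => (1:ℝ)/(f.1 j:ℝ)),
    Finset.sum_ite_eq' univ (⟨i,hi⟩ : Fin n) (fun j => (1:ℝ)/(f.1 j:ℝ)),
    if_pos (mem_univ _), if_pos (mem_univ _)]

lemma lhs_step1 (n : ℕ) :
    ∑ i ∈ Finset.range n, mzv (List.replicate i 2 ++ 3 :: List.replicate (n-1-i) 2)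
    = ∑' f : P n, w2P f * ∑ j : Fin n, (1:ℝ)/(f.1 j:ℝ) := by
  rw [Finset.sum_congr rfl (fun i hi => mzv_mix n i (mem_range.mp hi)),
    ← Summable.tsum_finsetSum (fun i hi => summable_G i (mem_range.mp hi))]
  refine tsum_congr fun f => ?_
  rw [← Finset.mul_sum]
  congr 1
  simp only [S]
  rw [Finset.sum_comm]
  refine Finset.sum_congr rfl fun j _ => ?_
  rw [Finset.sum_ite_eq (Finset.range n) ((j:ℕ) : ℕ) (fun _ => (1:ℝ)/(f.1 j:ℝ)),
    if_pos (mem_range.mpr j.2)]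

lemma lhs_step2 (n : ℕ) :
    (∑' f : P n, w2P f * ∑ j : Fin n, (1:ℝ)/(f.1 j:ℝ))
    = ∑' s : A n, ∑ m ∈ s.1, (1/(m:ℝ)) * w s.1 := by
  rw [← (PA n).tsum_eq (fun s : A n => ∑ m ∈ s.1, (1/(m:ℝ)) * w s.1)]
  refine tsum_congr fun f => ?_
  rw [show w ((PA n) f).1 = w2P f from wP_eq n f, ← Finset.sum_mul,
    PA_sum n f (fun m => (1:ℝ)/(m:ℝ)), mul_comm]

lemma my_sigma_ext {α : Type*} {β : Type*} {Q : α → β → Prop}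
    {x y : Σ a : α, {b : β // Q a b}} (h1 : x.1 = y.1) (h2 : x.2.1 = y.2.1) : x = y := by
  obtain ⟨a, b, hb⟩ := x
  obtain ⟨a', b', hb'⟩ := y
  simp only at h1 h2
  subst h1
  subst h2
  rfl

def sigEquiv (N : ℕ) :
    (Σ m : {m : ℕ // 0 < m}, {t : A N // m.1 ∉ t.1}) ≃ (Σ s : A (N+1), {x : ℕ // x ∈ s.1}) where
  toFun τ := ⟨(insEquiv τ.1.1 N τ.1.2 τ.2).1, ⟨τ.1.1, (insEquiv τ.1.1 N τ.1.2 τ.2).2⟩⟩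
  invFun σ :=
    ⟨⟨σ.2.1, Nat.pos_of_ne_zero (fun h => σ.1.2.2 (by have := σ.2.2; rwa [h] at this))⟩,
      (insEquiv σ.2.1 N (Nat.pos_of_ne_zero (fun h => σ.1.2.2 (by have := σ.2.2; rwa [h] at this)))).symm
        ⟨σ.1, σ.2.2⟩⟩
  left_inv τ :=
    my_sigma_ext rfl (Subtype.ext (Finset.erase_insert τ.2.2))
  right_inv σ :=
    my_sigma_ext (congrArg Subtype.val
      ((insEquiv σ.2.1 N (Nat.pos_of_ne_zero (fun h => σ.1.2.2 (by have := σ.2.2; rwa [h] at this)))).apply_symm_apply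
        ⟨σ.1, σ.2.2⟩)) rfl

set_option maxHeartbeats 1000000 in
lemma lhs_step3 (N : ℕ) :
    (∑' s : A (N+1), ∑ m ∈ s.1, (1/(m:ℝ)) * w s.1)
    = ∑' m : {m : ℕ // 0 < m}, (1/(m.1:ℝ)) * ((1/((m.1:ℝ))^2) * EE m.1 N) := by
  have h1 : ∀ s : A (N+1), (∑ m ∈ s.1, (1/(m:ℝ)) * w s.1)
      = ∑' x : {x : ℕ // x ∈ s.1}, (1/(x.1:ℝ)) * w s.1 :=
    fun s => (Finset.tsum_subtype s.1 (fun m => (1/(m:ℝ)) * w s.1)).symm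
  rw [tsum_congr h1]
  have hFnn : ∀ σ : (Σ s : A (N+1), {x : ℕ // x ∈ s.1}),
      0 ≤ (1/(σ.2.1:ℝ)) * w σ.1.1 := fun σ => mul_nonneg (by positivity) (w_nonneg _)
  have hfib : ∀ s : A (N+1), Summable (fun x : {x : ℕ // x ∈ s.1} => (1/(x.1:ℝ)) * w s.1) :=
    fun s => Summable.of_finite
  have houter : Summable (fun s : A (N+1) =>
      ∑' x : {x : ℕ // x ∈ s.1}, (1/(x.1:ℝ)) * w s.1) := by
    refine summable_A_of_le (C := ((N:ℝ)+1))
      (fun s => tsum_nonneg (fun x => mul_nonneg (by positivity) (w_nonneg _))) (fun s => ?_)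
    rw [Finset.tsum_subtype s.1 (fun m => (1/(m:ℝ)) * w s.1)]
    calc ∑ m ∈ s.1, (1/(m:ℝ)) * w s.1 ≤ ∑ m ∈ s.1, w s.1 := by
          refine Finset.sum_le_sum (fun m hm => ?_)
          have hm1 : 1 ≤ m := Nat.one_le_iff_ne_zero.mpr (fun h => s.2.2 (h ▸ hm))
          have hle : (1:ℝ)/(m:ℝ) ≤ 1 := by
            have := one_div_le_one_div_of_le one_pos (Nat.one_le_cast.mpr hm1 : (1:ℝ) ≤ m)
            simpa using this
          exact mul_le_of_le_one_left (w_nonneg _) hle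
      _ = (s.1.card : ℝ) * w s.1 := by rw [Finset.sum_const, nsmul_eq_mul]
      _ = ((N:ℝ)+1) * w s.1 := by rw [s.2.1]; push_cast; ring
  have hsig : Summable (fun σ : (Σ s : A (N+1), {x : ℕ // x ∈ s.1}) =>
      (1/(σ.2.1:ℝ)) * w σ.1.1) :=
    (summable_sigma_of_nonneg hFnn).mpr ⟨hfib, houter⟩
  rw [← Summable.tsum_sigma' hfib hsig]
  rw [← (sigEquiv N).tsum_eq (fun σ : (Σ s : A (N+1), {x : ℕ // x ∈ s.1}) =>
      (1/(σ.2.1:ℝ)) * w σ.1.1)]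
  have h2 : ∀ τ : (Σ m : {m : ℕ // 0 < m}, {t : A N // m.1 ∉ t.1}),
      (1/((((sigEquiv N) τ).2.1:ℕ):ℝ)) * w ((sigEquiv N) τ).1.1
      = (1/(τ.1.1:ℝ)) * ((1/((τ.1.1:ℝ))^2) * w τ.2.1.1) := by
    intro τ
    show (1/(τ.1.1:ℝ)) * w (insert τ.1.1 τ.2.1.1) = _
    rw [w, Finset.prod_insert τ.2.2]
    rfl
  rw [tsum_congr h2]
  have hsig2 : Summable (fun τ : (Σ m : {m : ℕ // 0 < m}, {t : A N // m.1 ∉ t.1}) =>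
      (1/(τ.1.1:ℝ)) * ((1/((τ.1.1:ℝ))^2) * w τ.2.1.1)) := by
    have := (Equiv.summable_iff (sigEquiv N)).mpr hsig
    exact this.congr h2
  have hfib2 : ∀ m : {m : ℕ // 0 < m},
      Summable (fun t : {t : A N // m.1 ∉ t.1} =>
        (1/(m.1:ℝ)) * ((1/((m.1:ℝ))^2) * w t.1.1)) :=
    fun m => (((summable_E m.1 N).mul_left _).mul_left _)
  rw [Summable.tsum_sigma' hfib2 hsig2]
  refine tsum_congr fun m => ?_
  show ∑' c : {t : A N // m.1 ∉ t.1}, (1/(m.1:ℝ)) * ((1/((m.1:ℝ))^2) * w c.1.1) = _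
  rw [tsum_mul_left, tsum_mul_left]
  rfl

lemma summable_zeta (p : ℕ) (hp : 1 < p) :
    Summable (fun m : {m : ℕ // 0 < m} => (1:ℝ)/((m.1:ℝ))^p) := by
  have := (Real.summable_one_div_nat_pow.mpr hp).subtype {m : ℕ | 0 < m}
  exact this

lemma Icc_sum_eq (n : ℕ) (f : ℕ → ℝ) :
    ∑ i ∈ Finset.Icc 1 n, f i = ∑ i ∈ Finset.range n, f (i+1) := by
  induction n with
  | zero => simp
  | succ n ih => rw [Finset.sum_Icc_succ_top (by omega : 1 ≤ n+1), ih, Finset.sum_range_succ]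

end MzvAux

open MzvAux in
/-- for every `n ≥ 1`,
`Σ_{i=0}^{n−1} ζ({2}^i, 3, {2}^{n−1−i}) = − Σ_{i=1}^{n} (−1)^i ζ(2i+1) ζ({2}^{n−i})`. -/
theorem mzv_level_one_sum (n : ℕ) (hn : 1 ≤ n) :
    ∑ i ∈ Finset.range n, mzv (List.replicate i 2 ++ 3 :: List.replicate (n - 1 - i) 2) =
      - ∑ i ∈ Finset.Icc 1 n, (-1 : ℝ) ^ i * mzv [2 * i + 1] * mzv (List.replicate (n - i) 2) := by
  obtain ⟨N, rfl⟩ : ∃ N, n = N + 1 := ⟨n-1, by omega⟩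
  have key : ∑ i ∈ Finset.range (N+1),
        mzv (List.replicate i 2 ++ 3 :: List.replicate (N+1-1-i) 2)
      = ∑ i ∈ Finset.range (N+1), ((-1:ℝ)^i * ee (N-i)) * zeta (2*i+3) := by
    rw [lhs_step1 (N+1), lhs_step2 (N+1), lhs_step3 N]
    have h3 : ∀ m : {m : ℕ // 0 < m}, (1/(m.1:ℝ)) * ((1/((m.1:ℝ))^2) * EE m.1 N)
        = ∑ i ∈ Finset.range (N+1), ((-1:ℝ)^i * ee (N-i)) * ((1:ℝ)/((m.1:ℝ))^(2*i+3)) := by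
      intro m
      rw [EE_formula m.1 m.2 N, Finset.mul_sum, Finset.mul_sum]
      refine Finset.sum_congr rfl fun i _ => ?_
      have hm0 : ((m.1:ℕ):ℝ) ≠ 0 := Nat.cast_ne_zero.mpr m.2.ne'
      have hpow : ((m.1:ℕ):ℝ)^(2*i+3) = ((m.1:ℕ):ℝ)^3 * (((m.1:ℕ):ℝ)^2)^i := by
        rw [← pow_mul, ← pow_add]
        congr 1
        omega
      rw [one_div_pow, hpow, one_div, one_div, one_div, one_div, mul_inv]
      ring
    rw [tsum_congr h3, Summable.tsum_finsetSum
      (fun i _ => ((summable_zeta (2*i+3) (by omega)).mul_left _))]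
    refine Finset.sum_congr rfl fun i _ => ?_
    rw [tsum_mul_left]
    rfl
  rw [key, Icc_sum_eq (N+1) (fun i => (-1:ℝ)^i * mzv [2*i+1] * mzv (List.replicate (N+1-i) 2))]
  have h4 : ∀ i ∈ Finset.range (N+1),
      (-1:ℝ)^(i+1) * mzv [2*(i+1)+1] * mzv (List.replicate (N+1-(i+1)) 2)
      = -(((-1:ℝ)^i * ee (N-i)) * zeta (2*i+3)) := by
    intro i _
    rw [mzv_single, mzv_rep]
    have e1 : 2*(i+1)+1 = 2*i+3 := by omega
    have e2 : N+1-(i+1) = N-i := by omega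
    rw [e1, e2]
    ring
  rw [Finset.sum_congr rfl h4, Finset.sum_neg_distrib, neg_neg]
end
end
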